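/- arXiv:2010.06953 — 7 statements merged into one kernel-verified Lean document; each statement's English description precedes it below -/
import Mathlib

section
/- For all i < j in A and all words u, v ∈ A*, if u ≡_hypo v then φ_ij(u) = φ_ij(v). Consequently φ_ij factors through the quotient to give a monoid homomorphism from hypo to hypo_2. -/
open FreeMonoid

/-- The alphabet `A = {1 < 2 < 3 < ...}` of positive integers. -/
abbrev Alph : Type := ℕ+

/-- The finite alphabet `A_n = {1 < ... < n}`. -/
abbrev AlphN (n : ℕ) : Type := {a : ℕ+ // (a : ℕ) ≤ n}

/-- The defining relations of the hypoplactic monoid. -/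
def HypoRel (u v : FreeMonoid Alph) : Prop :=
  (∃ a b c : Alph, a ≤ b ∧ b < c ∧
      u = of a * of c * of b ∧ v = of c * of a * of b) ∨
  (∃ a b c : Alph, a < b ∧ b ≤ c ∧
      u = of b * of a * of c ∧ v = of b * of c * of a) ∨
  (∃ a b c d : Alph, a ≤ b ∧ b < c ∧ c ≤ d ∧
      u = of c * of a * of d * of b ∧ v = of a * of c * of b * of d) ∨
  (∃ a b c d : Alph, a < b ∧ b ≤ c ∧ c < d ∧
      u = of b * of d * of a * of c ∧ v = of d * of b * of c * of a)

/-- The hypoplactic congruence on `A*`: the congruence generated by `HypoRel`. -/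
def hypoCon : Con (FreeMonoid Alph) := conGen HypoRel

/-- The infinite-rank hypoplactic monoid `hypo`. -/
abbrev Hypo : Type := hypoCon.Quotient

/-- The inclusion of `A_n*` into `A*`. -/
def inclN (n : ℕ) : FreeMonoid (AlphN n) →* FreeMonoid Alph :=
  FreeMonoid.map Subtype.val

/-- The hypoplactic congruence restricted to `A_n*`. -/
def hypoConN (n : ℕ) : Con (FreeMonoid (AlphN n)) :=
  hypoCon.comap (inclN n) (fun x y => map_mul (inclN n) x y)

/-- The rank-`n` hypoplactic monoid `hypo_n`. -/
abbrev HypoN (n : ℕ) : Type := (hypoConN n).Quotient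

/-- The letter `1` of `A_2`. -/
def a1 : AlphN 2 := ⟨1, by norm_num⟩

/-- The letter `2` of `A_2`. -/
def a2 : AlphN 2 := ⟨2, by norm_num⟩

/-- The homomorphism `φ_{ij} : A* → hypo_2`, sending `i ↦ [1]`, `j ↦ [2]`,
`a ↦ [21]` for `i < a < j`, and every other letter to the identity. -/
def phi (i j : Alph) : FreeMonoid Alph →* HypoN 2 :=
  FreeMonoid.lift fun a =>
    if a = i then (hypoConN 2).mk' (of a1)
    else if a = j then (hypoConN 2).mk' (of a2)
    else if i < a ∧ a < j then (hypoConN 2).mk' (of a2 * of a1)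
    else 1

/-- A monoid `M` satisfies the identity `u ≈ v` (over the alphabet of variables `X`)
if every homomorphic evaluation of the two words in `M` gives equal values. -/
def MSatisfies (M : Type*) [Monoid M] {X : Type*} (u v : FreeMonoid X) : Prop :=
  ∀ ψ : FreeMonoid X →* M, ψ u = ψ v

/-- An identity `u ≈ v` is balanced if every variable occurs the same number of
times in `u` as in `v`. -/
def IsBalanced {X : Type*} [DecidableEq X] (u v : FreeMonoid X) : Prop :=
  ∀ x : X, u.toList.count x = v.toList.count x

/-! Write `x = [1]` and `y = [2]` in `hypo_2`. The defining relations say that `z = yx` commutes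
with `x` and `y` and that `zxy = zyx`, so a product of `x`s and `y`s in which some `y` precedes
some `x` collapses to `y^q x^p`; otherwise it is `x^p y^q`. Hence `φ_ij` factors through the
monoid `Hypo2Form` of triples (number of `1`s, number of `2`s, whether some `2` precedes some `1`).
Each defining relation of `hypo` transposes adjacent letters `a < c` (once or twice), and the
images of `a` and `c` in `Hypo2Form` commute unless `(a, c) = (i, j)`; in that case the relation
forces a neighbouring letter in `[i, j)` after them, or in `(i, j]` before them, which makes both
sides inverted. -/

section RankTwoRelations

variable {M : Type*} [Monoid M] {x y : M}
  (hx : Commute (y * x) x) (hy : Commute (y * x) y) (hxy : y * x * x * y = y * x * y * x)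
include hx hy hxy

theorem commute_x_y_pow_mul_y_mul_x (q : ℕ) : Commute x (y ^ q * (y * x)) := by
  induction q with
  | zero => simpa using hx.symm
  | succ q ih =>
    have hw : y ^ (q + 1) * (y * x) = y ^ q * (y * x) * y := by
      rw [pow_succ, mul_assoc, mul_assoc, ← hy.eq, mul_assoc]
    calc x * (y ^ (q + 1) * (y * x)) = y ^ q * (y * x * x * y) := by
          rw [hw, ← mul_assoc, ih.eq]; simp only [mul_assoc]
      _ = y ^ (q + 1) * (y * x) * x := by rw [hxy, hw]; simp only [mul_assoc]

theorem commute_y_mul_x_mul_x_pow_y (p : ℕ) : Commute (y * x * x ^ p) y := by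
  induction p with
  | zero => simpa using hy
  | succ p ih =>
    have hw : y * x * x ^ (p + 1) = x * (y * x * x ^ p) := by
      rw [pow_succ', ← mul_assoc, hx.eq, mul_assoc]
    calc y * x * x ^ (p + 1) * y = x * y * (y * x * x ^ p) := by
          rw [hw, mul_assoc, ih.eq]; simp only [mul_assoc]
      _ = y * (y * x * x ^ (p + 1)) := by
          have h := (commute_x_y_pow_mul_y_mul_x hx hy hxy 1).eq
          rw [pow_one] at h
          rw [← mul_assoc, mul_assoc x y, h, pow_succ']; simp only [mul_assoc]

theorem x_mul_y_pow_mul_x_pow (p q : ℕ) :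
    x * (y ^ (q + 1) * x ^ (p + 1)) = y ^ (q + 1) * x ^ (p + 2) := by
  calc x * (y ^ (q + 1) * x ^ (p + 1)) = x * (y ^ q * (y * x)) * x ^ p := by
        rw [pow_succ, pow_succ']; simp only [mul_assoc]
    _ = y ^ q * (y * x) * x * x ^ p := by rw [(commute_x_y_pow_mul_y_mul_x hx hy hxy q).eq]
    _ = y ^ (q + 1) * x ^ (p + 2) := by
        rw [pow_succ y, pow_succ' x (p + 1), pow_succ' x p]; simp only [mul_assoc]

theorem y_pow_mul_x_pow_mul_y (p q : ℕ) :
    y ^ (q + 1) * x ^ (p + 1) * y = y ^ (q + 2) * x ^ (p + 1) := by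
  calc y ^ (q + 1) * x ^ (p + 1) * y = y ^ q * (y * x * x ^ p * y) := by
        rw [pow_succ, pow_succ']; simp only [mul_assoc]
    _ = y ^ q * (y * (y * x * x ^ p)) := by rw [(commute_y_mul_x_mul_x_pow_y hx hy hxy p).eq]
    _ = y ^ (q + 2) * x ^ (p + 1) := by
        rw [pow_succ y (q + 1), pow_succ y q, pow_succ' x p]; simp only [mul_assoc]

theorem x_pow_mul_y_pow_mul_x_pow {p q : ℕ} (hp : p ≠ 0) (hq : q ≠ 0) (m : ℕ) :
    x ^ m * (y ^ q * x ^ p) = y ^ q * x ^ (p + m) := by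
  induction m generalizing p with
  | zero => simp
  | succ m ih =>
    obtain ⟨p, rfl⟩ := Nat.exists_eq_succ_of_ne_zero hp
    obtain ⟨q, rfl⟩ := Nat.exists_eq_succ_of_ne_zero hq
    rw [pow_succ, mul_assoc, x_mul_y_pow_mul_x_pow hx hy hxy, ih (Nat.succ_ne_zero _)]
    congr 2; omega

theorem y_pow_mul_x_pow_mul_y_pow {p q : ℕ} (hp : p ≠ 0) (hq : q ≠ 0) (n : ℕ) :
    y ^ q * x ^ p * y ^ n = y ^ (q + n) * x ^ p := by
  induction n generalizing q with
  | zero => simp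
  | succ n ih =>
    obtain ⟨p, rfl⟩ := Nat.exists_eq_succ_of_ne_zero hp
    obtain ⟨q, rfl⟩ := Nat.exists_eq_succ_of_ne_zero hq
    rw [pow_succ' y n, ← mul_assoc, y_pow_mul_x_pow_mul_y hx hy hxy, ih (Nat.succ_ne_zero _)]
    congr 2; omega

end RankTwoRelations

/-- The class `[1^ones 2^twos]` of `hypo_2`, or `[2^twos 1^ones]` when `inverted`, i.e. when some
`2` precedes some `1`. -/
@[ext]
structure Hypo2Form where
  ones : ℕ
  twos : ℕ
  inverted : Bool
  ne_zero_of_inverted : inverted → ones ≠ 0 ∧ twos ≠ 0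

namespace Hypo2Form

instance : One Hypo2Form := ⟨⟨0, 0, false, by simp⟩⟩

instance : Mul Hypo2Form where
  mul u v := ⟨u.ones + v.ones, u.twos + v.twos,
    u.inverted || v.inverted || (u.twos != 0 && v.ones != 0), by
      simp only [Bool.or_eq_true, Bool.and_eq_true, bne_iff_ne]
      rintro ((h | h) | ⟨h₁, h₂⟩)
      · have := u.ne_zero_of_inverted h; omega
      · have := v.ne_zero_of_inverted h; omega
      · omega⟩

@[simp] theorem ones_one : (1 : Hypo2Form).ones = 0 := rfl
@[simp] theorem twos_one : (1 : Hypo2Form).twos = 0 := rfl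
@[simp] theorem inverted_one : (1 : Hypo2Form).inverted = false := rfl
@[simp] theorem ones_mul (u v : Hypo2Form) : (u * v).ones = u.ones + v.ones := rfl
@[simp] theorem twos_mul (u v : Hypo2Form) : (u * v).twos = u.twos + v.twos := rfl
@[simp] theorem inverted_mul (u v : Hypo2Form) :
    (u * v).inverted = (u.inverted || v.inverted || (u.twos != 0 && v.ones != 0)) := rfl

instance : Monoid Hypo2Form where
  mul_assoc u v w := by
    ext <;> simp only [ones_mul, twos_mul, inverted_mul]
    · omega
    · omega
    · cases u.inverted <;> cases v.inverted <;> cases w.inverted <;>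
        simp only [Bool.true_or, Bool.or_true, Bool.false_or]
      rw [Bool.eq_iff_iff]
      simp only [Bool.or_eq_true, Bool.and_eq_true, bne_iff_ne, Bool.false_eq_true, or_false]
      omega
  one_mul u := by ext <;> simp
  mul_one u := by ext <;> simp

variable {M : Type*} [Monoid M]

def eval (x y : M) (u : Hypo2Form) : M :=
  if u.inverted then y ^ u.twos * x ^ u.ones else x ^ u.ones * y ^ u.twos

variable {x y : M} (hx : Commute (y * x) x) (hy : Commute (y * x) y)
  (hxy : y * x * x * y = y * x * y * x)
include hx hy hxy

theorem eval_mul (u v : Hypo2Form) : eval x y (u * v) = eval x y u * eval x y v := by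
  obtain ⟨p, q, s, hu⟩ := u
  obtain ⟨p', q', s', hv⟩ := v
  cases s <;> cases s' <;>
    simp only [eval, inverted_mul, ones_mul, twos_mul, Bool.true_or, Bool.or_true,
      Bool.false_or, Bool.false_eq_true, ite_true, ite_false]
  case false.false =>
    split_ifs with h
    · simp only [Bool.and_eq_true, bne_iff_ne] at h
      rw [← mul_assoc, mul_assoc (x ^ p), x_pow_mul_y_pow_mul_x_pow hx hy hxy h.2 h.1,
        y_pow_mul_x_pow_mul_y_pow hx hy hxy (by omega) h.1, add_comm p']
    · simp only [Bool.and_eq_true, bne_iff_ne, not_and_or, not_not] at h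
      rcases h with rfl | rfl <;> simp [pow_add, mul_assoc]
  case false.true =>
    obtain ⟨hp', hq'⟩ := hv rfl
    rw [mul_assoc, ← mul_assoc (y ^ q), ← pow_add,
      x_pow_mul_y_pow_mul_x_pow hx hy hxy hp' (by omega), add_comm p']
  case true.false =>
    obtain ⟨hp, hq⟩ := hu rfl
    rw [← mul_assoc, mul_assoc (y ^ q), ← pow_add,
      y_pow_mul_x_pow_mul_y_pow hx hy hxy (by omega) hq]
  case true.true =>
    obtain ⟨hp, hq⟩ := hu rfl
    rw [← mul_assoc, y_pow_mul_x_pow_mul_y_pow hx hy hxy hp hq, mul_assoc, ← pow_add]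

def evalHom : Hypo2Form →* M where
  toFun := eval x y
  map_one' := by simp [eval]
  map_mul' := eval_mul hx hy hxy

end Hypo2Form

def letterForm (i j a : Alph) : Hypo2Form :=
  ⟨if i ≤ a ∧ a < j then 1 else 0, if i < a ∧ a ≤ j then 1 else 0, decide (i < a ∧ a < j), by
    intro h
    simp only [decide_eq_true_eq] at h
    simp [h.1.le, h.2.le, h]⟩

section LetterForm

variable {i j : Alph}

@[simp] theorem ones_letterForm (a : Alph) :
    (letterForm i j a).ones = if i ≤ a ∧ a < j then 1 else 0 := rfl
@[simp] theorem twos_letterForm (a : Alph) :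
    (letterForm i j a).twos = if i < a ∧ a ≤ j then 1 else 0 := rfl
@[simp] theorem inverted_letterForm (a : Alph) :
    (letterForm i j a).inverted = decide (i < a ∧ a < j) := rfl

theorem commute_letterForm {a c : Alph} (hac : a < c) (h : ¬(a = i ∧ c = j)) :
    Commute (letterForm i j a) (letterForm i j c) := by
  ext
  · simp only [Hypo2Form.ones_mul]; omega
  · simp only [Hypo2Form.twos_mul]; omega
  · rw [Bool.eq_iff_iff]
    simp only [Hypo2Form.inverted_mul, inverted_letterForm, ones_letterForm, twos_letterForm,
      Bool.or_eq_true, Bool.and_eq_true, bne_iff_ne, decide_eq_true_eq, ne_eq,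
      ite_eq_right_iff, one_ne_zero, imp_false, not_not]
    grind

theorem letterForm_swap_left {a c : Alph} (hac : a < c) (w : Hypo2Form)
    (hw : a = i ∧ c = j → w.ones ≠ 0) :
    letterForm i j a * letterForm i j c * w = letterForm i j c * letterForm i j a * w := by
  by_cases h : a = i ∧ c = j
  · have hw := hw h
    obtain ⟨rfl, rfl⟩ := h
    ext
    · simp only [Hypo2Form.ones_mul]; omega
    · simp only [Hypo2Form.twos_mul]; omega
    · simp [hac, hw]
  · rw [(commute_letterForm hac h).eq]

theorem letterForm_swap_right {a c : Alph} (hac : a < c) (w : Hypo2Form)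
    (hw : a = i ∧ c = j → w.twos ≠ 0) :
    w * letterForm i j a * letterForm i j c = w * letterForm i j c * letterForm i j a := by
  by_cases h : a = i ∧ c = j
  · have hw := hw h
    obtain ⟨rfl, rfl⟩ := h
    ext
    · simp only [Hypo2Form.ones_mul]; omega
    · simp only [Hypo2Form.twos_mul]; omega
    · simp [hac, hw]
  · rw [mul_assoc, (commute_letterForm hac h).eq, mul_assoc]

end LetterForm

def formHom (i j : Alph) : FreeMonoid Alph →* Hypo2Form := FreeMonoid.lift (letterForm i j)

theorem formHom_eq_of_hypoRel (i j : Alph) {u v : FreeMonoid Alph} (h : HypoRel u v) :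
    formHom i j u = formHom i j v := by
  rcases h with ⟨a, b, c, hab, hbc, rfl, rfl⟩ | ⟨a, b, c, hab, hbc, rfl, rfl⟩ |
    ⟨a, b, c, d, hab, hbc, hcd, rfl, rfl⟩ | ⟨a, b, c, d, hab, hbc, hcd, rfl, rfl⟩ <;>
    simp only [formHom, map_mul, lift_eval_of]
  · refine letterForm_swap_left (hab.trans_lt hbc) _ ?_
    rintro ⟨rfl, rfl⟩
    simp [hab, hbc]
  · refine letterForm_swap_right (hab.trans_le hbc) _ ?_
    rintro ⟨rfl, rfl⟩
    simp [hab, hbc]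
  · rw [mul_assoc _ (letterForm i j d), letterForm_swap_left (hab.trans_lt hbc), ← mul_assoc,
      letterForm_swap_right (hbc.trans_le hcd)]
    · rintro ⟨rfl, rfl⟩
      simp [hbc, hcd]
    · rintro ⟨rfl, rfl⟩
      simp [hab, hbc]
  · rw [mul_assoc _ (letterForm i j a), letterForm_swap_left (hbc.trans_lt hcd), ← mul_assoc,
      letterForm_swap_right (hab.trans_le hbc)]
    · rintro ⟨rfl, rfl⟩
      simp [hab, hbc]
    · rintro ⟨rfl, rfl⟩
      simp [hbc, hcd]

theorem hypoConN_mk'_eq {n : ℕ} {u v : FreeMonoid (AlphN n)}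
    (h : HypoRel (inclN n u) (inclN n v)) :
    (hypoConN n).mk' u = (hypoConN n).mk' v :=
  (Con.eq _).mpr ((Con.comap_rel _).mpr (ConGen.Rel.of _ _ h))

def letter1 : HypoN 2 := (hypoConN 2).mk' (of a1)

def letter2 : HypoN 2 := (hypoConN 2).mk' (of a2)

theorem commute_letter21_letter1 : Commute (letter2 * letter1) letter1 := by
  have h : letter1 * letter2 * letter1 = letter2 * letter1 * letter1 := by
    simp only [letter1, letter2, ← map_mul]
    exact hypoConN_mk'_eq (Or.inl ⟨1, 1, 2, le_rfl, by decide, rfl, rfl⟩)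
  rw [Commute, SemiconjBy, ← h, mul_assoc]

theorem commute_letter21_letter2 : Commute (letter2 * letter1) letter2 := by
  have h : letter2 * letter1 * letter2 = letter2 * letter2 * letter1 := by
    simp only [letter1, letter2, ← map_mul]
    exact hypoConN_mk'_eq (Or.inr <| Or.inl ⟨1, 2, 2, by decide, le_rfl, rfl, rfl⟩)
  rw [Commute, SemiconjBy, h, mul_assoc]

theorem letter21_mul_letter1_mul_letter2 :
    letter2 * letter1 * letter1 * letter2 = letter2 * letter1 * letter2 * letter1 := by
  have h : letter2 * letter1 * letter2 * letter1 = letter1 * letter2 * letter1 * letter2 := by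
    simp only [letter1, letter2, ← map_mul]
    exact hypoConN_mk'_eq
      (Or.inr <| Or.inr <| Or.inl ⟨1, 1, 2, 2, le_rfl, by decide, le_rfl, rfl, rfl⟩)
  rw [commute_letter21_letter1.eq, ← mul_assoc letter1, h]

theorem phi_eq_evalHom_comp_formHom {i j : Alph} (hij : i < j) :
    phi i j = (Hypo2Form.evalHom commute_letter21_letter1 commute_letter21_letter2
      letter21_mul_letter1_mul_letter2).comp (formHom i j) := by
  refine FreeMonoid.hom_eq fun a => ?_
  simp only [phi, formHom, MonoidHom.comp_apply, lift_eval_of, Hypo2Form.evalHom,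
    MonoidHom.coe_mk, OneHom.coe_mk, Hypo2Form.eval]
  rcases lt_trichotomy a i with hai | rfl | hia
  · simp [hai.ne, (hai.trans hij).ne, lt_asymm hai, not_le.2 hai]
  · simp [hij, letter1]
  rcases lt_trichotomy a j with haj | rfl | hja
  · simp [hia, haj, hia.ne', haj.ne, hia.le, haj.le, letter1, letter2]
  · simp [hij, hij.ne', letter2]
  · simp [hia.ne', hja.ne', lt_asymm hja, not_le.2 hja]

/-- For `i < j` in `A`, if `u ≡_hypo v` then `φ_{ij}(u) = φ_{ij}(v)`; consequently
`φ_{ij}` factors through the quotient, giving a monoid homomorphism `hypo → hypo_2`. -/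
theorem phi_factors (i j : Alph) (hij : i < j) :
    (∀ u v : FreeMonoid Alph, hypoCon u v → phi i j u = phi i j v) ∧
    ∃ g : Hypo →* HypoN 2, ∀ w : FreeMonoid Alph, g (hypoCon.mk' w) = phi i j w := by
  have hle : hypoCon ≤ Con.ker (phi i j) := Con.conGen_le.mpr fun u v h => by
    rw [Con.ker_rel, phi_eq_evalHom_comp_formHom hij, MonoidHom.comp_apply,
      MonoidHom.comp_apply, formHom_eq_of_hypoRel i j h]
  exact ⟨fun u v h => (Con.ker_rel _).mp (hle h), hypoCon.lift (phi i j) hle, Con.lift_coe hle⟩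
end

section
/- For distinct variables x and y, the hypoplactic monoid hypo satisfies the nontrivial identities xyxy ≈ xyyx, xyxy ≈ yxxy, xyxy ≈ yxyx, and xxyx ≈ xyxx. -/
open FreeMonoid

namespace HypoAux

/-- congruence on lists of letters -/
def C (l₁ l₂ : List Alph) : Prop := hypoCon (ofList l₁) (ofList l₂)

lemma C.refl (l : List Alph) : C l l := hypoCon.refl _

lemma C.symm {l₁ l₂} (h : C l₁ l₂) : C l₂ l₁ := hypoCon.symm h

lemma C.trans {l₁ l₂ l₃} (h₁ : C l₁ l₂) (h₂ : C l₂ l₃) : C l₁ l₃ := hypoCon.trans h₁ h₂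

lemma C.ctx (A B : List Alph) {m m'} (h : C m m') : C (A ++ m ++ B) (A ++ m' ++ B) := by
  unfold C at *
  rw [ofList_append, ofList_append, ofList_append, ofList_append]
  exact hypoCon.mul (hypoCon.mul (hypoCon.refl _) h) (hypoCon.refl _)

lemma hypoCon_of {u v} (h : HypoRel u v) : hypoCon u v := ConGen.Rel.of _ _ h

lemma ofList3 (a b c : Alph) : ofList [a,b,c] = of a * of b * of c := by
  simp [ofList_cons, mul_assoc]

lemma ofList4 (a b c d : Alph) : ofList [a,b,c,d] = of a * of b * of c * of d := by
  simp [ofList_cons, mul_assoc]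

lemma crel1 {a b c : Alph} (h₁ : a ≤ b) (h₂ : b < c) : C [a,c,b] [c,a,b] := by
  unfold C; rw [ofList3, ofList3]
  exact hypoCon_of (Or.inl ⟨a, b, c, h₁, h₂, rfl, rfl⟩)

lemma crel2 {a b c : Alph} (h₁ : a < b) (h₂ : b ≤ c) : C [b,a,c] [b,c,a] := by
  unfold C; rw [ofList3, ofList3]
  exact hypoCon_of (Or.inr (Or.inl ⟨a, b, c, h₁, h₂, rfl, rfl⟩))

lemma crel3 {a b c d : Alph} (h₁ : a ≤ b) (h₂ : b < c) (h₃ : c ≤ d) :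
    C [c,a,d,b] [a,c,b,d] := by
  unfold C; rw [ofList4, ofList4]
  exact hypoCon_of (Or.inr (Or.inr (Or.inl ⟨a, b, c, d, h₁, h₂, h₃, rfl, rfl⟩)))

lemma crel4 {a b c d : Alph} (h₁ : a < b) (h₂ : b ≤ c) (h₃ : c < d) :
    C [b,d,a,c] [d,b,c,a] := by
  unfold C; rw [ofList4, ofList4]
  exact hypoCon_of (Or.inr (Or.inr (Or.inr ⟨a, b, c, d, h₁, h₂, h₃, rfl, rfl⟩)))

/-- decompose list at the last element satisfying P -/
lemma decomp_last (P : Alph → Prop) [DecidablePred P] :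
    ∀ l : List Alph, (∀ a ∈ l, ¬ P a) ∨
      ∃ l₁ a l₂, l = l₁ ++ a :: l₂ ∧ P a ∧ (∀ b ∈ l₂, ¬ P b) := by
  intro l
  induction l with
  | nil => exact Or.inl (by simp)
  | cons c t ih =>
    rcases ih with hclean | ⟨l₁, a, l₂, rfl, ha, hl₂⟩
    · by_cases hc : P c
      · exact Or.inr ⟨[], c, t, rfl, hc, hclean⟩
      · exact Or.inl (by simpa [hc] using hclean)
    · exact Or.inr ⟨c :: l₁, a, l₂, rfl, ha, hl₂⟩

lemma decomp_first (P : Alph → Prop) [DecidablePred P] :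
    ∀ l : List Alph, (∀ a ∈ l, ¬ P a) ∨
      ∃ l₁ a l₂, l = l₁ ++ a :: l₂ ∧ P a ∧ (∀ b ∈ l₁, ¬ P b) := by
  intro l
  induction l with
  | nil => exact Or.inl (by simp)
  | cons c t ih =>
    by_cases hc : P c
    · exact Or.inr ⟨[], c, t, rfl, hc, by simp⟩
    · rcases ih with hclean | ⟨l₁, a, l₂, rfl, ha, hl₁⟩
      · exact Or.inl (by simpa [hc] using hclean)
      · exact Or.inr ⟨c :: l₁, a, l₂, rfl, ha, by simpa [hc] using hl₁⟩

end HypoAux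

namespace HypoAux

def OL (N : ℕ) : Prop := ∀ (γ δ β : List Alph) (b x y : Alph), x < b → b ≤ y → δ.length ≤ N →
  C (γ ++ b :: (δ ++ x :: y :: β)) (γ ++ b :: (δ ++ y :: x :: β))

def OR (N : ℕ) : Prop := ∀ (α δ β : List Alph) (x y w : Alph), x ≤ w → w < y → δ.length ≤ N →
  C (α ++ x :: y :: (δ ++ w :: β)) (α ++ y :: x :: (δ ++ w :: β))

def OD (N : ℕ) : Prop := ∀ (γ δ β : List Alph) (z b x y : Alph),
    z ≤ x → x < b → b ≤ y → δ.length ≤ N →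
  C (γ ++ z :: b :: (δ ++ x :: y :: β)) (γ ++ b :: z :: (δ ++ y :: x :: β))

def OE (N : ℕ) : Prop := ∀ (γ δ β : List Alph) (b g x y : Alph),
    x < b → b ≤ y → y < g → δ.length ≤ N →
  C (γ ++ b :: g :: (δ ++ x :: y :: β)) (γ ++ g :: b :: (δ ++ y :: x :: β))

lemma cross_right {N : ℕ} (hL : OL N) :
    ∀ (T pre : List Alph) (Γ₀ B : List Alph) (w U : Alph),
    (∀ τ ∈ T, τ < w ∧ w ≤ U) → pre.length + T.length ≤ N + 1 →
    C (Γ₀ ++ w :: (pre ++ U :: (T ++ B))) (Γ₀ ++ w :: (pre ++ (T ++ U :: B))) := by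
  intro T
  induction T with
  | nil => intro pre Γ₀ B w U _ _; exact C.refl _
  | cons τ T' ih =>
    intro pre Γ₀ B w U hT hlen
    have hτ := hT τ (by simp)
    have h1 : C (Γ₀ ++ w :: (pre ++ τ :: U :: (T' ++ B)))
        (Γ₀ ++ w :: (pre ++ U :: τ :: (T' ++ B))) := by
      exact hL Γ₀ pre (T' ++ B) w τ U hτ.1 hτ.2 (by simp at hlen ⊢; omega)
    have h2 := ih (pre ++ [τ]) Γ₀ B w U (fun τ' hτ' => hT τ' (by simp [hτ']))
      (by simp at hlen ⊢; omega)
    have h2' : C (Γ₀ ++ w :: (pre ++ τ :: U :: (T' ++ B)))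
        (Γ₀ ++ w :: (pre ++ τ :: (T' ++ U :: B))) := by
      simpa [List.append_assoc] using h2
    simp only [List.cons_append]
    exact C.trans h1.symm h2'

end HypoAux

namespace HypoAux

theorem master : ∀ N : ℕ, OL N ∧ OR N ∧ OD N ∧ OE N := by
  intro N
  induction N with
  | zero =>
    refine ⟨?_, ?_, ?_, ?_⟩
    · intro γ δ β b x y hxb hby hlen
      have hδ : δ = [] := List.eq_nil_of_length_eq_zero (Nat.le_zero.mp hlen)
      subst hδ
      have := C.ctx γ β (crel2 hxb hby)
      simpa using this
    · intro α δ β x y w hxw hwy hlen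
      have hδ : δ = [] := List.eq_nil_of_length_eq_zero (Nat.le_zero.mp hlen)
      subst hδ
      have := C.ctx α β (crel1 hxw hwy)
      simpa using this
    · intro γ δ β z b x y hzx hxb hby hlen
      have hδ : δ = [] := List.eq_nil_of_length_eq_zero (Nat.le_zero.mp hlen)
      subst hδ
      have := C.ctx γ β (crel3 hzx hxb hby).symm
      simpa using this
    · intro γ δ β b g x y hxb hby hyg hlen
      have hδ : δ = [] := List.eq_nil_of_length_eq_zero (Nat.le_zero.mp hlen)
      subst hδ
      have := C.ctx γ β (crel4 hxb hby hyg)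
      simpa using this
  | succ N ih =>
    obtain ⟨hL, hR, hD, hE⟩ := ih
    have hL' : OL (N + 1) := by
      intro γ δ β b x y hxb hby hlen
      rcases Nat.lt_or_ge δ.length (N + 1) with hsh | hex
      · exact hL γ δ β b x y hxb hby (by omega)
      have hlenδ : δ.length = N + 1 := le_antisymm hlen hex
      rcases decomp_last (fun a => x < a ∧ a ≤ y) δ with hclean | ⟨δ₁, v, δ₂, rfl, hv, -⟩
      swap
      · have hlen2 : δ₂.length ≤ N := by
          simp [List.length_append] at hlenδ; omega
        have := hL (γ ++ b :: δ₁) δ₂ β v x y hv.1 hv.2 hlen2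
        simp only [List.append_assoc, List.cons_append, List.nil_append] at this ⊢
        exact this
      cases δ with
      | nil => exact absurd hlenδ (by simp)
      | cons z δ' =>
        have hlen' : δ'.length ≤ N := by simp at hlenδ; omega
        have hz : ¬ (x < z ∧ z ≤ y) := hclean z (by simp)
        rcases le_or_gt z x with hzx | hxz
        · have c1 := hR γ δ' (y :: β) z b x hzx hxb hlen'
          have c2 := hD γ δ' β z b x y hzx hxb hby hlen'
          simp only [List.append_assoc, List.cons_append, List.nil_append] at c1 c2 ⊢
          exact C.trans c1.symm c2
        · have hzy : y < z := by
            rcases le_or_gt z y with h | h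
            · exact absurd ⟨hxz, h⟩ hz
            · exact h
          have c1 := hE γ δ' β b z x y hxb hby hzy hlen'
          have c2 := hR γ δ' (x :: β) b z y hby hzy hlen'
          simp only [List.append_assoc, List.cons_append, List.nil_append] at c1 c2 ⊢
          exact C.trans c1 c2.symm
    have hR' : OR (N + 1) := by
      intro α δ β x y w hxw hwy hlen
      rcases Nat.lt_or_ge δ.length (N + 1) with hsh | hex
      · exact hR α δ β x y w hxw hwy (by omega)
      have hlenδ : δ.length = N + 1 := le_antisymm hlen hex
      rcases decomp_first (fun a => x ≤ a ∧ a < y) δ with hclean | ⟨δ₁, m, δ₂, rfl, hm, -⟩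
      swap
      · have hlen1 : δ₁.length ≤ N := by
          simp [List.length_append] at hlenδ; omega
        have := hR α δ₁ (δ₂ ++ w :: β) x y m hm.1 hm.2 hlen1
        simp only [List.append_assoc, List.cons_append, List.nil_append] at this ⊢
        exact this
      rcases δ.eq_nil_or_concat with rfl | ⟨δ', t, rfl⟩
      · exact absurd hlenδ (by simp)
      have hlen' : δ'.length ≤ N := by simp at hlenδ; omega
      have ht : ¬ (x ≤ t ∧ t < y) := hclean t (by simp)
      rcases le_or_gt y t with hyt | hty
      · have c1 := hL (α ++ [x]) δ' β y w t hwy hyt hlen'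
        have c2 := hD α δ' β x y w t hxw hwy hyt hlen'
        simp only [List.concat_eq_append, List.append_assoc, List.cons_append, List.nil_append] at c1 c2 ⊢
        exact C.trans c1.symm c2
      · have htx : t < x := by
          rcases le_or_gt x t with h | h
          · exact absurd ⟨h, hty⟩ ht
          · exact h
        have c1 := hE α δ' β x y t w htx hxw hwy hlen'
        have c2 := hL (α ++ [y]) δ' β x t w htx hxw hlen'
        simp only [List.concat_eq_append, List.append_assoc, List.cons_append, List.nil_append] at c1 c2 ⊢
        exact C.trans c1 c2.symm
    have hD' : OD (N + 1) := by
      intro γ δ β z b x y hzx hxb hby hlen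
      rcases Nat.lt_or_ge δ.length (N + 1) with hsh | hex
      · exact hD γ δ β z b x y hzx hxb hby (by omega)
      have hlenδ : δ.length = N + 1 := le_antisymm hlen hex
      have hzb : z < b := lt_of_le_of_lt hzx hxb
      have hxy : x < y := lt_of_lt_of_le hxb hby
      rcases decomp_last (fun a => x < a ∧ a ≤ y) δ with hcl1 | ⟨δ₁, u, δ₂, rfl, hu, -⟩
      swap
      · have c1 := hR' γ (δ₁ ++ u :: δ₂) (y :: β) z b x hzx hxb hlen
        have c2 := hL' (γ ++ b :: z :: δ₁) δ₂ β u x y hu.1 hu.2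
          (by simp [List.length_append] at hlen ⊢; omega)
        simp only [List.append_assoc, List.cons_append, List.nil_append,
          List.singleton_append] at c1 c2 ⊢
        exact C.trans c1 c2
      rcases decomp_first (fun a => y < a) δ with hcl2 | ⟨δ₁, G, δ₂, rfl, hG, hδ₁⟩
      swap
      · have hδ₁x : ∀ τ ∈ δ₁, τ ≤ x := by
          intro τ hτ
          by_contra h
          push_neg at h
          exact hcl1 τ (by simp [hτ]) ⟨h, le_of_not_gt (hδ₁ τ hτ)⟩
        have hbG : b ≤ G := le_of_lt (lt_of_le_of_lt hby hG)
        have hyG : y < G := hG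
        have hlens : δ₁.length + δ₂.length = N := by
          simp [List.length_append] at hlenδ; omega
        have s1 := (cross_right hL' δ₁ [] (γ ++ [z]) (δ₂ ++ x :: y :: β) b G
            (fun τ hτ => ⟨lt_of_le_of_lt (hδ₁x τ hτ) hxb, hbG⟩) (by simp; omega)).symm
        have s2 := hR' (γ ++ [z]) (δ₁ ++ (δ₂ ++ [x])) β b G y hby hyG
            (by simp [List.length_append]; omega)
        have s3 := hR' γ [] (δ₁ ++ δ₂ ++ x :: y :: β) z G b (le_of_lt hzb)
            (lt_of_le_of_lt hby hG) (by simp)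
        have s4 := hD (γ ++ [G]) (δ₁ ++ δ₂) β z b x y hzx hxb hby
            (by simp [List.length_append]; omega)
        have s5 := (hR' γ (z :: (δ₁ ++ δ₂)) (x :: β) b G y hby hyG
            (by simp [List.length_append]; omega)).symm
        have s6 := (hL' γ [] (δ₁ ++ δ₂ ++ y :: x :: β) b z G hzb hbG (by simp)).symm
        have s7 := cross_right hL' δ₁ [z] γ (δ₂ ++ y :: x :: β) b G
            (fun τ hτ => ⟨lt_of_le_of_lt (hδ₁x τ hτ) hxb, hbG⟩) (by simp; omega)
        simp only [List.append_assoc, List.cons_append, List.nil_append,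
          List.singleton_append] at s1 s2 s3 s4 s5 s6 s7 ⊢
        exact C.trans s1 (C.trans s2 (C.trans s3 (C.trans s4 (C.trans s5 (C.trans s6 s7)))))
      have hδx : ∀ τ ∈ δ, τ ≤ x := by
        intro τ hτ
        by_contra h
        push_neg at h
        exact hcl1 τ hτ ⟨h, le_of_not_gt (hcl2 τ hτ)⟩
      rcases decomp_first (fun a => z ≤ a) δ with hcl3 | ⟨δ₁, τ, δ₂, rfl, hτ, -⟩
      swap
      · have c1 := hL' (γ ++ [z]) (δ₁ ++ τ :: δ₂) β b x y hxb hby hlen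
        have c2 := hR' γ δ₁ (δ₂ ++ y :: x :: β) z b τ hτ
          (lt_of_le_of_lt (hδx τ (by simp)) hxb)
          (by simp [List.length_append] at hlen ⊢; omega)
        simp only [List.append_assoc, List.cons_append, List.nil_append,
          List.singleton_append] at c1 c2 ⊢
        exact C.trans c1 c2
      · rcases δ.eq_nil_or_concat with rfl | ⟨dpp, τ, rfl⟩
        · exact absurd hlenδ (by simp)
        have hτz : τ < z := lt_of_not_ge (fun h => hcl3 τ (by simp) h)
        have hdpp : dpp.length = N := by simp at hlenδ; omega
        have r1 := hL' γ (b :: dpp) (y :: β) z τ x hτz hzx (by simp; omega)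
        have r2 := hL' (γ ++ z :: b :: dpp) [] β x τ y (lt_of_lt_of_le hτz hzx)
          (le_of_lt hxy) (by simp)
        have r3 := hD γ dpp (τ :: β) z b x y hzx hxb hby (by omega)
        have r4 := (hL' (γ ++ [b]) (dpp ++ [y]) β z τ x hτz hzx
          (by simp; omega)).symm
        have r5 := (hL' (γ ++ [b]) dpp (x :: β) z τ y hτz
          (le_trans hzx (le_of_lt hxy)) (by omega)).symm
        simp only [List.concat_eq_append, List.append_assoc, List.cons_append,
          List.nil_append, List.singleton_append] at r1 r2 r3 r4 r5 ⊢
        exact C.trans r1 (C.trans r2 (C.trans r3 (C.trans r4 r5)))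
    have hE' : OE (N + 1) := by
      intro γ δ β b g x y hxb hby hyg hlen
      rcases Nat.lt_or_ge δ.length (N + 1) with hsh | hex
      · exact hE γ δ β b g x y hxb hby hyg (by omega)
      have hlenδ : δ.length = N + 1 := le_antisymm hlen hex
      have hxy : x < y := lt_of_lt_of_le hxb hby
      have hbg : b < g := lt_of_le_of_lt hby hyg
      have hxg : x < g := lt_trans hxy hyg
      rcases decomp_last (fun a => x < a ∧ a ≤ y) δ with hcl1 | ⟨δ₁, u, δ₂, rfl, hu, -⟩
      swap
      · have c1 := hL' (γ ++ b :: g :: δ₁) δ₂ β u x y hu.1 hu.2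
          (by simp [List.length_append] at hlen ⊢; omega)
        have c2 := hR' γ (δ₁ ++ u :: δ₂) (x :: β) b g y hby hyg hlen
        simp only [List.append_assoc, List.cons_append, List.nil_append,
          List.singleton_append] at c1 c2 ⊢
        exact C.trans c1 c2
      rcases decomp_first (fun a => b ≤ a ∧ a < g) δ with hcl2 | ⟨δ₁, u, δ₂, rfl, hu, -⟩
      swap
      · have c1 := hR' γ δ₁ (δ₂ ++ x :: y :: β) b g u hu.1 hu.2
          (by simp [List.length_append] at hlen ⊢; omega)
        have c2 := hL' (γ ++ [g]) (δ₁ ++ u :: δ₂) β b x y hxb hby hlen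
        simp only [List.append_assoc, List.cons_append, List.nil_append,
          List.singleton_append] at c1 c2 ⊢
        exact C.trans c1 c2
      have hδsplit : ∀ a ∈ δ, a ≤ x ∨ g ≤ a := by
        intro a ha
        by_cases hax : a ≤ x
        · exact Or.inl hax
        · push_neg at hax
          have hya : y < a := by
            by_contra h
            exact hcl1 a ha ⟨hax, le_of_not_gt h⟩
          have hba : b ≤ a := le_trans hby (le_of_lt hya)
          right
          by_contra h
          exact hcl2 a ha ⟨hba, lt_of_not_ge h⟩
      rcases decomp_last (fun a => g ≤ a) δ with hcl3 | ⟨δ₁, U, δ₂, rfl, hU, hδ₂⟩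
      swap
      · have hδ₂x : ∀ τ ∈ δ₂, τ ≤ x := fun τ hτ =>
          (hδsplit τ (by simp [hτ])).resolve_right (hδ₂ τ hτ)
        have hlens : δ₁.length + δ₂.length = N := by
          simp [List.length_append] at hlenδ; omega
        have s1 := cross_right hL' δ₂ δ₁ (γ ++ [b]) (x :: y :: β) g U
            (fun τ hτ => ⟨lt_of_le_of_lt (hδ₂x τ hτ) hxg, hU⟩) (by omega)
        have s2 := (hL' (γ ++ [b]) (δ₁ ++ δ₂) (y :: β) g x U hxg hU
            (by simp [List.length_append]; omega)).symm
        have s3 := (hL' (γ ++ [b]) (δ₁ ++ δ₂ ++ [x]) β g y U hyg hU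
            (by simp [List.length_append]; omega)).symm
        have s4 := hE γ (δ₁ ++ δ₂) (U :: β) b g x y hxb hby hyg
            (by simp [List.length_append]; omega)
        have s5 := hL' (γ ++ [g]) (δ₁ ++ δ₂ ++ [y]) β b x U hxb
            (le_trans hby (le_trans (le_of_lt hyg) hU))
            (by simp [List.length_append]; omega)
        have s6 := hL' γ (b :: (δ₁ ++ δ₂)) (x :: β) g y U hyg hU
            (by simp [List.length_append]; omega)
        have s7 := (cross_right hL' δ₂ δ₁ (γ ++ [g]) (y :: x :: β) b U
            (fun τ hτ => ⟨lt_of_le_of_lt (hδ₂x τ hτ) hxb, le_trans (le_of_lt hbg) hU⟩)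
            (by omega)).symm
        simp only [List.append_assoc, List.cons_append, List.nil_append,
          List.singleton_append] at s1 s2 s3 s4 s5 s6 s7 ⊢
        exact C.trans s1 (C.trans s2 (C.trans s3 (C.trans s4 (C.trans s5 (C.trans s6 s7)))))
      cases δ with
      | nil => exact absurd hlenδ (by simp)
      | cons u δ' =>
        have hux : u ≤ x := (hδsplit u (by simp)).resolve_right
          (fun h => hcl3 u (by simp) h)
        have hδ'len : δ'.length = N := by simp at hlenδ; omega
        have t1 := (hL' γ [] (δ' ++ x :: y :: β) b u g (lt_of_le_of_lt hux hxb)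
          (le_of_lt hbg) (by simp)).symm
        have t2 := (hR' γ (g :: δ') (y :: β) u b x hux hxb (by simp; omega)).symm
        have t3 := hE (γ ++ [u]) δ' β b g x y hxb hby hyg (by omega)
        have t4 := hR' γ [] (δ' ++ y :: x :: β) u g b
          (le_of_lt (lt_of_le_of_lt hux hxb)) hbg (by simp)
        have t5 := hR' (γ ++ [g]) (δ' ++ [y]) β u b x hux hxb
          (by simp; omega)
        simp only [List.append_assoc, List.cons_append, List.nil_append,
          List.singleton_append] at t1 t2 t3 t4 t5 ⊢
        exact C.trans t1 (C.trans t2 (C.trans t3 (C.trans t4 t5)))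
    exact ⟨hL', hR', hD', hE'⟩

end HypoAux

namespace HypoAux

lemma TL {p q : Alph} (hpq : p < q) (X β : List Alph)
    (hw : ∃ c ∈ X, p < c ∧ c ≤ q) :
    C (X ++ p :: q :: β) (X ++ q :: p :: β) := by
  obtain ⟨c, hc, hc1, hc2⟩ := hw
  obtain ⟨X₁, X₂, rfl⟩ := List.append_of_mem hc
  have := (master X₂.length).1 X₁ X₂ β c p q hc1 hc2 le_rfl
  simpa [List.append_assoc] using this

lemma TR {p q : Alph} (hpq : p < q) (α Z : List Alph)
    (hw : ∃ w ∈ Z, p ≤ w ∧ w < q) :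
    C (α ++ p :: q :: Z) (α ++ q :: p :: Z) := by
  obtain ⟨w, hwZ, h1, h2⟩ := hw
  obtain ⟨Z₁, Z₂, rfl⟩ := List.append_of_mem hwZ
  have := (master Z₁.length).2.1 α Z₁ Z₂ p q w h1 h2 le_rfl
  simpa [List.append_assoc] using this

/-- swap adjacent letters, witnesses on the left -/
lemma swapL (X W : List Alph) (a c : Alph) (haX : a ∈ X) (hcX : c ∈ X) :
    C (X ++ c :: a :: W) (X ++ a :: c :: W) := by
  rcases lt_trichotomy a c with h | rfl | h
  · exact (TL h X W ⟨c, hcX, h, le_rfl⟩).symm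
  · exact C.refl _
  · exact TL h X W ⟨a, haX, h, le_rfl⟩

/-- swap adjacent letters, witnesses on the right -/
lemma swapR (α Z : List Alph) (a c : Alph) (haZ : a ∈ Z) (hcZ : c ∈ Z) :
    C (α ++ a :: c :: Z) (α ++ c :: a :: Z) := by
  rcases lt_trichotomy a c with h | rfl | h
  · exact TR h α Z ⟨a, haZ, le_rfl, h⟩
  · exact C.refl _
  · exact (TR h α Z ⟨c, hcZ, le_rfl, h⟩).symm

/-- swap adjacent letters a (from left block) and c, witness a on both sides -/
lemma swapM (X W : List Alph) (a c : Alph) (haX : a ∈ X) (haW : a ∈ W) :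
    C (X ++ a :: c :: W) (X ++ c :: a :: W) := by
  rcases lt_trichotomy a c with h | rfl | h
  · exact TR h X W ⟨a, haW, le_rfl, h⟩
  · exact C.refl _
  · exact (TL h X W ⟨a, haX, h, le_rfl⟩).symm

/-- move letter to the right across s, witnesses on the left -/
lemma moveL (s : List Alph) : ∀ (X β : List Alph) (c : Alph), c ∈ X → (∀ a ∈ s, a ∈ X) →
    C (X ++ c :: (s ++ β)) (X ++ s ++ c :: β) := by
  induction s with
  | nil => intro X β c _ _; simp; exact C.refl _
  | cons a s' ih =>
    intro X β c hc hs
    have h1 := swapL X (s' ++ β) a c (hs a (by simp)) hc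
    have h2 := ih (X ++ [a]) β c (by simp [hc]) (fun σ hσ => by simp [hs σ (by simp [hσ])])
    simp only [List.append_assoc, List.cons_append, List.nil_append,
      List.singleton_append] at h1 h2 ⊢
    exact C.trans h1 h2

/-- move letter to the left across s, witnesses on the right -/
lemma moveR (s : List Alph) : ∀ (α Z : List Alph) (c : Alph), c ∈ Z → (∀ a ∈ s, a ∈ Z) →
    C (α ++ s ++ c :: Z) (α ++ c :: (s ++ Z)) := by
  induction s with
  | nil => intro α Z c _ _; simp; exact C.refl _
  | cons a s' ih =>
    intro α Z c hc hs
    have h1 := ih (α ++ [a]) Z c hc (fun σ hσ => hs σ (by simp [hσ]))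
    have h2 := swapR α (s' ++ Z) a c (by simp [hs a (by simp)]) (by simp [hc])
    simp only [List.append_assoc, List.cons_append, List.nil_append,
      List.singleton_append] at h1 h2 ⊢
    exact C.trans h1 h2

/-- move letter to the left across s, witnesses on both sides -/
lemma moveM (s : List Alph) : ∀ (X W : List Alph) (c : Alph),
    (∀ a ∈ s, a ∈ X ∧ a ∈ W) →
    C (X ++ s ++ c :: W) (X ++ c :: (s ++ W)) := by
  induction s with
  | nil => intro X W c _; simp; exact C.refl _
  | cons a s' ih =>
    intro X W c hs
    have h1 := ih (X ++ [a]) W c (fun σ hσ => ⟨by simp [(hs σ (by simp [hσ])).1],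
      (hs σ (by simp [hσ])).2⟩)
    have h2 := swapM X (s' ++ W) a c (hs a (by simp)).1 (by simp [(hs a (by simp)).2])
    simp only [List.append_assoc, List.cons_append, List.nil_append,
      List.singleton_append] at h1 h2 ⊢
    exact C.trans h1 h2
end HypoAux

namespace HypoAux

lemma swapBL : ∀ (u v X β : List Alph), (∀ a ∈ u, a ∈ X) → (∀ a ∈ v, a ∈ X) →
    C (X ++ u ++ v ++ β) (X ++ v ++ u ++ β) := by
  intro u
  induction u with
  | nil =>
    intro v X β _ _
    simp only [List.append_nil, List.nil_append]
    exact C.refl _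
  | cons c u' ih =>
    intro v X β hu hv
    have hmem1 : ∀ a ∈ u' ++ v, a ∈ X := by
      intro a ha
      rcases List.mem_append.mp ha with h | h
      · exact hu a (by simp [h])
      · exact hv a h
    have hmem2 : ∀ a ∈ v ++ [c], a ∈ X := by
      intro a ha
      rcases List.mem_append.mp ha with h | h
      · exact hv a h
      · simp only [List.mem_singleton] at h
        subst h
        exact hu a (by simp)
    have h1 := moveL (u' ++ v) X β c (hu c (by simp)) hmem1
    have h2 := ih (v ++ [c]) X β (fun a ha => hu a (by simp [ha])) hmem2
    simp only [List.append_assoc, List.cons_append, List.nil_append,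
      List.singleton_append] at h1 h2 ⊢
    exact C.trans h1 h2

lemma swapBR : ∀ (v u α Z : List Alph), (∀ a ∈ u, a ∈ Z) → (∀ a ∈ v, a ∈ Z) →
    C (α ++ u ++ v ++ Z) (α ++ v ++ u ++ Z) := by
  intro v
  induction v with
  | nil =>
    intro u α Z _ _
    simp only [List.append_nil, List.nil_append]
    exact C.refl _
  | cons c v' ih =>
    intro u α Z hu hv
    have h1 := moveR u α (v' ++ Z) c (by simp [hv c (by simp)])
      (fun a ha => by simp [hu a ha])
    have h2 := ih u (α ++ [c]) Z hu (fun a ha => hv a (by simp [ha]))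
    simp only [List.append_assoc, List.cons_append, List.nil_append,
      List.singleton_append] at h1 h2 ⊢
    exact C.trans h1 h2

lemma swapBM : ∀ (v s X Y : List Alph), (∀ a ∈ s, a ∈ X ∧ a ∈ Y) →
    C (X ++ s ++ v ++ Y) (X ++ v ++ s ++ Y) := by
  intro v
  induction v with
  | nil =>
    intro s X Y _
    simp only [List.append_nil, List.nil_append]
    exact C.refl _
  | cons c v' ih =>
    intro s X Y hs
    have h1 := moveM s X (v' ++ Y) c
      (fun a ha => ⟨(hs a ha).1, by simp [(hs a ha).2]⟩)
    have h2 := ih s (X ++ [c]) Y (fun a ha => ⟨by simp [(hs a ha).1], (hs a ha).2⟩)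
    simp only [List.append_assoc, List.cons_append, List.nil_append,
      List.singleton_append] at h1 h2 ⊢
    exact C.trans h1 h2

lemma gl1 (u v : List Alph) : C (u ++ v ++ u ++ v) (u ++ v ++ v ++ u) := by
  have := swapBL u v (u ++ v) [] (fun a ha => by simp [ha]) (fun a ha => by simp [ha])
  simpa [List.append_assoc] using this

lemma gl2 (u v : List Alph) : C (u ++ v ++ u ++ v) (v ++ u ++ u ++ v) := by
  have := swapBR v u [] (u ++ v) (fun a ha => by simp [ha]) (fun a ha => by simp [ha])
  simpa [List.append_assoc] using this

lemma gl3 (u v : List Alph) : C (u ++ v ++ u ++ v) (v ++ u ++ v ++ u) := by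
  refine C.trans (gl2 u v) ?_
  have := swapBL u v (v ++ u) [] (fun a ha => by simp [ha]) (fun a ha => by simp [ha])
  simpa [List.append_assoc] using this

lemma gl4 (u v : List Alph) : C (u ++ u ++ v ++ u) (u ++ v ++ u ++ u) := by
  have := swapBM v u u u (fun a ha => ⟨ha, ha⟩)
  simpa [List.append_assoc] using this

lemma ofList_toList' (m : FreeMonoid Alph) : ofList (FreeMonoid.toList m) = m := by
  simp

lemma key1 (m n : FreeMonoid Alph) : hypoCon (m*n*(m*n)) (m*n*(n*m)) := by
  have := gl1 (FreeMonoid.toList m) (FreeMonoid.toList n)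
  unfold C at this
  simpa [ofList_append, mul_assoc] using this

lemma key2 (m n : FreeMonoid Alph) : hypoCon (m*n*(m*n)) (n*m*(m*n)) := by
  have := gl2 (FreeMonoid.toList m) (FreeMonoid.toList n)
  unfold C at this
  simpa [ofList_append, mul_assoc] using this

lemma key3 (m n : FreeMonoid Alph) : hypoCon (m*n*(m*n)) (n*m*(n*m)) := by
  have := gl3 (FreeMonoid.toList m) (FreeMonoid.toList n)
  unfold C at this
  simpa [ofList_append, mul_assoc] using this

lemma key4 (m n : FreeMonoid Alph) : hypoCon (m*m*(n*m)) (m*n*(m*m)) := by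
  have := gl4 (FreeMonoid.toList m) (FreeMonoid.toList n)
  unfold C at this
  simpa [ofList_append, mul_assoc] using this

end HypoAux


section MainProof

open HypoAux in
private lemma hypo_id1 (p q : Hypo) : p * q * p * q = p * q * q * p := by
  refine Con.induction_on₂ p q fun m n => ?_
  simpa [← Con.coe_mul, mul_assoc] using (hypoCon.eq).2 (HypoAux.key1 m n)

open HypoAux in
private lemma hypo_id2 (p q : Hypo) : p * q * p * q = q * p * p * q := by
  refine Con.induction_on₂ p q fun m n => ?_
  simpa [← Con.coe_mul, mul_assoc] using (hypoCon.eq).2 (HypoAux.key2 m n)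

open HypoAux in
private lemma hypo_id3 (p q : Hypo) : p * q * p * q = q * p * q * p := by
  refine Con.induction_on₂ p q fun m n => ?_
  simpa [← Con.coe_mul, mul_assoc] using (hypoCon.eq).2 (HypoAux.key3 m n)

open HypoAux in
private lemma hypo_id4 (p q : Hypo) : p * p * q * p = p * q * p * p := by
  refine Con.induction_on₂ p q fun m n => ?_
  simpa [← Con.coe_mul, mul_assoc] using (hypoCon.eq).2 (HypoAux.key4 m n)

end MainProof

/-- For distinct variables `x` and `y`, the hypoplactic monoid satisfies the
nontrivial identities `xyxy ≈ xyyx`, `xyxy ≈ yxxy`, `xyxy ≈ yxyx` and `xxyx ≈ xyxx`. -/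
theorem hypo_shortest_identities {X : Type*} (x y : X) (hxy : x ≠ y) :
    (MSatisfies Hypo (of x * of y * of x * of y) (of x * of y * of y * of x) ∧
      of x * of y * of x * of y ≠ of x * of y * of y * of x) ∧
    (MSatisfies Hypo (of x * of y * of x * of y) (of y * of x * of x * of y) ∧
      of x * of y * of x * of y ≠ of y * of x * of x * of y) ∧
    (MSatisfies Hypo (of x * of y * of x * of y) (of y * of x * of y * of x) ∧
      of x * of y * of x * of y ≠ of y * of x * of y * of x) ∧
    (MSatisfies Hypo (of x * of x * of y * of x) (of x * of y * of x * of x) ∧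
      of x * of x * of y * of x ≠ of x * of y * of x * of x) := by
  have hne : ∀ (a b c d a' b' c' d' : X), [a,b,c,d] ≠ [a',b',c',d'] →
      of a * of b * of c * of d ≠ (of a' * of b' * of c' * of d' : FreeMonoid X) := by
    intro a b c d a' b' c' d' hne h
    apply hne
    have := congrArg FreeMonoid.toList h
    simpa using this
  refine ⟨⟨?_, ?_⟩, ⟨?_, ?_⟩, ⟨?_, ?_⟩, ⟨?_, ?_⟩⟩
  · intro ψ
    simp only [map_mul]
    exact hypo_id1 _ _
  · exact hne x y x y x y y x (by simp [hxy])
  · intro ψ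
    simp only [map_mul]
    exact hypo_id2 _ _
  · exact hne x y x y y x x y (by simp [hxy])
  · intro ψ
    simp only [map_mul]
    exact hypo_id3 _ _
  · exact hne x y x y y x y x (by simp [hxy])
  · intro ψ
    simp only [map_mul]
    exact hypo_id4 _ _
  · exact hne x x y x x y x x (by simp [hxy])
end

section
/- Every nontrivial identity u ≈ v satisfied by the hypoplactic monoid hypo has length at least 4, that is, |u| ≥ 4 and |v| ≥ 4 (in fact |u| = |v| since the identity must be balanced). -/
open FreeMonoid

/-!
Substituting for the variables and composing with homomorphisms out of `hypo` gives invariants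
of the identity. Homomorphisms into commutative monoids factor through `hypo`, so the identity is
balanced. Whether some letter `2` occurs before some letter `1` is also an invariant of the
hypoplactic congruence; substituting `p ↦ 2`, `q ↦ 1` and the identity for the other variables,
some `p` occurs before some `q` in `u` iff it does in `v`.

A word of length at most `3` is determined by its content and these precedences: at the first
position where `u` and `v` differ, say with `a` in `u` and `b` in `v`, content forces `a` before `b`
in `u` and `b` before `a` in `v`, hence both precedences in both words. In length `3` this forces
each word to be `aba` or `bab`, and equal content then makes them equal.
-/

open scoped List

namespace List

variable {X : Type*}

theorem exists_append_cons_of_ne {u v : List X} (h : u ≠ v) (hlen : u.length = v.length) :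
    ∃ s t t' a b, a ≠ b ∧ u = s ++ a :: t ∧ v = s ++ b :: t' := by
  induction u generalizing v with
  | nil => exact absurd (List.length_eq_zero_iff.1 hlen.symm).symm h
  | cons x u ih =>
    obtain _ | ⟨y, v⟩ := v
    · simp at hlen
    by_cases hxy : x = y
    · subst hxy
      obtain ⟨s, t, t', a, b, hab, rfl, rfl⟩ := ih (by simpa using h) (by simpa using hlen)
      exact ⟨x :: s, t, t', a, b, hab, rfl, rfl⟩
    · exact ⟨[], u, v, x, y, hxy, rfl, rfl⟩

theorem pair_sublist_of_count_eq [DecidableEq X] {s t t' : List X} {a b : X} (hab : a ≠ b)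
    (h : (s ++ a :: t).count b = (s ++ b :: t').count b) : [a, b] <+ s ++ a :: t := by
  have hb : b ∈ t := by
    rw [← List.count_pos_iff]
    simp [List.count_append, hab] at h
    omega
  exact (List.cons_sublist_cons.2 (List.singleton_sublist.2 hb)).trans
    (List.sublist_append_right s _)

theorem eq_aba_or_bab {w : List X} {a b : X} (hw : w.length ≤ 3) (hab : a ≠ b)
    (h₁ : [a, b] <+ w) (h₂ : [b, a] <+ w) : w = [a, b, a] ∨ w = [b, a, b] := by
  rcases w with _ | ⟨x, _ | ⟨y, _ | ⟨z, _ | ⟨_, _⟩⟩⟩⟩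
  all_goals simp [List.sublist_cons_iff] at *
  all_goals grind

theorem eq_of_perm_of_forall_pair_sublist_iff [DecidableEq X] {u v : List X} (hu : u.length ≤ 3)
    (hp : u ~ v) (h : ∀ p q, p ≠ q → ([p, q] <+ u ↔ [p, q] <+ v)) : u = v := by
  by_contra huv
  obtain ⟨s, t, t', a, b, hab, rfl, rfl⟩ := exists_append_cons_of_ne huv hp.length_eq
  have hab' : [a, b] <+ s ++ a :: t := pair_sublist_of_count_eq hab (hp.count_eq b)
  have hba' : [b, a] <+ s ++ b :: t' := pair_sublist_of_count_eq hab.symm (hp.count_eq a).symm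
  rcases eq_aba_or_bab hu hab hab' ((h b a hab.symm).2 hba') with hu' | hu' <;>
    rcases eq_aba_or_bab (hp.length_eq ▸ hu) hab ((h a b hab).1 hab') hba' with hv' | hv'
  all_goals have := hp.count_eq a; simp_all [List.count_cons]

end List

theorem hypoCon_le_ker_of_commMonoid {M : Type*} [CommMonoid M] (f : FreeMonoid Alph →* M) :
    hypoCon ≤ Con.ker f := by
  refine Con.conGen_le.2 ?_
  rintro x y (⟨a, b, c, -, -, rfl, rfl⟩ | ⟨a, b, c, -, -, rfl, rfl⟩ |
    ⟨a, b, c, d, -, -, -, rfl, rfl⟩ | ⟨a, b, c, d, -, -, -, rfl, rfl⟩) <;>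
  simp only [Con.ker_rel, map_mul] <;> ac_rfl

theorem MSatisfies.isBalanced_of_hypo {X : Type*} [DecidableEq X] {u v : FreeMonoid X}
    (h : MSatisfies Hypo u v) : IsBalanced u v := by
  intro p
  let σ : FreeMonoid X →* Hypo := lift fun x => if x = p then hypoCon.mk' (of 1) else 1
  have hσ : (hypoCon.lift (count 1) (hypoCon_le_ker_of_commMonoid _)).comp σ = count p :=
    hom_eq fun x => by by_cases hx : x = p <;> simp [σ, hx, count_of]
  have := congrArg (hypoCon.lift (count 1) (hypoCon_le_ker_of_commMonoid _)) (h σ)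
  rw [← MonoidHom.comp_apply, ← MonoidHom.comp_apply, hσ] at this
  exact Multiplicative.ofAdd.injective this

instance : DecidableEq (Function.End (Fin 3)) := inferInstanceAs (DecidableEq (Fin 3 → Fin 3))

/-- Actions of the letters `1`, `2` and `≥ 3` (index `0`, `1`, `2`). A word acts by reading it from
right to left: state `1` moves to `0` at a letter `1`, and from `0` to the absorbing state `2` at a
letter `2`. So a word sends `1` to `2` iff some `2` occurs before some `1`. -/
def inversionAct : Fin 3 → Function.End (Fin 3) := ![![0, 0, 2], ![2, 1, 2], 1]

def letterClass (a : Alph) : Fin 3 := ⟨min (a : ℕ) 3 - 1, by omega⟩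

theorem letterClass_mono : Monotone letterClass := fun a b h => by
  have : (a : ℕ) ≤ b := h
  change min (a : ℕ) 3 - 1 ≤ min (b : ℕ) 3 - 1
  omega

theorem letterClass_lt_or_eq_two {a b : Alph} (h : a < b) :
    letterClass a < letterClass b ∨ letterClass a = 2 ∧ letterClass b = 2 := by
  have : (a : ℕ) < b := h
  have := a.pos
  rw [Fin.lt_def, Fin.ext_iff, Fin.ext_iff]
  change min (a : ℕ) 3 - 1 < min (b : ℕ) 3 - 1 ∨ min (a : ℕ) 3 - 1 = 2 ∧ min (b : ℕ) 3 - 1 = 2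
  omega

set_option synthInstance.maxSize 1024 in
theorem inversionAct_relations :
    (∀ a b c : Fin 3, a ≤ b → b < c ∨ b = 2 ∧ c = 2 →
      inversionAct a * inversionAct c * inversionAct b =
        inversionAct c * inversionAct a * inversionAct b) ∧
    (∀ a b c : Fin 3, a < b ∨ a = 2 ∧ b = 2 → b ≤ c →
      inversionAct b * inversionAct a * inversionAct c =
        inversionAct b * inversionAct c * inversionAct a) ∧
    (∀ a b c d : Fin 3, a ≤ b → b < c ∨ b = 2 ∧ c = 2 → c ≤ d →
      inversionAct c * inversionAct a * inversionAct d * inversionAct b =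
        inversionAct a * inversionAct c * inversionAct b * inversionAct d) ∧
    (∀ a b c d : Fin 3, a < b ∨ a = 2 ∧ b = 2 → b ≤ c → c < d ∨ c = 2 ∧ d = 2 →
      inversionAct b * inversionAct d * inversionAct a * inversionAct c =
        inversionAct d * inversionAct b * inversionAct c * inversionAct a) := by
  decide

def inversionHom : FreeMonoid Alph →* Function.End (Fin 3) := lift (inversionAct ∘ letterClass)

theorem hypoCon_le_ker_inversionHom : hypoCon ≤ Con.ker inversionHom := by
  obtain ⟨h₁, h₂, h₃, h₄⟩ := inversionAct_relations
  refine Con.conGen_le.2 ?_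
  rintro x y (⟨a, b, c, hab, hbc, rfl, rfl⟩ | ⟨a, b, c, hab, hbc, rfl, rfl⟩ |
    ⟨a, b, c, d, hab, hbc, hcd, rfl, rfl⟩ | ⟨a, b, c, d, hab, hbc, hcd, rfl, rfl⟩) <;>
  simp only [Con.ker_rel, map_mul, inversionHom, lift_eval_of, Function.comp_apply]
  · exact h₁ _ _ _ (letterClass_mono hab) (letterClass_lt_or_eq_two hbc)
  · exact h₂ _ _ _ (letterClass_lt_or_eq_two hab) (letterClass_mono hbc)
  · exact h₃ _ _ _ _ (letterClass_mono hab) (letterClass_lt_or_eq_two hbc) (letterClass_mono hcd)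
  · exact h₄ _ _ _ _ (letterClass_lt_or_eq_two hab) (letterClass_mono hbc)
      (letterClass_lt_or_eq_two hcd)

section PairAct

variable {X : Type*} [DecidableEq X]

def pairAct (p q : X) (x : X) : Function.End (Fin 3) :=
  if x = p then inversionAct 1 else if x = q then inversionAct 0 else 1

theorem prod_map_pairAct_apply_one {p q : X} (hpq : p ≠ q) (l : List X) :
    (l.map (pairAct p q)).prod 1 = if [p, q] <+ l then 2 else if q ∈ l then 0 else 1 := by
  induction l with
  | nil => rfl
  | cons x l ih =>
    change pairAct p q x ((l.map (pairAct p q)).prod 1) = _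
    have sublist_cons_of_ne {y : X} (h : x ≠ p) : [p, y] <+ x :: l ↔ [p, y] <+ l := by
      simp [List.sublist_cons_iff, Ne.symm h]
    rw [ih]
    by_cases hp : x = p
    · subst hp
      simp only [List.cons_sublist_cons, List.singleton_sublist]
      by_cases hq : q ∈ l
      · simp only [pairAct, if_true, hq]
        split_ifs <;> rfl
      · have : ¬[x, q] <+ l := fun h => hq (h.subset (by simp))
        simp only [pairAct, if_true, hq, this, if_false, List.mem_cons, Ne.symm hpq, false_or]
        rfl
    by_cases hq : x = q
    · subst hq
      simp only [pairAct, hp, if_true, if_false, sublist_cons_of_ne hp, List.mem_cons_self]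
      split_ifs <;> rfl
    · simp only [pairAct, hp, hq, sublist_cons_of_ne hp, List.mem_cons, Ne.symm hq,
        false_or, Function.End.one_def, id, ↓reduceIte]

theorem MSatisfies.pair_sublist_iff_of_hypo {u v : FreeMonoid X} (h : MSatisfies Hypo u v)
    {p q : X} (hpq : p ≠ q) : [p, q] <+ u.toList ↔ [p, q] <+ v.toList := by
  let σ : FreeMonoid X →* Hypo := lift fun x =>
    if x = p then hypoCon.mk' (of 2) else if x = q then hypoCon.mk' (of 1) else 1
  let inversion : Hypo →* Function.End (Fin 3) :=
    hypoCon.lift inversionHom hypoCon_le_ker_inversionHom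
  have hσ : inversion.comp σ = lift (pairAct p q) :=
    hom_eq fun x => by
      simp only [σ, pairAct, MonoidHom.coe_comp, Function.comp_apply, lift_eval_of]
      split_ifs <;> rfl
  have key := congrArg (fun w => inversion w 1) (h σ)
  simp only [← MonoidHom.comp_apply, hσ, lift_apply, prod_map_pairAct_apply_one hpq] at key
  split_ifs at key <;> simp_all

end PairAct

/-- Every nontrivial identity `u ≈ v` satisfied by `hypo` has length at least `4`:
`|u| ≥ 4` and `|v| ≥ 4`, and in fact `|u| = |v|`. -/
theorem hypo_nontrivial_identity_length {X : Type*} (u v : FreeMonoid X)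
    (huv : u ≠ v) (h : MSatisfies Hypo u v) :
    4 ≤ u.toList.length ∧ 4 ≤ v.toList.length ∧
      u.toList.length = v.toList.length := by
  classical
  have hperm : u.toList ~ v.toList := List.perm_iff_count.2 h.isBalanced_of_hypo
  have hlen := hperm.length_eq
  have hu : 4 ≤ u.toList.length := by
    by_contra! hu
    exact huv <| toList.injective <| List.eq_of_perm_of_forall_pair_sublist_iff (by omega) hperm
      fun p q hpq => h.pair_sublist_iff_of_hypo hpq
  exact ⟨hu, hlen ▸ hu, hlen⟩
end

section
/- For distinct variables x, y, z, t, the hypoplactic monoid hypo satisfies the three nontrivial identities (L) xyzxty ≈ yxzxty, (M) xzxytx ≈ xzyxtx, and (R) xzytxy ≈ xzytyx. -/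
open FreeMonoid

def HL (x y : List Alph) : Prop := hypoCon (FreeMonoid.ofList x) (FreeMonoid.ofList y)
lemma hypoCon_of {u v : FreeMonoid Alph} (h : HypoRel u v) : hypoCon u v := ConGen.Rel.of u v h
lemma hl_refl (l : List Alph) : HL l l := hypoCon.refl _
lemma hl_symm {a b} (h : HL a b) : HL b a := hypoCon.symm h
lemma hl_trans {a b c} (h1 : HL a b) (h2 : HL b c) : HL a c := hypoCon.trans h1 h2
lemma hl_ctx (p q : List Alph) {x y : List Alph} (h : HL x y) : HL (p ++ x ++ q) (p ++ y ++ q) := by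
  unfold HL at *
  rw [FreeMonoid.ofList_append, FreeMonoid.ofList_append, FreeMonoid.ofList_append, FreeMonoid.ofList_append]
  exact hypoCon.mul (hypoCon.mul (hypoCon.refl _) h) (hypoCon.refl _)
lemma hl_ctx' (p q : List Alph) {x y l l' : List Alph} (hx : l = p ++ x ++ q)
    (hy : l' = p ++ y ++ q) (h : HL x y) : HL l l' := hx ▸ hy ▸ hl_ctx p q h
lemma r1 {a b c : Alph} (h1 : a ≤ b) (h2 : b < c) : HL [a, c, b] [c, a, b] :=
  hypoCon_of (Or.inl ⟨a, b, c, h1, h2, rfl, rfl⟩)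
lemma r2 {a b c : Alph} (h1 : a < b) (h2 : b ≤ c) : HL [b, a, c] [b, c, a] :=
  hypoCon_of (Or.inr (Or.inl ⟨a, b, c, h1, h2, rfl, rfl⟩))
lemma r3 {a b c d : Alph} (h1 : a ≤ b) (h2 : b < c) (h3 : c ≤ d) :
    HL [c, a, d, b] [a, c, b, d] :=
  hypoCon_of (Or.inr (Or.inr (Or.inl ⟨a, b, c, d, h1, h2, h3, rfl, rfl⟩)))
lemma r4 {a b c d : Alph} (h1 : a < b) (h2 : b ≤ c) (h3 : c < d) :
    HL [b, d, a, c] [d, b, c, a] :=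
  hypoCon_of (Or.inr (Or.inr (Or.inr ⟨a, b, c, d, h1, h2, h3, rfl, rfl⟩)))
lemma first_split_le {p : Alph → Prop} : ∀ (l₁ : List Alph) (k₀ : Alph) (l₂ : List Alph), p k₀ →
    ∃ u k v', l₁ ++ k₀ :: l₂ = u ++ k :: v' ∧ p k ∧ (∀ x ∈ u, ¬ p x) ∧ u.length ≤ l₁.length := by
  intro l₁
  induction l₁ with
  | nil => intro k₀ l₂ hk; exact ⟨[], k₀, l₂, rfl, hk, by simp, by simp⟩
  | cons x l₁ ih =>
    intro k₀ l₂ hk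
    by_cases hx : p x
    · exact ⟨[], x, l₁ ++ k₀ :: l₂, rfl, hx, by simp, by simp⟩
    · obtain ⟨u, k, v', he, hk', hf, hl⟩ := ih k₀ l₂ hk
      exact ⟨x :: u, k, v', by simp [he], hk', by
        intro z hz; rcases List.mem_cons.1 hz with rfl | hz; exact hx; exact hf z hz,
        by simpa using Nat.succ_le_succ hl⟩
lemma last_split_le {p : Alph → Prop} : ∀ (l₂ : List Alph) (l₁ : List Alph) (k₀ : Alph), p k₀ →
    ∃ u k v', l₁ ++ k₀ :: l₂ = u ++ k :: v' ∧ p k ∧ (∀ x ∈ v', ¬ p x) ∧ v'.length ≤ l₂.length := by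
  intro l₂
  induction l₂ using List.reverseRecOn with
  | nil => intro l₁ k₀ hk; exact ⟨l₁, k₀, [], rfl, hk, by simp, by simp⟩
  | append_singleton l₂ y ih =>
    intro l₁ k₀ hk
    by_cases hy : p y
    · exact ⟨l₁ ++ k₀ :: l₂, y, [], by simp, hy, by simp, by simp⟩
    · obtain ⟨u, k, v', he, hk', hf, hl⟩ := ih l₁ k₀ hk
      refine ⟨u, k, v' ++ [y], ?_, hk', ?_, ?_⟩
      · rw [show l₁ ++ k₀ :: (l₂ ++ [y]) = (l₁ ++ k₀ :: l₂) ++ [y] by simp, he]; simp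
      · intro z hz; rcases List.mem_append.1 hz with hz | hz
        · exact hf z hz
        · rcases List.mem_singleton.1 hz with rfl; exact hy
      · simpa using Nat.succ_le_succ hl

-- ===== the four statement families =====
def A1P (N : ℕ) : Prop := ∀ v : List Alph, v.length ≤ N → ∀ k s t : Alph, s < k → k ≤ t →
  (∀ x ∈ v, x ≤ s ∨ t < x) → HL (k :: (v ++ [s, t])) (k :: (v ++ [t, s]))
def B1P (N : ℕ) : Prop := ∀ v : List Alph, v.length ≤ N → ∀ k s t : Alph, s ≤ k → k < t →
  (∀ x ∈ v, x < s ∨ t ≤ x) → HL (s :: t :: (v ++ [k])) (t :: s :: (v ++ [k]))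
def G3P (N : ℕ) : Prop := ∀ v : List Alph, v.length ≤ N → ∀ a b c d : Alph, a ≤ b → b < c → c ≤ d →
  HL (c :: a :: (v ++ [d, b])) (a :: c :: (v ++ [b, d]))
def G4P (N : ℕ) : Prop := ∀ v : List Alph, v.length ≤ N → ∀ a b c d : Alph, a < b → b ≤ c → c < d →
  HL (b :: d :: (v ++ [a, c])) (d :: b :: (v ++ [c, a]))

-- ===== derived swap helpers =====
/-- swap a pair `[s,t] → [t,s]` at the right end of `l₁ ++ k₀ :: l₂`, where `k₀ ∈ (s,t]`. -/
lemma swapA {N} (hA : A1P N) (l₁ : List Alph) (k₀ : Alph) (l₂ : List Alph) (s t : Alph)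
    (h1 : s < k₀) (h2 : k₀ ≤ t) (hlen : l₂.length ≤ N) :
    HL ((l₁ ++ k₀ :: l₂) ++ [s, t]) ((l₁ ++ k₀ :: l₂) ++ [t, s]) := by
  obtain ⟨u, k, v', he, hk, hfree, hlen'⟩ :=
    last_split_le (p := fun x => s < x ∧ x ≤ t) l₂ l₁ k₀ ⟨h1, h2⟩
  have hA' := hA v' (hlen'.trans hlen) k s t hk.1 hk.2 (fun x hx => by
    have := hfree x hx; by_cases h : x ≤ s
    · exact Or.inl h
    · exact Or.inr (by push_neg at this h; exact this h))
  rw [he]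
  exact hl_ctx' u [] (by simp) (by simp) hA'

/-- swap a pair `[s,t] → [t,s]` at the left end, before `l₁ ++ k₀ :: l₂`, where `k₀ ∈ [s,t)`. -/
lemma swapB {N} (hB : B1P N) (s t : Alph) (l₁ : List Alph) (k₀ : Alph) (l₂ : List Alph)
    (h1 : s ≤ k₀) (h2 : k₀ < t) (hlen : l₁.length ≤ N) :
    HL (s :: t :: (l₁ ++ k₀ :: l₂)) (t :: s :: (l₁ ++ k₀ :: l₂)) := by
  obtain ⟨u, k, v', he, hk, hfree, hlen'⟩ :=
    first_split_le (p := fun x => s ≤ x ∧ x < t) l₁ k₀ l₂ ⟨h1, h2⟩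
  have hB' := hB u (hlen'.trans hlen) k s t hk.1 hk.2 (fun x hx => by
    have := hfree x hx; by_cases h : x < s
    · exact Or.inl h
    · exact Or.inr (by push_neg at this h; exact this h))
  rw [he]
  exact hl_ctx' [] v' (by simp) (by simp) hB'

-- ===== bubble lemmas =====

/-- move `mov` leftwards over `lam` (all `≤ w`), using `B1`-swaps with witness `w`
occurring after `r₁`. -/
lemma bubbleB {N} (hB : B1P N) : ∀ (lam r₁ : List Alph) (w mov : Alph) (r₂ : List Alph),
    (∀ y ∈ lam, y ≤ w) → w < mov → lam.length + r₁.length ≤ N + 1 →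
    HL (lam ++ mov :: (r₁ ++ w :: r₂)) (mov :: (lam ++ (r₁ ++ w :: r₂))) := by
  intro lam
  induction lam using List.reverseRecOn with
  | nil => intro r₁ w mov r₂ _ _ _; exact hl_refl _
  | append_singleton lam y ih =>
    intro r₁ w mov r₂ hw hmov hlen
    have hy : y ≤ w := hw y (by simp)
    have hs : HL (y :: mov :: (r₁ ++ w :: r₂)) (mov :: y :: (r₁ ++ w :: r₂)) :=
      swapB hB y mov r₁ w r₂ hy hmov
        (by simp at hlen; omega)
    have step1 : HL ((lam ++ [y]) ++ mov :: (r₁ ++ w :: r₂)) (lam ++ mov :: ((y :: r₁) ++ w :: r₂)) :=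
      hl_ctx' lam [] (by simp) (by simp) hs
    have step2 := ih (y :: r₁) w mov r₂ (fun z hz => hw z (by simp [hz])) hmov
      (by simp at hlen ⊢; omega)
    refine hl_trans step1 (hl_trans step2 ?_)
    have : mov :: (lam ++ ((y :: r₁) ++ w :: r₂)) = mov :: ((lam ++ [y]) ++ (r₁ ++ w :: r₂)) := by simp
    rw [this]; exact hl_refl _

/-- move `mov` rightwards over `lam` (all `> w ≥ mov`), using `B1`-swaps with witness `w`
occurring after `r₁`. -/
lemma bubbleB2 {N} (hB : B1P N) : ∀ (lam : List Alph) (mov : Alph) (r₁ : List Alph) (w : Alph)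
    (r₂ : List Alph), (∀ y ∈ lam, w < y) → mov ≤ w → lam.length + r₁.length ≤ N + 1 →
    HL (mov :: (lam ++ (r₁ ++ w :: r₂))) (lam ++ mov :: (r₁ ++ w :: r₂)) := by
  intro lam
  induction lam with
  | nil => intro mov r₁ w r₂ _ _ _; exact hl_refl _
  | cons y lam ih =>
    intro mov r₁ w r₂ hy hmov hlen
    have hwy : w < y := hy y (by simp)
    have hs : HL (mov :: y :: ((lam ++ r₁) ++ w :: r₂)) (y :: mov :: ((lam ++ r₁) ++ w :: r₂)) :=
      swapB hB mov y (lam ++ r₁) w r₂ hmov hwy (by simp at hlen ⊢; omega)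
    have step1 : HL (mov :: ((y :: lam) ++ (r₁ ++ w :: r₂))) (y :: (mov :: (lam ++ (r₁ ++ w :: r₂)))) :=
      hl_ctx' [] [] (by simp) (by simp) hs
    have step2 := ih mov r₁ w r₂ (fun z hz => hy z (by simp [hz])) hmov (by simp at hlen ⊢; omega)
    refine hl_trans step1 ?_
    exact hl_ctx' [y] [] (by simp) (by simp) step2

/-- move `mov` leftwards over `lam` (all `≥ w > mov`), using `A1`-swaps with witness `w`
occurring before, after prefix `p₁`. -/
lemma bubbleA {N} (hA : A1P N) : ∀ (lam p₁ : List Alph) (w : Alph) (p₂ : List Alph) (mov : Alph)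
    (r : List Alph), (∀ y ∈ lam, w ≤ y) → mov < w → p₂.length + lam.length ≤ N + 1 →
    HL ((p₁ ++ w :: p₂) ++ (lam ++ mov :: r)) ((p₁ ++ w :: p₂) ++ (mov :: (lam ++ r))) := by
  intro lam
  induction lam using List.reverseRecOn with
  | nil => intro p₁ w p₂ mov r _ _ _; exact hl_refl _
  | append_singleton lam z ih =>
    intro p₁ w p₂ mov r hz hmov hlen
    have hwz : w ≤ z := hz z (by simp)
    have hmz : mov < z := lt_of_lt_of_le hmov hwz
    have hs : HL ((p₁ ++ w :: (p₂ ++ lam)) ++ [mov, z]) ((p₁ ++ w :: (p₂ ++ lam)) ++ [z, mov]) :=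
      swapA hA p₁ w (p₂ ++ lam) mov z hmov hwz (by simp at hlen ⊢; omega)
    have step1 : HL ((p₁ ++ w :: p₂) ++ ((lam ++ [z]) ++ mov :: r))
        ((p₁ ++ w :: p₂) ++ (lam ++ mov :: (z :: r))) :=
      hl_ctx' [] r (by simp) (by simp) (hl_symm hs)
    have step2 := ih p₁ w p₂ mov (z :: r) (fun u hu => hz u (by simp [hu])) hmov
      (by simp at hlen ⊢; omega)
    refine hl_trans step1 (hl_trans step2 ?_)
    have : (p₁ ++ w :: p₂) ++ (mov :: (lam ++ z :: r)) = (p₁ ++ w :: p₂) ++ (mov :: ((lam ++ [z]) ++ r)) := by simp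
    rw [this]; exact hl_refl _

lemma hl_cast {a b a' b' : List Alph} (h : HL a b) (ha : a = a') (hb : b = b') : HL a' b' :=
  ha ▸ hb ▸ h

-- ===== master induction =====

theorem master : ∀ N : ℕ, A1P N ∧ B1P N ∧ G3P N ∧ G4P N := by
  intro N
  induction N with
  | zero =>
    refine ⟨?_, ?_, ?_, ?_⟩
    · intro v hv k s t h1 h2 _
      rw [Nat.le_zero, List.length_eq_zero_iff] at hv; subst hv
      exact r2 h1 h2
    · intro v hv k s t h1 h2 _
      rw [Nat.le_zero, List.length_eq_zero_iff] at hv; subst hv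
      exact r1 h1 h2
    · intro v hv a b c d h1 h2 h3
      rw [Nat.le_zero, List.length_eq_zero_iff] at hv; subst hv
      exact r3 h1 h2 h3
    · intro v hv a b c d h1 h2 h3
      rw [Nat.le_zero, List.length_eq_zero_iff] at hv; subst hv
      exact r4 h1 h2 h3
  | succ n ih =>
    obtain ⟨hA, hB, hG3, hG4⟩ := ih
    -- A1 at level n+1
    have hA' : A1P (n + 1) := by
      intro v hv k s t h1 h2 hfree
      cases v with
      | nil => exact hA [] (by simp) k s t h1 h2 (by simp)
      | cons e vp =>
        have hvp : vp.length ≤ n := by simp at hv; omega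
        rcases hfree e (by simp) with hes | hte
        · -- e ≤ s
          have step1 : HL (k :: (e :: vp ++ [s, t])) (e :: k :: (vp ++ [s, t])) :=
            hl_cast (hl_symm (swapB hB e k vp s [t] hes h1 hvp)) (by simp) (by simp)
          have step2 : HL (e :: k :: (vp ++ [s, t])) (k :: (e :: vp ++ [t, s])) :=
            hl_cast (hl_symm (hG3 vp hvp e s k t hes h1 h2)) (by simp) (by simp)
          exact hl_trans step1 step2
        · -- t < e
          have step1 : HL (k :: (e :: vp ++ [s, t])) (e :: k :: (vp ++ [t, s])) :=
            hl_cast (hG4 vp hvp s k t e h1 h2 hte) (by simp) (by simp)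
          have step2 : HL (e :: k :: (vp ++ [t, s])) (k :: (e :: vp ++ [t, s])) :=
            hl_cast (hl_symm (swapB hB k e vp t [s] h2 hte hvp)) (by simp) (by simp)
          exact hl_trans step1 step2
    -- B1 at level n+1
    have hB' : B1P (n + 1) := by
      intro v hv k s t h1 h2 hfree
      rcases List.eq_nil_or_concat v with rfl | ⟨vpp, f, rfl⟩
      · exact hB [] (by simp) k s t h1 h2 (by simp)
      · have hvpp : vpp.length ≤ n := by simp at hv; omega
        rcases hfree f (by simp) with hfs | htf
        · -- f < s
          have step1 : HL (s :: t :: (vpp.concat f ++ [k])) (t :: s :: (vpp ++ [k, f])) :=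
            hl_cast (hG4 vpp hvpp f s k t hfs h1 h2) (by simp) (by simp)
          have step2 : HL (t :: s :: (vpp ++ [k, f])) (t :: s :: (vpp.concat f ++ [k])) :=
            hl_cast (hl_symm (swapA hA [t] s vpp f k hfs h1 hvpp)) (by simp) (by simp)
          exact hl_trans step1 step2
        · -- t ≤ f
          have step1 : HL (s :: t :: (vpp.concat f ++ [k])) (s :: t :: (vpp ++ [k, f])) :=
            hl_cast (hl_symm (swapA hA [s] t vpp k f h2 htf hvpp)) (by simp) (by simp)
          have step2 : HL (s :: t :: (vpp ++ [k, f])) (t :: s :: (vpp.concat f ++ [k])) :=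
            hl_cast (hl_symm (hG3 vpp hvpp s k t f h1 h2 htf)) (by simp) (by simp)
          exact hl_trans step1 step2
    -- G4 at level n+1
    have hG4' : G4P (n + 1) := by
      intro u hu a b c d h1 h2 h3
      have hbd : b < d := lt_of_le_of_lt h2 h3
      have hac : a < c := lt_of_lt_of_le h1 h2
      by_cases hmid : ∃ y ∈ u, a < y ∧ y ≤ c
      · obtain ⟨y, hyu, hy⟩ := hmid
        obtain ⟨u₁, u₂, rfl⟩ := List.append_of_mem hyu
        have d1 : HL (b :: d :: ((u₁ ++ y :: u₂) ++ [a, c])) (b :: d :: ((u₁ ++ y :: u₂) ++ [c, a])) :=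
          hl_cast (swapA hA' (b :: d :: u₁) y u₂ a c hy.1 hy.2 (by simp at hu ⊢; omega))
            (by simp) (by simp)
        have d2 : HL (b :: d :: ((u₁ ++ y :: u₂) ++ [c, a])) (d :: b :: ((u₁ ++ y :: u₂) ++ [c, a])) :=
          hl_cast (swapB hB' b d (u₁ ++ y :: u₂) c [a] h2 h3 (by simp at hu ⊢; omega))
            (by simp) (by simp)
        exact hl_trans d1 d2
      · by_cases hlow : ∃ y ∈ u, y ≤ a
        · obtain ⟨y₀, hy₀u, hy₀⟩ := hlow
          obtain ⟨w₁, w₂, hw⟩ := List.append_of_mem hy₀u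
          obtain ⟨u₁, l, u₂, heq, hla, hfree₁, _⟩ :=
            first_split_le (p := fun z => z ≤ a) w₁ y₀ w₂ hy₀
          rw [hw, heq] at hu ⊢
          rw [hw, heq] at hmid
          have hu₁ : ∀ z ∈ u₁, c < z := by
            intro z hz
            by_contra hzc
            push_neg at hzc
            rcases le_or_gt z a with hza | haz
            · exact hfree₁ z hz hza
            · exact hmid ⟨z, by simp [hz], haz, hzc⟩
          have hlb : l < b := lt_of_le_of_lt hla h1
          have hlc : l ≤ c := le_trans hla (le_of_lt hac)
          have hlen12 : u₁.length + u₂.length ≤ n := by simp at hu; omega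
          have s1 : HL (b :: d :: ((u₁ ++ l :: u₂) ++ [a, c]))
              (b :: d :: l :: (u₁ ++ (u₂ ++ [a, c]))) :=
            hl_cast (bubbleA hA' u₁ [] b [d] l (u₂ ++ [a, c])
              (fun z hz => le_trans h2 (le_of_lt (hu₁ z hz))) hlb (by simp; omega))
              (by simp) (by simp)
          have s2 : HL (b :: d :: l :: (u₁ ++ (u₂ ++ [a, c])))
              (b :: l :: d :: (u₁ ++ (u₂ ++ [a, c]))) :=
            hl_cast (hl_ctx [] (u₁ ++ (u₂ ++ [a, c]))
              (hl_symm (hA' [] (by simp) b l d hlb (le_of_lt hbd) (by simp))))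
              (by simp) (by simp)
          have s3 : HL (b :: l :: d :: (u₁ ++ (u₂ ++ [a, c])))
              (l :: b :: d :: (u₁ ++ (u₂ ++ [a, c]))) :=
            hl_cast (hl_symm (swapB hB' l b (d :: u₁ ++ u₂) a [c] hla h1
              (by simp; omega))) (by simp) (by simp)
          have s4 : HL (l :: b :: d :: (u₁ ++ (u₂ ++ [a, c])))
              (l :: d :: b :: (u₁ ++ (u₂ ++ [c, a]))) :=
            hl_cast (hl_ctx [l] [] (hG4 (u₁ ++ u₂) (by simpa using hlen12) a b c d h1 h2 h3))
              (by simp) (by simp)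
          have s5 : HL (l :: d :: b :: (u₁ ++ (u₂ ++ [c, a])))
              (d :: l :: b :: (u₁ ++ (u₂ ++ [c, a]))) :=
            hl_cast (hl_ctx [] (u₁ ++ (u₂ ++ [c, a]))
              (hB' [] (by simp) b l d (le_of_lt hlb) hbd (by simp)))
              (by simp) (by simp)
          have s6 : HL (d :: l :: b :: (u₁ ++ (u₂ ++ [c, a])))
              (d :: b :: l :: (u₁ ++ (u₂ ++ [c, a]))) :=
            hl_cast (hl_ctx [d] [] (swapB hB' l b (u₁ ++ u₂ ++ [c]) a [] hla h1
              (by simp; omega))) (by simp) (by simp)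
          have s7 : HL (d :: b :: l :: (u₁ ++ (u₂ ++ [c, a])))
              (d :: b :: ((u₁ ++ l :: u₂) ++ [c, a])) :=
            hl_cast (hl_ctx [d, b] [] (bubbleB2 hB' u₁ l u₂ c [a] hu₁ hlc (by omega)))
              (by simp) (by simp)
          exact hl_trans s1 (hl_trans s2 (hl_trans s3 (hl_trans s4 (hl_trans s5 (hl_trans s6 s7)))))
        · have hhigh : ∀ z ∈ u, c < z := by
            intro z hz
            by_contra hzc
            push_neg at hzc
            rcases le_or_gt z a with hza | haz
            · exact hlow ⟨z, hz, hza⟩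
            · exact hmid ⟨z, hz, haz, hzc⟩
          rcases List.eq_nil_or_concat u with rfl | ⟨up, x, rfl⟩
          · exact hl_cast (r4 h1 h2 h3) (by simp) (by simp)
          · have hcx : c < x := hhigh x (by simp)
            have hup : up.length ≤ n := by simp at hu; omega
            rcases lt_or_ge x d with hxd | hdx
            · have t1 : HL (b :: d :: ((up ++ [x]) ++ [a, c]))
                  (b :: d :: (up ++ [a, x, c])) :=
                hl_cast (hl_ctx [] [c]
                  (hl_symm (swapA hA' [] b (d :: up) a x h1 (le_trans h2 (le_of_lt hcx))
                    (by simp; omega)))) (by simp) (by simp)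
              have t2 : HL (b :: d :: (up ++ [a, x, c]))
                  (d :: b :: (up ++ [x, a, c])) :=
                hl_cast (hl_ctx [] [c]
                  (hG4 up hup a b x d h1 (le_trans h2 (le_of_lt hcx)) hxd))
                  (by simp) (by simp)
              have t3 : HL (d :: b :: (up ++ [x, a, c]))
                  (d :: b :: ((up ++ [x]) ++ [c, a])) :=
                hl_cast (swapA hA' [d] b (up ++ [x]) a c h1 h2 (by simp; omega))
                  (by simp) (by simp)
              exact hl_cast (hl_trans t1 (hl_trans t2 t3)) (by simp) (by simp)
            · have u1 : HL (b :: d :: ((up ++ [x]) ++ [a, c]))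
                  (b :: d :: (up ++ [a, x, c])) :=
                hl_cast (hl_ctx (b :: d :: up) []
                  (hl_symm (r1 (le_of_lt hac) hcx))) (by simp) (by simp)
              have u2 : HL (b :: d :: (up ++ [a, x, c]))
                  (b :: d :: (up ++ [a, c, x])) :=
                hl_cast (hl_ctx [] []
                  (hl_symm (swapA hA' [b] d (up ++ [a]) c x h3 hdx (by simp; omega))))
                  (by simp) (by simp)
              have u3 : HL (b :: d :: (up ++ [a, c, x]))
                  (d :: b :: (up ++ [c, a, x])) :=
                hl_cast (hl_ctx [] [x]
                  (hG4 up hup a b c d h1 h2 h3)) (by simp) (by simp)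
              have u4 : HL (d :: b :: (up ++ [c, a, x]))
                  (d :: b :: (up ++ [c, x, a])) :=
                hl_cast (hl_ctx (d :: b :: up) []
                  (hA' [] (by simp) c a x hac (le_trans (le_of_lt h3) hdx) (by simp)))
                  (by simp) (by simp)
              have u5 : HL (d :: b :: (up ++ [c, x, a]))
                  (d :: b :: ((up ++ [x]) ++ [c, a])) :=
                hl_cast (hl_ctx [] [a]
                  (swapA hA' [] d (b :: up) c x h3 hdx (by simp; omega)))
                  (by simp) (by simp)
              exact hl_cast (hl_trans u1 (hl_trans u2 (hl_trans u3 (hl_trans u4 u5)))) (by simp) (by simp)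
    -- G3 at level n+1
    have hG3' : G3P (n + 1) := by
      intro v hv a b c d h1 h2 h3
      have hac : a < c := lt_of_le_of_lt h1 h2
      have hbd : b < d := lt_of_lt_of_le h2 h3
      rcases List.eq_nil_or_concat v with rfl | ⟨vpp, x, rfl⟩
      · exact hl_cast (r3 h1 h2 h3) (by simp) (by simp)
      · have hvpp : vpp.length ≤ n := by simp at hv; omega
        rcases lt_or_ge d x with hdx | hxd
        · -- x > d : take the first letter of v exceeding d
          obtain ⟨lam, h, v₁, heq, hdh, hfree₁, _⟩ :=
            first_split_le (p := fun z => d < z) vpp x [] hdx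
          have hlam : ∀ y ∈ lam, y ≤ d := fun y hy => le_of_not_gt (hfree₁ y hy)
          have hlen1 : lam.length + v₁.length ≤ n := by
            have := congrArg List.length heq
            simp at this; omega
          have hch : c ≤ h := le_trans h3 (le_of_lt hdh)
          have heq' : vpp.concat x = lam ++ h :: v₁ := by simpa using heq
          rw [heq']
          have g1 : HL (c :: a :: ((lam ++ h :: v₁) ++ [d, b]))
              (c :: a :: h :: (lam ++ (v₁ ++ [d, b]))) :=
            hl_cast (hl_ctx [c, a] []
              (bubbleB hB' lam v₁ d h [b] hlam hdh (by omega))) (by simp) (by simp)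
          have g2 : HL (c :: a :: h :: (lam ++ (v₁ ++ [d, b])))
              (c :: h :: a :: (lam ++ (v₁ ++ [d, b]))) :=
            hl_cast (hl_ctx [] (lam ++ (v₁ ++ [d, b]))
              (hA' [] (by simp) c a h hac hch (by simp))) (by simp) (by simp)
          have g3 : HL (c :: h :: a :: (lam ++ (v₁ ++ [d, b])))
              (h :: c :: a :: (lam ++ (v₁ ++ [d, b]))) :=
            hl_cast (swapB hB' c h (a :: (lam ++ v₁)) d [b] h3 hdh (by simp; omega))
              (by simp) (by simp)
          have g4 : HL (h :: c :: a :: (lam ++ (v₁ ++ [d, b])))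
              (h :: a :: c :: (lam ++ (v₁ ++ [b, d]))) :=
            hl_cast (hl_ctx [h] []
              (hG3 (lam ++ v₁) (by simpa using hlen1) a b c d h1 h2 h3))
              (by simp) (by simp)
          have g5 : HL (h :: a :: c :: (lam ++ (v₁ ++ [b, d])))
              (a :: h :: c :: (lam ++ (v₁ ++ [b, d]))) :=
            hl_cast (hl_ctx [] (lam ++ (v₁ ++ [b, d]))
              (hl_symm (hB' [] (by simp) c a h (le_of_lt hac) (lt_of_le_of_lt h3 hdh) (by simp))))
              (by simp) (by simp)
          have g6 : HL (a :: h :: c :: (lam ++ (v₁ ++ [b, d])))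
              (a :: c :: h :: (lam ++ (v₁ ++ [b, d]))) :=
            hl_cast (hl_ctx [a] []
              (hl_symm (swapB hB' c h (lam ++ v₁ ++ [b]) d [] h3 hdh (by simp; omega))))
              (by simp) (by simp)
          have g7 : HL (a :: c :: h :: (lam ++ (v₁ ++ [b, d])))
              (a :: c :: ((lam ++ h :: v₁) ++ [b, d])) :=
            hl_cast (hl_ctx [a, c] []
              (hl_symm (bubbleB hB' lam (v₁ ++ [b]) d h [] hlam hdh (by simp; omega))))
              (by simp) (by simp)
          exact hl_trans g1 (hl_trans g2 (hl_trans g3 (hl_trans g4 (hl_trans g5 (hl_trans g6 g7)))))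
        · rcases lt_or_ge b x with hbx | hxb
          · -- b < x ≤ d
            have m1 : HL (c :: a :: (vpp.concat x ++ [d, b]))
                (c :: a :: (vpp ++ [x, b, d])) :=
              hl_cast (hl_ctx (c :: a :: vpp) [] (hl_symm (r2 hbx hxd)))
                (by simp) (by simp)
            have m2 : HL (c :: a :: (vpp ++ [x, b, d]))
                (a :: c :: (vpp.concat x ++ [b, d])) :=
              hl_cast (hl_symm (swapB hB' a c (vpp ++ [x]) b [d] h1 h2 (by simp; omega)))
                (by simp) (by simp)
            exact hl_trans m1 m2
          · rcases le_or_gt a x with hax | hxa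
            · -- a ≤ x ≤ b
              have n1 : HL (c :: a :: (vpp.concat x ++ [d, b]))
                  (c :: a :: (vpp ++ [d, x, b])) :=
                hl_cast (hl_ctx (c :: a :: vpp) [] (r1 hxb hbd)) (by simp) (by simp)
              have n2 : HL (c :: a :: (vpp ++ [d, x, b]))
                  (a :: c :: (vpp ++ [x, d, b])) :=
                hl_cast (hl_ctx [] [b]
                  (hG3 vpp hvpp a x c d hax (lt_of_le_of_lt hxb h2) h3))
                  (by simp) (by simp)
              have n3 : HL (a :: c :: (vpp ++ [x, d, b]))
                  (a :: c :: (vpp.concat x ++ [b, d])) :=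
                hl_cast (hl_symm (swapA hA' [a] c (vpp ++ [x]) b d h2 h3 (by simp; omega)))
                  (by simp) (by simp)
              exact hl_trans n1 (hl_trans n2 n3)
            · -- x < a
              have had : a ≤ d := le_trans (le_of_lt hac) h3
              have p1 : HL (c :: a :: (vpp.concat x ++ [d, b]))
                  (c :: a :: (vpp ++ [d, x, b])) :=
                hl_cast (hl_ctx [] [b]
                  (swapA hA' [c] a vpp x d hxa had (by omega)))
                  (by simp) (by simp)
              have p2 : HL (c :: a :: (vpp ++ [d, x, b]))
                  (c :: a :: (vpp ++ [d, b, x]))  :=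
                hl_cast (swapA hA' [c] a (vpp ++ [d]) x b hxa h1 (by simp; omega))
                  (by simp) (by simp)
              have p3 : HL (c :: a :: (vpp ++ [d, b, x]))
                  (a :: c :: (vpp ++ [b, d, x])) :=
                hl_cast (hl_ctx [] [x] (hG3 vpp hvpp a b c d h1 h2 h3))
                  (by simp) (by simp)
              have p4 : HL (a :: c :: (vpp ++ [b, d, x]))
                  (a :: c :: (vpp ++ [b, x, d])) :=
                hl_cast (hl_ctx (a :: c :: vpp) []
                  (hl_symm (hA' [] (by simp) b x d (lt_of_lt_of_le hxa h1)
                    (le_trans (le_of_lt h2) h3) (by simp))))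
                  (by simp) (by simp)
              have p5 : HL (a :: c :: (vpp ++ [b, x, d]))
                  (a :: c :: (vpp.concat x ++ [b, d])) :=
                hl_cast (hl_ctx [] [d]
                  (hl_symm (swapA hA' [] a (c :: vpp) x b hxa h1 (by simp; omega))))
                  (by simp) (by simp)
              exact hl_trans p1 (hl_trans p2 (hl_trans p3 (hl_trans p4 p5)))
    exact ⟨hA', hB', hG3', hG4'⟩

-- ===== unrestricted swap lemmas =====

lemma swapAall (l₁ : List Alph) (k₀ : Alph) (l₂ : List Alph) (s t : Alph)
    (h1 : s < k₀) (h2 : k₀ ≤ t) :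
    HL ((l₁ ++ k₀ :: l₂) ++ [s, t]) ((l₁ ++ k₀ :: l₂) ++ [t, s]) :=
  swapA (master l₂.length).1 l₁ k₀ l₂ s t h1 h2 le_rfl

lemma swapBall (s t : Alph) (l₁ : List Alph) (k₀ : Alph) (l₂ : List Alph)
    (h1 : s ≤ k₀) (h2 : k₀ < t) :
    HL (s :: t :: (l₁ ++ k₀ :: l₂)) (t :: s :: (l₁ ++ k₀ :: l₂)) :=
  swapB (master l₁.length).2.1 s t l₁ k₀ l₂ h1 h2 le_rfl

-- ===== generic adjacent swaps with a witness =====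

def SwapCond (x y : Alph) (pre suf : List Alph) : Prop :=
  x = y ∨ (∃ k ∈ pre, min x y < k ∧ k ≤ max x y) ∨ (∃ k ∈ suf, min x y ≤ k ∧ k < max x y)

lemma swapcond_mono {x y : Alph} {pre suf pre' suf' : List Alph}
    (hp : ∀ z ∈ pre, z ∈ pre') (hs : ∀ z ∈ suf, z ∈ suf') (h : SwapCond x y pre suf) :
    SwapCond x y pre' suf' := by
  rcases h with h | ⟨k, hk, h1, h2⟩ | ⟨k, hk, h1, h2⟩
  · exact Or.inl h
  · exact Or.inr (Or.inl ⟨k, hp k hk, h1, h2⟩)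
  · exact Or.inr (Or.inr ⟨k, hs k hk, h1, h2⟩)

lemma swapAtomLt (pre suf : List Alph) (x y : Alph) (hxy : x < y)
    (h : (∃ k ∈ pre, x < k ∧ k ≤ y) ∨ (∃ k ∈ suf, x ≤ k ∧ k < y)) :
    HL (pre ++ x :: y :: suf) (pre ++ y :: x :: suf) := by
  rcases h with ⟨k, hk, h1, h2⟩ | ⟨k, hk, h1, h2⟩
  · obtain ⟨p₁, p₂, rfl⟩ := List.append_of_mem hk
    exact hl_cast (hl_ctx [] suf (swapAall p₁ k p₂ x y h1 h2)) (by simp) (by simp)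
  · obtain ⟨s₁, s₂, rfl⟩ := List.append_of_mem hk
    exact hl_cast (hl_ctx pre [] (swapBall x y s₁ k s₂ h1 h2)) (by simp) (by simp)

lemma swapAtom (pre suf : List Alph) (x y : Alph) (h : SwapCond x y pre suf) :
    HL (pre ++ x :: y :: suf) (pre ++ y :: x :: suf) := by
  rcases lt_trichotomy x y with hxy | rfl | hyx
  · refine swapAtomLt pre suf x y hxy ?_
    rcases h with h | ⟨k, hk, h1, h2⟩ | ⟨k, hk, h1, h2⟩
    · exact absurd h (ne_of_lt hxy)
    · exact Or.inl ⟨k, hk, by rwa [min_eq_left (le_of_lt hxy)] at h1,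
        by rwa [max_eq_right (le_of_lt hxy)] at h2⟩
    · exact Or.inr ⟨k, hk, by rwa [min_eq_left (le_of_lt hxy)] at h1,
        by rwa [max_eq_right (le_of_lt hxy)] at h2⟩
  · exact hl_refl _
  · refine hl_symm (swapAtomLt pre suf y x hyx ?_)
    rcases h with h | ⟨k, hk, h1, h2⟩ | ⟨k, hk, h1, h2⟩
    · exact absurd h.symm (ne_of_lt hyx)
    · exact Or.inl ⟨k, hk, by rwa [min_eq_right (le_of_lt hyx)] at h1,
        by rwa [max_eq_left (le_of_lt hyx)] at h2⟩
    · exact Or.inr ⟨k, hk, by rwa [min_eq_right (le_of_lt hyx)] at h1,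
        by rwa [max_eq_left (le_of_lt hyx)] at h2⟩

-- ===== block commutation =====

lemma moveRight : ∀ (Q : List Alph) (p : Alph) (pre suf : List Alph),
    (∀ q ∈ Q, SwapCond p q pre suf) →
    HL (pre ++ p :: (Q ++ suf)) (pre ++ (Q ++ p :: suf)) := by
  intro Q
  induction Q with
  | nil => intro p pre suf _; exact hl_refl _
  | cons q Q ih =>
    intro p pre suf hcond
    have step1 : HL (pre ++ p :: (q :: Q ++ suf)) (pre ++ q :: p :: (Q ++ suf)) :=
      hl_cast (swapAtom pre (Q ++ suf) p q
        (swapcond_mono (fun z hz => hz) (fun z hz => by simp [hz])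
          (hcond q (by simp)))) (by simp) (by simp)
    have step2 : HL ((pre ++ [q]) ++ p :: (Q ++ suf)) ((pre ++ [q]) ++ (Q ++ p :: suf)) :=
      ih p (pre ++ [q]) suf (fun q' hq' =>
        swapcond_mono (fun z hz => by simp [hz]) (fun z hz => hz) (hcond q' (by simp [hq'])))
    exact hl_trans step1 (hl_cast step2 (by simp) (by simp))

lemma blockComm : ∀ (P Q pre suf : List Alph),
    (∀ p ∈ P, ∀ q ∈ Q, SwapCond p q pre suf) →
    HL (pre ++ (P ++ (Q ++ suf))) (pre ++ (Q ++ (P ++ suf))) := by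
  intro P
  induction P using List.reverseRecOn with
  | nil => intro Q pre suf _; exact hl_refl _
  | append_singleton P p ih =>
    intro Q pre suf hcond
    have step1 : HL ((pre ++ P) ++ p :: (Q ++ suf)) ((pre ++ P) ++ (Q ++ p :: suf)) :=
      moveRight Q p (pre ++ P) suf (fun q hq =>
        swapcond_mono (fun z hz => by simp [hz]) (fun z hz => hz)
          (hcond p (by simp) q hq))
    have step2 : HL (pre ++ (P ++ (Q ++ (p :: suf)))) (pre ++ (Q ++ (P ++ (p :: suf)))) :=
      ih Q pre (p :: suf) (fun p' hp' q hq =>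
        swapcond_mono (fun z hz => hz) (fun z hz => by simp [hz])
          (hcond p' (by simp [hp']) q hq))
    have step1' : HL (pre ++ ((P ++ [p]) ++ (Q ++ suf))) (pre ++ (P ++ (Q ++ (p :: suf)))) :=
      hl_cast step1 (by simp) (by simp)
    have step2' : HL (pre ++ (P ++ (Q ++ (p :: suf)))) (pre ++ (Q ++ ((P ++ [p]) ++ suf))) :=
      hl_cast step2 (by simp) (by simp)
    exact hl_trans step1' step2'

-- ===== the three identities at the level of the congruence =====

lemma hypoCon_of_HL {u v : FreeMonoid Alph} (h : HL u.toList v.toList) : hypoCon u v := by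
  unfold HL at h
  rwa [FreeMonoid.ofList_toList, FreeMonoid.ofList_toList] at h

lemma swapcond_of_mem {p q : Alph} {pre suf : List Alph}
    (hp : p ∈ suf) (hq : q ∈ suf) : SwapCond p q pre suf := by
  rcases eq_or_ne p q with rfl | hne
  · exact Or.inl rfl
  · rcases le_total p q with h | h
    · exact Or.inr (Or.inr ⟨p, hp, by simp [min_le_left], by
        rw [max_eq_right h]; exact lt_of_le_of_ne h hne⟩)
    · exact Or.inr (Or.inr ⟨q, hq, by simp [min_le_right], by
        rw [max_eq_left h]; exact lt_of_le_of_ne h (Ne.symm hne)⟩)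

lemma swapcond_of_mem' {p q : Alph} {pre suf : List Alph}
    (hp : p ∈ pre) (hq : q ∈ pre) : SwapCond p q pre suf := by
  rcases eq_or_ne p q with rfl | hne
  · exact Or.inl rfl
  · rcases le_total p q with h | h
    · exact Or.inr (Or.inl ⟨q, hq, by rw [min_eq_left h]; exact lt_of_le_of_ne h hne, by
        simp [le_max_right]⟩)
    · exact Or.inr (Or.inl ⟨p, hp, by rw [min_eq_right h]; exact lt_of_le_of_ne h (Ne.symm hne),
        by simp [le_max_left]⟩)

lemma swapcond_of_both {p q : Alph} {pre suf : List Alph}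
    (hp1 : p ∈ pre) (hp2 : p ∈ suf) : SwapCond p q pre suf := by
  rcases lt_trichotomy p q with h | rfl | h
  · exact Or.inr (Or.inr ⟨p, hp2, by simp [min_le_left], by rwa [max_eq_right (le_of_lt h)]⟩)
  · exact Or.inl rfl
  · exact Or.inr (Or.inl ⟨p, hp1, by rwa [min_eq_right (le_of_lt h)], by simp [le_max_left]⟩)

lemma idL (X Y Z T : FreeMonoid Alph) : hypoCon (X * Y * Z * X * T * Y) (Y * X * Z * X * T * Y) := by
  apply hypoCon_of_HL
  have h := blockComm X.toList Y.toList []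
    (Z.toList ++ (X.toList ++ (T.toList ++ Y.toList)))
    (fun p hp q hq => swapcond_of_mem (by simp [hp]) (by simp [hq]))
  exact hl_cast h (by simp [FreeMonoid.toList_mul]) (by simp [FreeMonoid.toList_mul])

lemma idM (X Y Z T : FreeMonoid Alph) : hypoCon (X * Z * X * Y * T * X) (X * Z * Y * X * T * X) := by
  apply hypoCon_of_HL
  have h := blockComm X.toList Y.toList (X.toList ++ Z.toList) (T.toList ++ X.toList)
    (fun p hp q hq => swapcond_of_both (by simp [hp]) (by simp [hp]))
  exact hl_cast h (by simp [FreeMonoid.toList_mul]) (by simp [FreeMonoid.toList_mul])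

lemma idR (X Y Z T : FreeMonoid Alph) : hypoCon (X * Z * Y * T * X * Y) (X * Z * Y * T * Y * X) := by
  apply hypoCon_of_HL
  have h := blockComm X.toList Y.toList
    (X.toList ++ (Z.toList ++ (Y.toList ++ T.toList))) []
    (fun p hp q hq => swapcond_of_mem' (by simp [hp]) (by simp [hq]))
  exact hl_cast h (by simp [FreeMonoid.toList_mul]) (by simp [FreeMonoid.toList_mul])

/-- For distinct variables `x, y, z, t`, the hypoplactic monoid satisfies the three
nontrivial identities (L) `xyzxty ≈ yxzxty`, (M) `xzxytx ≈ xzyxtx` and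
(R) `xzytxy ≈ xzytyx`. -/
theorem hypo_satisfies_LMR {X : Type*} (x y z t : X)
    (hxy : x ≠ y) (hxz : x ≠ z) (hxt : x ≠ t) (hyz : y ≠ z) (hyt : y ≠ t)
    (hzt : z ≠ t) :
    (MSatisfies Hypo (of x * of y * of z * of x * of t * of y)
        (of y * of x * of z * of x * of t * of y) ∧
      of x * of y * of z * of x * of t * of y ≠
        of y * of x * of z * of x * of t * of y) ∧
    (MSatisfies Hypo (of x * of z * of x * of y * of t * of x)
        (of x * of z * of y * of x * of t * of x) ∧
      of x * of z * of x * of y * of t * of x ≠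
        of x * of z * of y * of x * of t * of x) ∧
    (MSatisfies Hypo (of x * of z * of y * of t * of x * of y)
        (of x * of z * of y * of t * of y * of x) ∧
      of x * of z * of y * of t * of x * of y ≠
        of x * of z * of y * of t * of y * of x) := by
  refine ⟨⟨?_, ?_⟩, ⟨?_, ?_⟩, ⟨?_, ?_⟩⟩
  · intro ψ
    obtain ⟨A, hA⟩ := Con.mk'_surjective (ψ (of x))
    obtain ⟨B, hB⟩ := Con.mk'_surjective (ψ (of y))
    obtain ⟨C, hC⟩ := Con.mk'_surjective (ψ (of z))
    obtain ⟨D, hD⟩ := Con.mk'_surjective (ψ (of t))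
    simp only [map_mul]
    rw [← hA, ← hB, ← hC, ← hD]
    simp only [← map_mul]
    exact (hypoCon.eq).mpr (idL A B C D)
  · intro h
    have h2 := congrArg FreeMonoid.toList h
    simp [FreeMonoid.toList_mul, FreeMonoid.toList_of] at h2
    tauto
  · intro ψ
    obtain ⟨A, hA⟩ := Con.mk'_surjective (ψ (of x))
    obtain ⟨B, hB⟩ := Con.mk'_surjective (ψ (of y))
    obtain ⟨C, hC⟩ := Con.mk'_surjective (ψ (of z))
    obtain ⟨D, hD⟩ := Con.mk'_surjective (ψ (of t))
    simp only [map_mul]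
    rw [← hA, ← hB, ← hC, ← hD]
    simp only [← map_mul]
    exact (hypoCon.eq).mpr (idM A B C D)
  · intro h
    have h2 := congrArg FreeMonoid.toList h
    simp [FreeMonoid.toList_mul, FreeMonoid.toList_of] at h2
    tauto
  · intro ψ
    obtain ⟨A, hA⟩ := Con.mk'_surjective (ψ (of x))
    obtain ⟨B, hB⟩ := Con.mk'_surjective (ψ (of y))
    obtain ⟨C, hC⟩ := Con.mk'_surjective (ψ (of z))
    obtain ⟨D, hD⟩ := Con.mk'_surjective (ψ (of t))
    simp only [map_mul]
    rw [← hA, ← hB, ← hC, ← hD]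
    simp only [← map_mul]
    exact (hypoCon.eq).mpr (idR A B C D)
  · intro h
    have h2 := congrArg FreeMonoid.toList h
    simp [FreeMonoid.toList_mul, FreeMonoid.toList_of] at h2
    tauto
end

section
/- A nontrivial identity u ≈ v over the two-letter alphabet of variables {x, y} is satisfied by the hypoplactic monoid hypo if and only if it is balanced and neither u nor v is of the form x^a y^b or y^b x^a for some natural numbers a, b. -/
open FreeMonoid

/-!
The hypoplactic congruence is captured by invariants: `u ≡ v` exactly when `u` and `v` have the
same content and, for every pair of letters `a < b`, some `b` precedes some `a` in `u` iff it does
in `v`. These data are preserved by the defining relations as long as only pairs with no letter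
of `u` strictly between them are considered. Conversely, if `x` is the largest letter of `w`, `m`
its multiplicity and `w'` the word `w` with every `x` deleted, then `w ≡ x^m w'` or `w ≡ w' x^m`:
once the `x`'s are gathered into one block, the block moves left past a letter `c` as soon as some
letter `≥ c` follows it, and right past letters dominated by a larger letter in front of them.
Which of the two forms occurs is read off from the invariant at the pair (largest letter of `w'`,
`x`), so induction on `w'` shows that the invariants determine the class.

For a two-variable identity, the invariants of a substitution instance `g(u)` depend only on the
content of `u` and on which of `xx`, `xy`, `yx`, `yy` occur as subsequences of `u`. Substituting
the letters `1 < 2` for `x, y` (in either order) shows that an identity satisfied by `hypo` is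
balanced and that `xy` and `yx` occur in `u` iff in `v`; since a word avoiding `yx` is `x^a y^b`,
and a balanced identity between two such words is trivial, both must occur in both sides.
Conversely, under these conditions every substitution instance has equal invariants.
-/

namespace Hypoplactic

open List

theorem exists_append_cons_notMem {α : Type*} [DecidableEq α] {x : α} {w : List α} (hx : x ∈ w) :
    ∃ A R, w = A ++ x :: R ∧ x ∉ A := by
  induction w with
  | nil => simp at hx
  | cons a w ih =>
    by_cases hax : a = x
    · exact ⟨[], w, by rw [hax]; rfl, by simp⟩
    · obtain ⟨A, R, rfl, hA⟩ := ih ((mem_cons.1 hx).resolve_left (Ne.symm hax))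
      exact ⟨a :: A, R, rfl, by simp [hA, Ne.symm hax]⟩

section LinearOrder

variable {α : Type*} [LinearOrder α]

theorem exists_append_of_head_ge (u : List α) (γ : α) :
    ∃ P Q, u = P ++ Q ∧ (∀ a ∈ P, a < γ) ∧ ∀ q ∈ Q.head?, γ ≤ q := by
  induction u with
  | nil => exact ⟨[], [], rfl, by simp, by simp⟩
  | cons a u ih =>
    rcases le_or_gt γ a with h | h
    · exact ⟨[], a :: u, rfl, by simp, by simpa using h⟩
    · obtain ⟨P, Q, rfl, hP, hQ⟩ := ih
      exact ⟨a :: P, Q, rfl, by simpa [h] using hP, hQ⟩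

theorem exists_append_cons_of_le {u : List α} {γ q : α} (hq : q ∈ u) (hγq : γ ≤ q) :
    ∃ P q' Q, u = P ++ q' :: Q ∧ (∀ a ∈ P, a < γ) ∧ γ ≤ q' := by
  obtain ⟨P, _ | ⟨q', Q⟩, rfl, hP, hQ⟩ := exists_append_of_head_ge u γ
  · exact absurd (hP q (by simpa using hq)) (not_lt.2 hγq)
  · exact ⟨P, q', Q, rfl, hP, by simpa using hQ⟩

theorem exists_append_of_sorted {S : List α} (hS : S.Pairwise (· ≤ ·)) (γ : α) :
    ∃ S₁ S₂, S = S₁ ++ S₂ ∧ (∀ a ∈ S₁, a < γ) ∧ ∀ a ∈ S₂, γ ≤ a := by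
  obtain ⟨S₁, _ | ⟨s, S₂⟩, rfl, h₁, h₂⟩ := exists_append_of_head_ge S γ
  · exact ⟨S₁, [], by simp, h₁, by simp⟩
  · have hs : γ ≤ s := by simpa using h₂
    have hsorted := (pairwise_append.1 hS).2.1
    refine ⟨S₁, s :: S₂, rfl, h₁, ?_⟩
    simp only [mem_cons, forall_eq_or_imp]
    exact ⟨hs, fun a ha => hs.trans (rel_of_pairwise_cons hsorted ha)⟩

theorem exists_append_cons_tail_lt_of_mem {L : List α} {c : α} (hc : c ∈ L) :
    ∃ A l B, L = A ++ l :: B ∧ c ≤ l ∧ ∀ a ∈ B, a < l := by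
  induction L using List.reverseRecOn with
  | nil => simp at hc
  | append_singleton L b ih =>
    by_cases hcb : c ≤ b
    · exact ⟨L, b, [], by simp, hcb, by simp⟩
    · have hcL : c ∈ L := by simpa [show c ≠ b from fun h => hcb h.le] using hc
      obtain ⟨A, l, B, rfl, hcl, hB⟩ := ih hcL
      refine ⟨A, l, B ++ [b], by simp, hcl, fun a ha => ?_⟩
      rcases mem_append.1 ha with ha | ha
      · exact hB a ha
      · exact (mem_singleton.1 ha) ▸ lt_of_lt_of_le (not_le.1 hcb) hcl

theorem exists_mem_forall_le {L : List α} (h : L ≠ []) : ∃ x ∈ L, ∀ a ∈ L, a ≤ x := by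
  obtain ⟨x, hx, hmax⟩ := L.toFinset.exists_max_image id (toFinset_nonempty_iff _ |>.2 h)
  exact ⟨x, mem_toFinset.1 hx, fun a ha => hmax a (mem_toFinset.2 ha)⟩

end LinearOrder

section PairSublist

variable {α β : Type*} {a b c : α} {l u v : List α}

theorem pair_sublist_cons : [b, a] <+ c :: l ↔ c = b ∧ a ∈ l ∨ [b, a] <+ l := by
  simp [sublist_cons_iff, eq_comm, or_comm]

theorem pair_sublist_append : [b, a] <+ u ++ v ↔ [b, a] <+ u ∨ b ∈ u ∧ a ∈ v ∨ [b, a] <+ v := by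
  induction u with
  | nil => simp
  | cons c u ih =>
    simp only [cons_append, pair_sublist_cons, ih, mem_append, mem_cons]
    tauto

theorem pair_sublist_filter (p : α → Bool) (hb : p b) (ha : p a) :
    [b, a] <+ l.filter p ↔ [b, a] <+ l :=
  ⟨fun h => h.trans (filter_sublist ..), fun h => by simpa [hb, ha] using h.filter p⟩

theorem pair_sublist_filter_congr (p : α → Bool) (h : [b, a] <+ u ↔ [b, a] <+ v) :
    [b, a] <+ u.filter p ↔ [b, a] <+ v.filter p := by
  by_cases hp : p b ∧ p a
  · rw [pair_sublist_filter p hp.1 hp.2, pair_sublist_filter p hp.1 hp.2, h]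
  have hnot : ∀ l : List α, ¬[b, a] <+ l.filter p := fun l hl =>
    hp ⟨(mem_filter.1 (hl.subset (mem_cons_self ..))).2, (mem_filter.1 (hl.subset (by simp))).2⟩
  exact iff_of_false (hnot u) (hnot v)

theorem pair_sublist_flatMap (f : α → List β) {a b : β} {L : List α} :
    [b, a] <+ L.flatMap f ↔
      (∃ i ∈ L, [b, a] <+ f i) ∨ ∃ i j, [i, j] <+ L ∧ b ∈ f i ∧ a ∈ f j := by
  induction L with
  | nil => simp
  | cons c L ih =>
    simp only [flatMap_cons, pair_sublist_append, ih, mem_flatMap, pair_sublist_cons, mem_cons]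
    constructor
    · rintro (h | ⟨hb, i, hi, ha⟩ | ⟨i, hi, h⟩ | ⟨i, j, hij, hb, ha⟩)
      exacts [.inl ⟨c, .inl rfl, h⟩, .inr ⟨c, i, .inl ⟨rfl, hi⟩, hb, ha⟩, .inl ⟨i, .inr hi, h⟩,
        .inr ⟨i, j, .inr hij, hb, ha⟩]
    · rintro (⟨i, rfl | hi, h⟩ | ⟨i, j, ⟨rfl, hj⟩ | hij, hb, ha⟩)
      exacts [.inl h, .inr (.inr (.inl ⟨i, hi, h⟩)), .inr (.inl ⟨hb, j, hj, ha⟩),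
        .inr (.inr (.inr ⟨i, j, hij, hb, ha⟩))]

theorem pair_sublist_map {σ : α → β} (hσ : σ.Injective) :
    [σ b, σ a] <+ l.map σ ↔ [b, a] <+ l := by
  induction l with
  | nil => simp
  | cons c l ih => simp [pair_sublist_cons, ih, hσ.eq_iff]

theorem not_pair_sublist_iff_eq_replicate_append {i j : α} (hij : i ≠ j) {L : List α}
    (hL : ∀ c ∈ L, c = i ∨ c = j) :
    ¬[j, i] <+ L ↔ ∃ a b, L = replicate a i ++ replicate b j := by
  refine ⟨fun h => ?_, ?_⟩
  · induction L with
    | nil => exact ⟨0, 0, rfl⟩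
    | cons c L ih =>
      rw [pair_sublist_cons, not_or] at h
      obtain ⟨a, b, rfl⟩ := ih (fun c hc => hL c (mem_cons_of_mem _ hc)) h.2
      rcases hL c (mem_cons_self ..) with rfl | rfl
      · exact ⟨a + 1, b, rfl⟩
      · obtain rfl : a = 0 := by
          by_contra ha
          exact h.1 ⟨rfl, mem_append_left _ (mem_replicate.2 ⟨ha, rfl⟩)⟩
        exact ⟨0, b + 1, rfl⟩
  · rintro ⟨a, b, rfl⟩ h
    rcases pair_sublist_append.1 h with h | ⟨h, -⟩ | h
    · exact hij (eq_of_mem_replicate (h.subset (mem_cons_self ..))).symm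
    · exact hij (eq_of_mem_replicate h).symm
    · exact hij (eq_of_mem_replicate (h.subset (by simp)))

end PairSublist

def HypoEquiv (u v : List Alph) : Prop := hypoCon (ofList u) (ofList v)

infix:50 " ≡ₕ " => HypoEquiv

namespace HypoEquiv

variable {u v w u₂ v₂ : List Alph}

@[refl] theorem refl (u : List Alph) : u ≡ₕ u := hypoCon.refl _

theorem symm (h : u ≡ₕ v) : v ≡ₕ u := hypoCon.symm h

theorem trans (h₁ : u ≡ₕ v) (h₂ : v ≡ₕ w) : u ≡ₕ w := hypoCon.trans h₁ h₂

instance : Trans HypoEquiv HypoEquiv HypoEquiv := ⟨trans⟩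

theorem append (h : u ≡ₕ v) (h₂ : u₂ ≡ₕ v₂) : u ++ u₂ ≡ₕ v ++ v₂ := by
  simpa only [HypoEquiv, ofList_append] using hypoCon.mul h h₂

theorem append_left (s : List Alph) (h : u ≡ₕ v) : s ++ u ≡ₕ s ++ v := (refl s).append h

theorem append_right (h : u ≡ₕ v) (t : List Alph) : u ++ t ≡ₕ v ++ t := h.append (refl t)

theorem cons (a : Alph) (h : u ≡ₕ v) : a :: u ≡ₕ a :: v := h.append_left [a]

end HypoEquiv

section Relations

variable {a b c d : Alph}

theorem acb_equiv_cab (hab : a ≤ b) (hbc : b < c) : [a, c, b] ≡ₕ [c, a, b] :=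
  ConGen.Rel.of _ _ (Or.inl ⟨a, b, c, hab, hbc, rfl, rfl⟩)

theorem bac_equiv_bca (hab : a < b) (hbc : b ≤ c) : [b, a, c] ≡ₕ [b, c, a] :=
  ConGen.Rel.of _ _ (Or.inr (Or.inl ⟨a, b, c, hab, hbc, rfl, rfl⟩))

theorem cadb_equiv_acbd (hab : a ≤ b) (hbc : b < c) (hcd : c ≤ d) :
    [c, a, d, b] ≡ₕ [a, c, b, d] :=
  ConGen.Rel.of _ _ (Or.inr (Or.inr (Or.inl ⟨a, b, c, d, hab, hbc, hcd, rfl, rfl⟩)))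

theorem bdac_equiv_dbca (hab : a < b) (hbc : b ≤ c) (hcd : c < d) :
    [b, d, a, c] ≡ₕ [d, b, c, a] :=
  ConGen.Rel.of _ _ (Or.inr (Or.inr (Or.inr ⟨a, b, c, d, hab, hbc, hcd, rfl, rfl⟩)))

end Relations

theorem jump_left {y z : Alph} (u : List Alph) (hu : ∀ a ∈ u, a < y) (hyz : y ≤ z) :
    y :: (u ++ [z]) ≡ₕ y :: z :: u := by
  match u with
  | [] => rfl
  | γ :: u' =>
    have hγy : γ < y := hu γ (by simp)
    -- `γ` dominates the letters of `u'` before its first letter `≥ γ`, which can jump over them.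
    obtain ⟨P, Q, hPQ, hP, hQ⟩ := exists_append_of_head_ge u' γ
    rw [hPQ] at hu ⊢
    rcases Q with _ | ⟨q, Q⟩
    · rw [append_nil]
      calc y :: γ :: (P ++ [z])
          _ ≡ₕ y :: γ :: z :: P := (jump_left P hP (hγy.le.trans hyz)).cons y
          _ ≡ₕ [y, z, γ] ++ P := (bac_equiv_bca hγy hyz).append_right P
    · have hγq : γ ≤ q := by simpa using hQ
      have hqy : q < y := hu q (by simp)
      have hqP : ∀ a ∈ q :: (P ++ Q), a < y := fun a ha => hu a (by simp at ha ⊢; tauto)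
      calc y :: (γ :: (P ++ q :: Q) ++ [z])
          _ = [y] ++ γ :: (P ++ [q]) ++ (Q ++ [z]) := by simp
          _ ≡ₕ [y] ++ γ :: q :: P ++ (Q ++ [z]) :=
            ((jump_left P hP hγq).append_left [y]).append_right _
          _ = [y, γ, q] ++ (P ++ Q ++ [z]) := by simp
          _ ≡ₕ [γ, y, q] ++ (P ++ Q ++ [z]) := (acb_equiv_cab hγq hqy).symm.append_right _
          _ ≡ₕ γ :: y :: z :: q :: (P ++ Q) := (jump_left (q :: (P ++ Q)) hqP hyz).cons γ
          _ ≡ₕ [γ, y, q, z] ++ (P ++ Q) := ((bac_equiv_bca hqy hyz).symm.cons γ).append_right _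
          _ ≡ₕ [y, γ, z, q] ++ (P ++ Q) := (cadb_equiv_acbd hγq hqy hyz).symm.append_right _
          _ ≡ₕ [y, z, γ, q] ++ (P ++ Q) :=
            ((acb_equiv_cab hγq (hqy.trans_le hyz)).cons y).append_right _
          _ = [y, z] ++ γ :: q :: P ++ Q := by simp
          _ ≡ₕ [y, z] ++ γ :: (P ++ [q]) ++ Q :=
            ((jump_left P hP hγq).symm.append_left [y, z]).append_right Q
          _ = y :: z :: γ :: (P ++ q :: Q) := by simp
termination_by u.length
decreasing_by all_goals simp [hPQ]

theorem jump_left_sorted {y : Alph} {S : List Alph} (hS : ∀ a ∈ S, a < y) :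
    ∀ {Z : List Alph}, (y :: Z).Pairwise (· ≤ ·) → y :: (S ++ Z) ≡ₕ y :: (Z ++ S)
  | [], _ => by simp only [append_nil, nil_append]; rfl
  | z :: Z, hZ => by
    have hyz : y ≤ z := rel_of_pairwise_cons hZ (mem_cons_self ..)
    calc y :: (S ++ z :: Z)
        _ = y :: (S ++ [z]) ++ Z := by simp
        _ ≡ₕ y :: z :: S ++ Z := (jump_left S hS hyz).append_right Z
        _ ≡ₕ y :: z :: (Z ++ S) :=
          (jump_left_sorted (fun a ha => (hS a ha).trans_le hyz) hZ.of_cons).cons y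

theorem jump_left_replicate {x : Alph} {u : List Alph} (hu : ∀ a ∈ u, a < x) (k : ℕ) :
    x :: (u ++ replicate k x) ≡ₕ x :: (replicate k x ++ u) :=
  jump_left_sorted hu (by simp [← replicate_succ, pairwise_replicate])

theorem move_sorted_right {y : Alph} {u B Z : List Alph}
    (hu : ∀ a ∈ u, a < y) (hB : ∀ a ∈ B, a < y) (hZ : (y :: Z).Pairwise (· ≤ ·)) :
    y :: (u ++ Z ++ B) ≡ₕ y :: (u ++ B ++ Z) := by
  have huB : ∀ a ∈ u ++ B, a < y := by simpa [or_imp, forall_and] using And.intro hu hB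
  calc y :: (u ++ Z ++ B)
      _ ≡ₕ y :: (Z ++ u) ++ B := (jump_left_sorted hu hZ).append_right B
      _ = y :: (Z ++ (u ++ B)) := by simp
      _ ≡ₕ y :: (u ++ B ++ Z) := (jump_left_sorted huB hZ).symm

theorem merge_max {x : Alph} :
    ∀ {R : List Alph}, (∀ a ∈ R, a ≤ x) →
      x :: R ≡ₕ replicate (R.count x + 1) x ++ R.filter (· ≠ x) := by
  intro R
  induction R using List.reverseRecOn with
  | nil => intro; rfl
  | append_singleton R r ih =>
    intro hR
    have ih := (ih fun a ha => hR a (by simp [ha])).append_right [r]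
    by_cases hr : r = x
    · subst hr
      have hlt : ∀ a ∈ R.filter (· ≠ r), a < r := fun a ha => by
        simp only [mem_filter, decide_eq_true_eq] at ha
        exact lt_of_le_of_ne (hR a (by simp [ha.1])) ha.2
      calc r :: (R ++ [r])
          _ ≡ₕ replicate (R.count r) r ++ r :: (R.filter (· ≠ r) ++ [r]) := by
            simpa [replicate_succ'] using ih
          _ ≡ₕ replicate (R.count r) r ++ r :: r :: R.filter (· ≠ r) :=
            (jump_left _ hlt le_rfl).append_left _
          _ = _ := by simp [replicate_succ', filter_append]
    · simpa [filter_append, count_append, hr, Ne.symm hr] using ih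

theorem swap_of_sorted {c x : Alph} :
    ∀ {V : List Alph}, V.Pairwise (· ≤ ·) → (∀ a ∈ V, a < x) → (∃ q ∈ V, c ≤ q) →
      c :: x :: V ≡ₕ x :: c :: V
  | [], _, _, ⟨_, hq, _⟩ => by simp at hq
  | p :: V, hV, hVx, ⟨q, hq, hcq⟩ => by
    have hpx : p < x := hVx p (mem_cons_self ..)
    have hcx : c < x := hcq.trans_lt (hVx q hq)
    by_cases hcp : c ≤ p
    · exact (acb_equiv_cab hcp hpx).append_right V
    have hpc : p < c := not_le.1 hcp
    obtain ⟨w, V, rfl⟩ : ∃ w V', V = w :: V' := by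
      rcases V with _ | ⟨w, V'⟩
      · simp only [mem_singleton] at hq; exact absurd (hq ▸ hcq) hcp
      · exact ⟨w, V', rfl⟩
    have hwx : w < x := hVx w (by simp)
    by_cases hcw : c ≤ w
    · calc c :: x :: p :: w :: V
          _ ≡ₕ [x, c, w, p] ++ V := (bdac_equiv_dbca hpc hcw hwx).append_right V
          _ ≡ₕ [x, c, p, w] ++ V := ((bac_equiv_bca hpc hcw).symm.cons x).append_right V
    have hwc : w < c := not_le.1 hcw
    have hpw : p ≤ w := rel_of_pairwise_cons hV (mem_cons_self ..)
    have ih : c :: x :: w :: V ≡ₕ x :: c :: w :: V :=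
      swap_of_sorted hV.of_cons (fun a ha => hVx a (mem_cons_of_mem p ha))
        ⟨q, (mem_cons.1 hq).resolve_left (fun h => hcp (h ▸ hcq)), hcq⟩
    calc c :: x :: p :: w :: V
        _ ≡ₕ [c, p, x, w] ++ V := ((bac_equiv_bca hpc hcx.le).symm.append_right [w]).append_right V
        _ ≡ₕ [p, c, w, x] ++ V := (cadb_equiv_acbd hpw hwc hcx.le).append_right V
        _ ≡ₕ p :: c :: x :: w :: V := ((bac_equiv_bca hwc hcx.le).cons p).append_right V
        _ ≡ₕ p :: x :: c :: w :: V := ih.cons p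
        _ ≡ₕ [x, p, c] ++ w :: V := (acb_equiv_cab hpc.le hcx).append_right _
        _ ≡ₕ [x, c, p, w] ++ V := ((acb_equiv_cab hpw hwc).cons x).append_right V

theorem exists_sorted_prefix_equiv {q : Alph} :
    ∀ {P : List Alph}, (∀ a ∈ P, a ≤ q) →
      ∃ C S, C.Pairwise (· ≤ ·) ∧ C ⊆ P ∧ P ++ [q] ≡ₕ C ++ q :: S
  | [], _ => ⟨[], [], by simp, by simp, by simp; rfl⟩
  | p :: P, hP => by
    obtain ⟨C, S, hC, hCP, hPC⟩ :=
      exists_sorted_prefix_equiv fun a ha => hP a (mem_cons_of_mem p ha)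
    obtain ⟨S₁, S₂, rfl, hS₁, hS₂⟩ := exists_append_of_sorted hC p
    have hpq : p ≤ q := hP p (mem_cons_self ..)
    have hS₂q : ∀ a ∈ S₂, a ≤ q := fun a ha => hP a (mem_cons_of_mem p (hCP (by simp [ha])))
    have hsorted : (p :: (S₂ ++ [q])).Pairwise (· ≤ ·) := by
      simp only [pairwise_cons, pairwise_append, mem_append, mem_singleton]
      refine ⟨fun a ha => ?_, (pairwise_append.1 hC).2.1, by simp, fun a ha b hb => hb ▸ hS₂q a ha⟩
      rcases ha with ha | rfl
      exacts [hS₂ a ha, hpq]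
    refine ⟨p :: S₂, S₁ ++ S, hsorted.sublist (by simp), ?_, ?_⟩
    · intro a ha
      rcases mem_cons.1 ha with rfl | ha
      exacts [mem_cons_self .., mem_cons_of_mem p (hCP (by simp [ha]))]
    calc p :: P ++ [q]
        _ ≡ₕ p :: (S₁ ++ S₂ ++ q :: S) := hPC.cons p
        _ = p :: (S₁ ++ (S₂ ++ [q])) ++ S := by simp
        _ ≡ₕ p :: ((S₂ ++ [q]) ++ S₁) ++ S := (jump_left_sorted hS₁ hsorted).append_right S
        _ = (p :: S₂) ++ q :: (S₁ ++ S) := by simp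

theorem swap_of_exists_ge {c x : Alph} {V : List Alph} (hVx : ∀ a ∈ V, a < x)
    (hcV : ∃ q ∈ V, c ≤ q) :
    c :: x :: V ≡ₕ x :: c :: V := by
  obtain ⟨q, hq, hcq⟩ := hcV
  obtain ⟨P, q, Q, rfl, hPc, hcq⟩ := exists_append_cons_of_le hq hcq
  obtain ⟨C, S, hC, hCP, hPC⟩ := exists_sorted_prefix_equiv fun a ha => (hPc a ha).le.trans hcq
  have hsorted : (C ++ [q]).Pairwise (· ≤ ·) :=
    pairwise_append.2 ⟨hC, by simp, fun a ha b hb =>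
      (mem_singleton.1 hb) ▸ ((hPc a (hCP ha)).le.trans hcq)⟩
  have hCx : ∀ a ∈ C ++ [q], a < x := fun a ha => hVx a <| by
    rcases mem_append.1 ha with ha | ha
    · exact mem_append_left _ (hCP ha)
    · simp [mem_singleton.1 ha]
  calc c :: x :: (P ++ q :: Q)
      _ = [c, x] ++ (P ++ [q]) ++ Q := by simp
      _ ≡ₕ [c, x] ++ (C ++ q :: S) ++ Q := (hPC.append_left _).append_right Q
      _ = c :: x :: (C ++ [q]) ++ (S ++ Q) := by simp
      _ ≡ₕ x :: c :: (C ++ [q]) ++ (S ++ Q) :=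
        (swap_of_sorted hsorted hCx ⟨q, by simp, hcq⟩).append_right _
      _ = [x, c] ++ (C ++ q :: S) ++ Q := by simp
      _ ≡ₕ [x, c] ++ (P ++ [q]) ++ Q := (hPC.symm.append_left _).append_right Q
      _ = x :: c :: (P ++ q :: Q) := by simp

theorem swap_replicate_of_exists_ge {c x : Alph} {V : List Alph} (hVx : ∀ a ∈ V, a < x)
    (hcV : ∃ q ∈ V, c ≤ q) (k : ℕ) :
    c :: (replicate (k + 1) x ++ V) ≡ₕ replicate (k + 1) x ++ c :: V := by
  obtain ⟨q, hq, hcq⟩ := hcV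
  have hcVx : ∀ a ∈ c :: V, a < x := by
    simpa [forall_and, or_imp] using ⟨hcq.trans_lt (hVx q hq), hVx⟩
  calc c :: x :: (replicate k x ++ V)
      _ ≡ₕ c :: x :: (V ++ replicate k x) := (jump_left_replicate hVx k).symm.cons c
      _ ≡ₕ x :: c :: V ++ replicate k x := (swap_of_exists_ge hVx ⟨q, hq, hcq⟩).append_right _
      _ ≡ₕ x :: (replicate k x ++ c :: V) := jump_left_replicate hcVx k

theorem move_replicate_left {x : Alph} {V : List Alph} (hVx : ∀ a ∈ V, a < x) (k : ℕ) :
    ∀ {C : List Alph}, (∀ a ∈ C, a < x) → (∀ c ∈ C, ∃ q ∈ V, c ≤ q) →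
      C ++ (replicate (k + 1) x ++ V) ≡ₕ replicate (k + 1) x ++ (C ++ V)
  | [], _, _ => by simp; rfl
  | c :: C, hCx, hCV => by
    have hCx' : ∀ a ∈ C, a < x := fun a ha => hCx a (mem_cons_of_mem c ha)
    have hCV' : ∀ a ∈ C ++ V, a < x := by
      simpa [or_imp, forall_and] using ⟨hCx', hVx⟩
    obtain ⟨q, hq, hcq⟩ := hCV c (mem_cons_self ..)
    calc c :: (C ++ (replicate (k + 1) x ++ V))
        _ ≡ₕ c :: (replicate (k + 1) x ++ (C ++ V)) :=
          (move_replicate_left hVx k hCx' fun a ha => hCV a (mem_cons_of_mem c ha)).cons c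
        _ ≡ₕ replicate (k + 1) x ++ c :: (C ++ V) :=
          swap_replicate_of_exists_ge hCV' ⟨q, mem_append_right C hq, hcq⟩ k

theorem peel_max {x : Alph} {w : List Alph} (hwx : ∀ a ∈ w, a ≤ x) (hxw : x ∈ w) :
    w ≡ₕ replicate (w.count x) x ++ w.filter (· ≠ x) ∨
      w ≡ₕ w.filter (· ≠ x) ++ replicate (w.count x) x := by
  obtain ⟨A, R, rfl, hxA⟩ := exists_append_cons_notMem hxw
  have hAx : ∀ a ∈ A, a < x := fun a ha =>
    lt_of_le_of_ne (hwx a (mem_append_left _ ha)) (fun h => hxA (h ▸ ha))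
  have hRx : ∀ a ∈ R.filter (· ≠ x), a < x := fun a ha => by
    simp only [mem_filter, decide_eq_true_eq] at ha
    exact lt_of_le_of_ne (hwx a (by simp [ha.1])) ha.2
  have hcount : (A ++ x :: R).count x = R.count x + 1 := by
    simp [count_append, count_eq_zero_of_not_mem hxA]
  have hfilter : (A ++ x :: R).filter (· ≠ x) = A ++ R.filter (· ≠ x) := by
    simpa [filter_append] using fun a ha (h : a = x) => hxA (h ▸ ha)
  have hmerge : A ++ x :: R ≡ₕ A ++ (replicate (R.count x + 1) x ++ R.filter (· ≠ x)) :=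
    (merge_max fun a ha => hwx a (by simp [ha])).append_left A
  rw [hcount, hfilter]
  by_cases hdom : ∀ c ∈ A, ∃ q ∈ R.filter (· ≠ x), c ≤ q
  · exact .inl (hmerge.trans (move_replicate_left hRx _ hAx hdom))
  obtain ⟨c, hcA, hc⟩ : ∃ c ∈ A, ∀ q ∈ R.filter (· ≠ x), q < c := by simpa using hdom
  obtain ⟨A₁, l, A₂, rfl, hcl, hA₂⟩ := exists_append_cons_tail_lt_of_mem hcA
  have hlx : l < x := hAx l (by simp)
  refine .inr (hmerge.trans ?_)
  simpa using (move_sorted_right hA₂ (fun a ha => (hc a ha).trans_le hcl)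
    (Z := replicate (R.count x + 1) x) (by simp [pairwise_replicate, hlx.le])).append_left A₁

def InversionsAgree (u v : List Alph) : Prop :=
  u ~ v ∧ ∀ a b, a < b → (∀ c ∈ u, ¬(a < c ∧ c < b)) → ([b, a] <+ u ↔ [b, a] <+ v)

namespace InversionsAgree

variable {u v w u₂ v₂ : List Alph}

theorem refl (u : List Alph) : InversionsAgree u u := ⟨.refl u, fun _ _ _ _ => .rfl⟩

theorem symm (h : InversionsAgree u v) : InversionsAgree v u :=
  ⟨h.1.symm, fun a b hab hgap =>
    (h.2 a b hab fun c hc => hgap c (h.1.mem_iff.1 hc)).symm⟩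

theorem trans (h₁ : InversionsAgree u v) (h₂ : InversionsAgree v w) : InversionsAgree u w :=
  ⟨h₁.1.trans h₂.1, fun a b hab hgap =>
    (h₁.2 a b hab hgap).trans (h₂.2 a b hab fun c hc => hgap c (h₁.1.mem_iff.2 hc))⟩

theorem append (h : InversionsAgree u v) (h₂ : InversionsAgree u₂ v₂) :
    InversionsAgree (u ++ u₂) (v ++ v₂) := by
  refine ⟨h.1.append h₂.1, fun a b hab hgap => ?_⟩
  rw [pair_sublist_append, pair_sublist_append,
    h.2 a b hab fun c hc => hgap c (mem_append_left _ hc),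
    h₂.2 a b hab fun c hc => hgap c (mem_append_right _ hc), h.1.mem_iff, h₂.1.mem_iff]

end InversionsAgree

theorem perm_of_hypoRel {p q : FreeMonoid Alph} (h : HypoRel p q) : toList p ~ toList q := by
  rcases h with ⟨a, b, c, -, -, rfl, rfl⟩ | ⟨a, b, c, -, -, rfl, rfl⟩ |
    ⟨a, b, c, d, -, -, -, rfl, rfl⟩ | ⟨a, b, c, d, -, -, -, rfl, rfl⟩
  exacts [.swap c a [b], .cons b (.swap c a []),
    (Perm.swap a c [d, b]).trans (.cons a (.cons c (.swap b d []))),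
    (Perm.swap d b [a, c]).trans (.cons d (.cons b (.swap c a [])))]

theorem pair_sublist_iff_of_hypoRel {p q : FreeMonoid Alph} (h : HypoRel p q) {α β : Alph}
    (hαβ : α < β) (hgap : ∀ c ∈ toList p, ¬(α < c ∧ c < β)) :
    [β, α] <+ toList p ↔ [β, α] <+ toList q := by
  rcases h with ⟨a, b, c, h1, h2, rfl, rfl⟩ | ⟨a, b, c, h1, h2, rfl, rfl⟩ |
    ⟨a, b, c, d, h1, h2, h3, rfl, rfl⟩ | ⟨a, b, c, d, h1, h2, h3, rfl, rfl⟩ <;>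
  simp only [toList_mul, toList_of, cons_append, nil_append, pair_sublist_cons, mem_cons,
    not_mem_nil, sublist_nil, reduceCtorEq, forall_eq_or_imp, forall_eq,
    or_false, and_false] at hgap ⊢ <;>
  simp only [← PNat.coe_inj, ← PNat.coe_lt_coe, ← PNat.coe_le_coe] at * <;>
  omega

def inversionsCon : Con (FreeMonoid Alph) where
  r u v := InversionsAgree (toList u) (toList v)
  iseqv := ⟨fun _ => .refl _, .symm, .trans⟩
  mul' h h₂ := h.append h₂

theorem hypoCon_le_inversionsCon : hypoCon ≤ inversionsCon :=
  Con.conGen_le.2 fun _ _ h =>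
    ⟨perm_of_hypoRel h, fun _ _ hab hgap => pair_sublist_iff_of_hypoRel h hab hgap⟩

theorem HypoEquiv.inversionsAgree {u v : List Alph} (h : u ≡ₕ v) : InversionsAgree u v :=
  hypoCon_le_inversionsCon h

theorem peel_max_of_pair_sublist {x l : Alph} {w : List Alph} (hwx : ∀ a ∈ w, a ≤ x)
    (hxw : x ∈ w) (hl : l ∈ w.filter (· ≠ x)) (hwl : ∀ a ∈ w.filter (· ≠ x), a ≤ l) :
    ([x, l] <+ w → w ≡ₕ replicate (w.count x) x ++ w.filter (· ≠ x)) ∧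
      (¬[x, l] <+ w → w ≡ₕ w.filter (· ≠ x) ++ replicate (w.count x) x) := by
  simp only [mem_filter, decide_eq_true_eq, and_imp] at hl hwl
  have hlx : l < x := lt_of_le_of_ne (hwx l hl.1) hl.2
  have hgap : ∀ c ∈ w, ¬(l < c ∧ c < x) := fun c hc ⟨hlc, hcx⟩ =>
    not_le.2 hlc (hwl c hc hcx.ne)
  have hinv : ∀ {w'}, w ≡ₕ w' → ([x, l] <+ w ↔ [x, l] <+ w') :=
    fun h => h.inversionsAgree.2 l x hlx hgap
  have hleft : [x, l] <+ replicate (w.count x) x ++ w.filter (· ≠ x) :=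
    pair_sublist_append.2 <| .inr <| .inl
      ⟨by simpa using (count_pos_iff.2 hxw).ne', by simpa using hl⟩
  have hright : ¬[x, l] <+ w.filter (· ≠ x) ++ replicate (w.count x) x := by
    rw [pair_sublist_append]
    rintro (h | ⟨h, -⟩ | h)
    · simpa using h.subset (mem_cons_self ..)
    · simp at h
    · exact hlx.ne (eq_of_mem_replicate (h.subset (by simp)))
  rcases peel_max hwx hxw with h | h
  · exact ⟨fun _ => h, fun hn => absurd ((hinv h).2 hleft) hn⟩
  · exact ⟨fun hp => absurd ((hinv h).1 hp) hright, fun _ => h⟩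

theorem hypoEquiv_of_perm_of_pair_sublist_iff {u v : List Alph} (hp : u ~ v)
    (hs : ∀ a b, a < b → ([b, a] <+ u ↔ [b, a] <+ v)) : u ≡ₕ v := by
  rcases eq_or_ne u [] with rfl | hu
  · rw [hp.symm.eq_nil]
  obtain ⟨x, hxu, hux⟩ := exists_mem_forall_le hu
  have hxv : x ∈ v := hp.mem_iff.1 hxu
  have hvx : ∀ a ∈ v, a ≤ x := fun a ha => hux a (hp.mem_iff.2 ha)
  have hcount : v.count x = u.count x := (hp.count_eq x).symm
  have hpf : u.filter (· ≠ x) ~ v.filter (· ≠ x) := hp.filter _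
  have ih : u.filter (· ≠ x) ≡ₕ v.filter (· ≠ x) :=
    hypoEquiv_of_perm_of_pair_sublist_iff hpf fun a b hab =>
      pair_sublist_filter_congr _ (hs a b hab)
  rcases eq_or_ne (u.filter (· ≠ x)) [] with hū | hū
  · have hrep : ∀ {w}, (∀ a ∈ w, a ≤ x) → x ∈ w → w.filter (· ≠ x) = [] →
        w ≡ₕ replicate (w.count x) x := fun hwx hxw hw => by
      rcases peel_max hwx hxw with h | h <;> simpa only [hw, append_nil, nil_append] using h
    rw [hū] at hpf
    calc u ≡ₕ replicate (u.count x) x := hrep hux hxu hū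
      _ ≡ₕ v := by rw [← hcount]; exact (hrep hvx hxv hpf.symm.eq_nil).symm
  obtain ⟨l, hl, hlmax⟩ := exists_mem_forall_le hū
  have hlx : l < x := by
    simp only [mem_filter, decide_eq_true_eq] at hl
    exact lt_of_le_of_ne (hux l hl.1) hl.2
  have hU := peel_max_of_pair_sublist hux hxu hl hlmax
  have hV := peel_max_of_pair_sublist hvx hxv (hpf.mem_iff.1 hl)
    fun a ha => hlmax a (hpf.mem_iff.2 ha)
  rw [hcount] at hV
  by_cases hxl : [x, l] <+ u
  · exact (hU.1 hxl).trans ((ih.append_left _).trans (hV.1 ((hs l x hlx).1 hxl)).symm)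
  · exact (hU.2 hxl).trans ((ih.append_right _).trans (hV.2 (mt (hs l x hlx).2 hxl)).symm)
termination_by u.length
decreasing_by exact length_filter_lt_length_iff_exists.2 ⟨x, hxu, by simp⟩

theorem toList_lift_ofList {X : Type*} (g : X → List Alph) (u : FreeMonoid X) :
    toList (lift (fun x => ofList (g x)) u) = (toList u).flatMap g := by
  simp [lift_apply, toList_prod, flatMap_def, Function.comp_def]

theorem mSatisfies_hypo_iff {X : Type*} {u v : FreeMonoid X} :
    MSatisfies Hypo u v ↔ ∀ g : X → List Alph, (toList u).flatMap g ≡ₕ (toList v).flatMap g := by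
  have hmk : ∀ f : X → FreeMonoid Alph, ∀ w : FreeMonoid X,
      (hypoCon.mk'.comp (lift f)) w = hypoCon.mk' (ofList ((toList w).flatMap (toList ∘ f))) :=
    fun f w => by
      simp only [MonoidHom.comp_apply, ← toList_lift_ofList, Function.comp_apply, ofList_toList]
  refine ⟨fun h g => ?_, fun h ψ => ?_⟩
  · have := h (hypoCon.mk'.comp (lift (ofList ∘ g)))
    rw [hmk, hmk] at this
    exact (Con.eq _).1 this
  · choose f hf using fun x => Con.mk'_surjective (c := hypoCon) (ψ (of x))
    have hψ : ψ = hypoCon.mk'.comp (lift f) := FreeMonoid.hom_eq fun x => (hf x).symm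
    rw [hψ, hmk, hmk]
    exact (Con.eq _).2 (h _)

theorem fin_two_not_pair_sublist_iff {i j : Fin 2} (hij : i ≠ j) (L : List (Fin 2)) :
    ¬[j, i] <+ L ↔ ∃ a b, L = replicate a i ++ replicate b j :=
  not_pair_sublist_iff_eq_replicate_append hij fun _ _ => by omega

theorem eq_of_perm_of_not_pair_sublist {u v : List (Fin 2)} {i j : Fin 2} (hij : i ≠ j)
    (hp : u ~ v) (hu : ¬[j, i] <+ u) (hv : ¬[j, i] <+ v) : u = v := by
  obtain ⟨a, b, rfl⟩ := (fin_two_not_pair_sublist_iff hij u).1 hu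
  obtain ⟨a', b', rfl⟩ := (fin_two_not_pair_sublist_iff hij v).1 hv
  have hi := hp.count_eq i
  have hj := hp.count_eq j
  simp [count_replicate, hij, hij.symm] at hi hj
  rw [hi, hj]

theorem toList_of_pow {α : Type*} (x : α) (n : ℕ) : toList (of x ^ n) = replicate n x := by
  induction n with
  | zero => rfl
  | succ n ih => rw [pow_succ, toList_mul, ih, toList_of, replicate_succ']

theorem forall_ne_pow_mul_pow_iff (w : FreeMonoid (Fin 2)) :
    (∀ a b : ℕ, w ≠ of 0 ^ a * of 1 ^ b ∧ w ≠ of 1 ^ b * of 0 ^ a) ↔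
      [1, 0] <+ toList w ∧ [0, 1] <+ toList w := by
  have hform : ∀ {i j : Fin 2}, i ≠ j →
      ((∃ a b, w = of i ^ a * of j ^ b) ↔ ¬[j, i] <+ toList w) := fun hij => by
    rw [fin_two_not_pair_sublist_iff hij]
    simp only [← toList_of_pow, ← toList_mul, toList.injective.eq_iff]
  have h01 := hform (i := 0) (j := 1) (by decide)
  have h10 := hform (i := 1) (j := 0) (by decide)
  constructor
  · intro h
    refine ⟨not_not.1 fun hn => ?_, not_not.1 fun hn => ?_⟩
    · obtain ⟨a, b, hab⟩ := h01.2 hn; exact (h a b).1 hab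
    · obtain ⟨b, a, hab⟩ := h10.2 hn; exact (h a b).2 hab
  · rintro ⟨h10', h01'⟩ a b
    exact ⟨fun hab => h01.1 ⟨a, b, hab⟩ h10', fun hab => h10.1 ⟨b, a, hab⟩ h01'⟩

theorem isBalanced_iff_perm {X : Type*} [DecidableEq X] {u v : FreeMonoid X} :
    IsBalanced u v ↔ toList u ~ toList v :=
  perm_iff_count.symm

theorem inversionsAgree_map_of_mSatisfies {u v : FreeMonoid (Fin 2)} (h : MSatisfies Hypo u v)
    (σ : Fin 2 → Alph) : InversionsAgree ((toList u).map σ) ((toList v).map σ) := by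
  simpa only [← map_eq_flatMap] using (mSatisfies_hypo_iff.1 h fun i => [σ i]).inversionsAgree

theorem pair_sublist_iff_of_mSatisfies {u v : FreeMonoid (Fin 2)} (h : MSatisfies Hypo u v)
    {i j : Fin 2} (hij : i ≠ j) : [i, j] <+ toList u ↔ [i, j] <+ toList v := by
  let σ : Fin 2 → Alph := fun k => if k = i then 2 else 1
  have hσ : σ.Injective := fun k k' hkk' => by
    by_cases hk : k = i <;> by_cases hk' : k' = i <;> simp_all [σ]
    omega
  have := (inversionsAgree_map_of_mSatisfies h σ).2 1 2 (by decide) fun c _ => by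
    simp only [← PNat.coe_lt_coe, PNat.val_ofNat]; omega
  have hσi : σ i = 2 := if_pos rfl
  have hσj : σ j = 1 := if_neg hij.symm
  rwa [← hσi, ← hσj, pair_sublist_map hσ, pair_sublist_map hσ] at this

theorem perm_of_mSatisfies {u v : FreeMonoid (Fin 2)} (h : MSatisfies Hypo u v) :
    toList u ~ toList v :=
  (map_perm_map_iff (f := ![1, 2]) (by decide)).1 (inversionsAgree_map_of_mSatisfies h _).1

theorem pair_sublist_of_mSatisfies {u v : FreeMonoid (Fin 2)} (h : MSatisfies Hypo u v)
    (huv : u ≠ v) {i j : Fin 2} (hij : i ≠ j) : [j, i] <+ toList u ∧ [j, i] <+ toList v := by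
  have hji := pair_sublist_iff_of_mSatisfies h hij.symm
  by_contra hn
  have hu : ¬[j, i] <+ toList u := fun hu => hn ⟨hu, hji.1 hu⟩
  exact huv (toList.injective
    (eq_of_perm_of_not_pair_sublist hij (perm_of_mSatisfies h) hu (mt hji.2 hu)))

theorem pair_sublist_iff_of_perm {u v : List (Fin 2)} (hp : u ~ v)
    (hu : [1, 0] <+ u ∧ [0, 1] <+ u) (hv : [1, 0] <+ v ∧ [0, 1] <+ v) (i j : Fin 2) :
    [i, j] <+ u ↔ [i, j] <+ v := by
  rcases eq_or_ne i j with rfl | hij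
  · have hrep : ∀ l : List (Fin 2), [i, i] <+ l ↔ 2 ≤ l.count i :=
      fun _ => replicate_sublist_iff (n := 2)
    rw [hrep, hrep, hp.count_eq]
  · fin_cases i <;> fin_cases j <;> simp_all

theorem flatMap_equiv_of_perm {X : Type*} {u v : List X} (hp : u ~ v)
    (hs : ∀ i j, [i, j] <+ u ↔ [i, j] <+ v) (g : X → List Alph) :
    u.flatMap g ≡ₕ v.flatMap g :=
  hypoEquiv_of_perm_of_pair_sublist_iff (hp.flatMap_right g) fun _ _ _ => by
    simp only [pair_sublist_flatMap, hp.mem_iff, hs]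

end Hypoplactic

open Hypoplactic

/-- A nontrivial identity `u ≈ v` over the two-letter alphabet of variables
`{x, y}` (here `x = 0` and `y = 1` in `Fin 2`) is satisfied by `hypo` if and only if
it is balanced and neither side is of the form `x^a y^b` or `y^b x^a`. -/
theorem hypo_two_variable_identities (u v : FreeMonoid (Fin 2)) (huv : u ≠ v) :
    MSatisfies Hypo u v ↔
      (IsBalanced u v ∧
        (∀ a b : ℕ, u ≠ of 0 ^ a * of 1 ^ b ∧ u ≠ of 1 ^ b * of 0 ^ a) ∧
        (∀ a b : ℕ, v ≠ of 0 ^ a * of 1 ^ b ∧ v ≠ of 1 ^ b * of 0 ^ a)) := by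
  rw [isBalanced_iff_perm, forall_ne_pow_mul_pow_iff, forall_ne_pow_mul_pow_iff]
  constructor
  · intro h
    obtain ⟨hu10, hv10⟩ := pair_sublist_of_mSatisfies h huv (i := 0) (j := 1) (by decide)
    obtain ⟨hu01, hv01⟩ := pair_sublist_of_mSatisfies h huv (i := 1) (j := 0) (by decide)
    exact ⟨perm_of_mSatisfies h, ⟨hu10, hu01⟩, hv10, hv01⟩
  · rintro ⟨hp, hu, hv⟩
    exact mSatisfies_hypo_iff.2 (flatMap_equiv_of_perm hp (pair_sublist_iff_of_perm hp hu hv))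
end

section
/- Let S be the set of all nontrivial identities over alphabets of at most four variables that are satisfied by the hypoplactic monoid hypo, excluding the identity (R) xzytxy ≈ xzytyx and all identities equivalent to it. Then (R) is not a consequence of S; semantically, there exists a monoid that satisfies every identity in S but does not satisfy (R). -/
open FreeMonoid

/-- The left side of identity (L): `xyzxty` (variables `x = 0`, `y = 1`, `z = 2`, `t = 3`). -/
def wL1 : FreeMonoid (Fin 4) := of 0 * of 1 * of 2 * of 0 * of 3 * of 1
/-- The right side of identity (L): `yxzxty`. -/
def wL2 : FreeMonoid (Fin 4) := of 1 * of 0 * of 2 * of 0 * of 3 * of 1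
/-- The left side of identity (M): `xzxytx`. -/
def wM1 : FreeMonoid (Fin 4) := of 0 * of 2 * of 0 * of 1 * of 3 * of 0
/-- The right side of identity (M): `xzyxtx`. -/
def wM2 : FreeMonoid (Fin 4) := of 0 * of 2 * of 1 * of 0 * of 3 * of 0
/-- The left side of identity (R): `xzytxy`. -/
def wR1 : FreeMonoid (Fin 4) := of 0 * of 2 * of 1 * of 3 * of 0 * of 1
/-- The right side of identity (R): `xzytyx`. -/
def wR2 : FreeMonoid (Fin 4) := of 0 * of 2 * of 1 * of 3 * of 1 * of 0

/-- Two identities (over the same alphabet of variables) are equivalent if one is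
obtained from the other by renaming variables via a bijection of the variables
and/or swapping the two sides. -/
def EquivIdent {X : Type*} (p q : FreeMonoid X × FreeMonoid X) : Prop :=
  ∃ σ : X ≃ X,
    (FreeMonoid.map σ p.1 = q.1 ∧ FreeMonoid.map σ p.2 = q.2) ∨
    (FreeMonoid.map σ p.1 = q.2 ∧ FreeMonoid.map σ p.2 = q.1)

open List

/-!
Let `u ∼ v` mean that `u` and `v` have the same content and the same subsequences of length
two; every identity of `hypo` holds modulo `∼`. The witness is the free monoid on four letters
modulo the refinement of `∼` that separates each factor of `xzytxy` or `xzytyx` from every other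
word. A factor of these words is `∼`-equivalent only to itself, except that
`xzytxy ∼ xzytyx`, so (R) fails in the quotient. An identity of `hypo` can fail there only if a
substitution sends its two sides to `xzytxy` and `xzytyx`. Split both sides into the blocks
that the substitution produces. The last two blocks are single letters, because `tx`, `ty`,
`xy` and `yx` are not factors of `xzyt`. Comparing subsequences of length two shows that the
same two variables end both sides. All other blocks are then single letters too, so the
substitution is a renaming and the identity is equivalent to (R).
-/

section Pairs

variable {α : Type*}

theorem pair_sublist_append_iff {s t : α} {l₁ l₂ : List α} :
    [s, t] <+ l₁ ++ l₂ ↔ [s, t] <+ l₁ ∨ [s, t] <+ l₂ ∨ s ∈ l₁ ∧ t ∈ l₂ := by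
  rw [sublist_append_iff]
  constructor
  · rintro ⟨_ | ⟨x, _ | ⟨y, _ | _⟩⟩, r, h, h₁, h₂⟩
    · simp_all
    · simp only [cons_append, nil_append, cons.injEq] at h
      obtain ⟨rfl, rfl⟩ := h
      exact Or.inr (Or.inr ⟨singleton_sublist.1 h₁, singleton_sublist.1 h₂⟩)
    · simp only [cons_append, nil_append, cons.injEq] at h
      obtain ⟨rfl, rfl, -, -⟩ := h
      exact Or.inl h₁
    · simp at h
  · rintro (h | h | ⟨h₁, h₂⟩)
    · exact ⟨[s, t], [], by simp, h, nil_sublist _⟩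
    · exact ⟨[], [s, t], rfl, nil_sublist _, h⟩
    · exact ⟨[s], [t], rfl, singleton_sublist.2 h₁, singleton_sublist.2 h₂⟩

theorem pair_sublist_cons_iff {s t x : α} {l : List α} :
    [s, t] <+ x :: l ↔ [s, t] <+ l ∨ s = x ∧ t ∈ l := by
  rw [show x :: l = [x] ++ l from rfl, pair_sublist_append_iff]
  have : ¬ [s, t] <+ [x] := fun h => by simpa using h.length_le
  simp [this]

theorem mem_of_pair_sublist_append_pair {s t c a : α} {Q : List α}
    (h : [s, t] <+ Q ++ [c, a]) (hs : s ≠ c) : s ∈ Q := by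
  rcases pair_sublist_append_iff.1 h with h | h | ⟨h, -⟩
  · exact h.subset (mem_cons_self ..)
  · exact absurd (cons.inj (h.eq_of_length rfl)).1 hs
  · exact h

theorem pair_sublist_filter_iff {f : α → Bool} {s t : α} {l : List α} :
    [s, t] <+ l.filter f ↔ f s ∧ f t ∧ [s, t] <+ l := by
  refine ⟨fun h => ⟨(mem_filter.1 (h.subset (by simp))).2,
    (mem_filter.1 (h.subset (by simp))).2, h.trans (filter_sublist)⟩, fun ⟨hs, ht, h⟩ => ?_⟩
  simpa [hs, ht] using h.filter f

def pairCon (α : Type*) : Con (FreeMonoid α) where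
  r u v := u.toList ~ v.toList ∧ ∀ s t, [s, t] <+ u.toList ↔ [s, t] <+ v.toList
  iseqv :=
    ⟨fun _ => ⟨Perm.refl _, fun _ _ => Iff.rfl⟩,
      fun h => ⟨h.1.symm, fun s t => (h.2 s t).symm⟩,
      fun h h' => ⟨h.1.trans h'.1, fun s t => (h.2 s t).trans (h'.2 s t)⟩⟩
  mul' := by
    rintro u v u' v' ⟨hp, hs⟩ ⟨hp', hs'⟩
    refine ⟨hp.append hp', fun s t => ?_⟩
    simp only [FreeMonoid.toList_mul, pair_sublist_append_iff, hs, hs', hp.mem_iff, hp'.mem_iff]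

end Pairs

/-- A congruence because the complement of `F` is an ideal. -/
def Con.separating {M : Type*} [Monoid M] (c : Con M) (F : Set M)
    (hF : ∀ a u b, a * u * b ∈ F → u ∈ F) : Con M where
  r u v := c u v ∧ (u = v ∨ u ∉ F ∧ v ∉ F)
  iseqv :=
    ⟨fun u => ⟨c.refl u, Or.inl rfl⟩,
      fun ⟨h, h'⟩ => ⟨c.symm h, h'.imp Eq.symm And.symm⟩,
      fun ⟨h₁, e₁⟩ ⟨h₂, e₂⟩ => ⟨c.trans h₁ h₂, by
        rcases e₁ with rfl | ⟨hu, hv⟩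
        · exact e₂
        rcases e₂ with rfl | ⟨-, hw⟩
        · exact Or.inr ⟨hu, hv⟩
        · exact Or.inr ⟨hu, hw⟩⟩⟩
  mul' := by
    have hl : ∀ x y, x * y ∈ F → x ∈ F := fun x y h => hF 1 x y (by simpa using h)
    have hr : ∀ x y, x * y ∈ F → y ∈ F := fun x y h => hF x y 1 (by simpa using h)
    rintro u v u' v' ⟨h, e⟩ ⟨h', e'⟩
    refine ⟨c.mul h h', ?_⟩
    rcases e with rfl | ⟨hu, hv⟩
    · rcases e' with rfl | ⟨hu', hv'⟩
      · exact Or.inl rfl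
      · exact Or.inr ⟨(hu' <| hr _ _ ·), (hv' <| hr _ _ ·)⟩
    · exact Or.inr ⟨(hu <| hl _ _ ·), (hv <| hl _ _ ·)⟩

theorem MSatisfies.comp {M X Y : Type*} [Monoid M] {u v : FreeMonoid X}
    (h : MSatisfies M u v) (σ : FreeMonoid X →* FreeMonoid Y) : MSatisfies M (σ u) (σ v) :=
  fun ψ => h (ψ.comp σ)

theorem mSatisfies_quotient {α X : Type*} {c : Con (FreeMonoid α)} {u v : FreeMonoid X}
    (h : ∀ σ : FreeMonoid X →* FreeMonoid α, c (σ u) (σ v)) : MSatisfies c.Quotient u v := by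
  intro ψ
  obtain ⟨σ, rfl⟩ : ∃ σ : FreeMonoid X →* FreeMonoid α, c.mk'.comp σ = ψ :=
    ⟨FreeMonoid.lift fun x => Function.surjInv c.mk'_surjective (ψ (of x)),
      FreeMonoid.hom_eq fun x => by simp [Function.surjInv_eq]⟩
  exact c.eq.2 (h σ)

def hypoLength : Hypo →* Multiplicative ℕ :=
  hypoCon.lift (FreeMonoid.lift fun _ => Multiplicative.ofAdd 1) <| Con.conGen_le.2 <| by
    rintro u v (⟨a, b, c, -, -, rfl, rfl⟩ | ⟨a, b, c, -, -, rfl, rfl⟩ |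
      ⟨a, b, c, d, -, -, -, rfl, rfl⟩ | ⟨a, b, c, d, -, -, -, rfl, rfl⟩) <;>
      simp [Con.ker_rel]

@[ext]
structure PairTrace where
  hasFst : Bool
  hasSnd : Bool
  hasPair : Bool

namespace PairTrace

instance : Mul PairTrace :=
  ⟨fun x y => ⟨x.hasFst || y.hasFst, x.hasSnd || y.hasSnd,
    x.hasPair || y.hasPair || (x.hasFst && y.hasSnd)⟩⟩

instance : One PairTrace := ⟨⟨false, false, false⟩⟩

@[simp]
theorem mul_def (x y : PairTrace) :
    x * y = ⟨x.hasFst || y.hasFst, x.hasSnd || y.hasSnd,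
      x.hasPair || y.hasPair || (x.hasFst && y.hasSnd)⟩ := rfl

@[simp]
theorem one_def : (1 : PairTrace) = ⟨false, false, false⟩ := rfl

instance : Monoid PairTrace where
  mul_assoc := by
    rintro ⟨a, b, c⟩ ⟨d, e, f⟩ ⟨g, h, i⟩
    simp only [mul_def, mk.injEq]
    revert a b c d e f g h i
    decide
  one_mul _ := by ext <;> simp
  mul_one _ := by ext <;> simp

end PairTrace

/-- Well defined because, on the letters `1` and `2`, the hypoplactic relations preserve which
letters occur and whether `21` is a subsequence. -/
def hypoPairTrace : Hypo →* PairTrace :=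
  hypoCon.lift (FreeMonoid.lift fun a =>
      if (a : ℕ) = 2 then ⟨true, false, false⟩ else if (a : ℕ) = 1 then ⟨false, true, false⟩
      else 1) <| Con.conGen_le.2 <| by
    rintro u v (⟨a, b, c, h₁, h₂, rfl, rfl⟩ | ⟨a, b, c, h₁, h₂, rfl, rfl⟩ |
      ⟨a, b, c, d, h₁, h₂, h₃, rfl, rfl⟩ | ⟨a, b, c, d, h₁, h₂, h₃, rfl, rfl⟩) <;>
    simp only [← PNat.coe_le_coe, ← PNat.coe_lt_coe] at * <;>
    simp only [Con.ker_rel, map_mul, FreeMonoid.lift_eval_of] <;>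
    split_ifs <;> first | rfl | omega

section Substitutions

variable {X : Type*} [DecidableEq X]

def hypoSubst (x : X) : FreeMonoid X →* Hypo :=
  FreeMonoid.lift fun y => if y = x then hypoCon.mk' (of 1) else 1

theorem hypoLength_comp_hypoSubst (x : X) :
    hypoLength.comp (hypoSubst x) = FreeMonoid.count x :=
  FreeMonoid.hom_eq fun y => by
    by_cases h : y = x
    · simp [h, hypoSubst, FreeMonoid.count_of]
      rfl
    · simp [h, hypoSubst, FreeMonoid.count_of]

def pairSubst (s t : X) : FreeMonoid X →* Hypo :=
  FreeMonoid.lift fun y =>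
    if y = s then hypoCon.mk' (of 2) else if y = t then hypoCon.mk' (of 1) else 1

theorem hypoPairTrace_pairSubst_of (s t x : X) :
    hypoPairTrace (pairSubst s t (of x)) =
      if x = s then ⟨true, false, false⟩ else if x = t then ⟨false, true, false⟩ else 1 := by
  simp only [pairSubst, FreeMonoid.lift_eval_of]
  split_ifs <;> rfl

theorem hypoPairTrace_pairSubst {s t : X} (hst : s ≠ t) (u : FreeMonoid X) :
    hypoPairTrace (pairSubst s t u) =
      ⟨decide (s ∈ u.toList), decide (t ∈ u.toList), decide ([s, t] <+ u.toList)⟩ := by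
  induction u using FreeMonoid.inductionOn' with
  | one => rfl
  | of_mul x u ih =>
    rw [map_mul, map_mul, ih, hypoPairTrace_pairSubst_of]
    split_ifs with hs ht
    · subst hs
      simpa [hst.symm, pair_sublist_cons_iff] using fun h : [x, t] <+ u.toList => h.subset (by simp)
    · subst ht
      simp [hst, pair_sublist_cons_iff]
    · simp [Ne.symm hs, Ne.symm ht, pair_sublist_cons_iff]

theorem pairCon_of_mSatisfies_hypo {u v : FreeMonoid X}
    (h : MSatisfies Hypo u v) : pairCon X u v := by
  have hcount : ∀ x, u.toList.count x = v.toList.count x := fun x => by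
    have := congrArg hypoLength (h (hypoSubst x))
    rw [← MonoidHom.comp_apply, ← MonoidHom.comp_apply, hypoLength_comp_hypoSubst] at this
    exact Multiplicative.ofAdd.injective this
  refine ⟨perm_iff_count.2 hcount, fun s t => ?_⟩
  rcases eq_or_ne s t with rfl | hst
  · change replicate 2 s <+ _ ↔ replicate 2 s <+ _
    rw [replicate_sublist_iff, replicate_sublist_iff, hcount]
  · simpa [hypoPairTrace_pairSubst hst]
      using congrArg (fun m => (hypoPairTrace m).hasPair) (h (pairSubst s t))

end Substitutions

section Blocks

variable {α β : Type*}

def List.infixes (l : List α) : List (List α) := l.tails.flatMap inits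

theorem List.mem_infixes {s l : List α} : s ∈ l.infixes ↔ s <:+: l := by
  simp only [infixes, mem_flatMap, mem_tails, mem_inits, infix_iff_prefix_suffix]
  exact ⟨fun ⟨t, ht, hs⟩ => ⟨t, hs, ht⟩, fun ⟨t, hs, ht⟩ => ⟨t, ht, hs⟩⟩

theorem eq_of_mem_flatMap_of_count_le_one [DecidableEq β] {w : α → List β} {p : List α}
    {x : β} {u v : α} (hx : (p.flatMap w).count x ≤ 1) (hu : u ∈ p) (hv : v ∈ p)
    (hxu : x ∈ w u) (hxv : x ∈ w v) : u = v := by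
  induction p with
  | nil => simp at hu
  | cons y p ih =>
    rw [flatMap_cons, count_append] at hx
    have hpos : ∀ z ∈ p, x ∈ w z → 0 < (p.flatMap w).count x :=
      fun z hz hxz => count_pos_iff.2 (mem_flatMap.2 ⟨z, hz, hxz⟩)
    rcases mem_cons.1 hu with rfl | hu' <;> rcases mem_cons.1 hv with rfl | hv'
    · rfl
    · have := count_pos_iff.2 hxu
      have := hpos v hv' hxv
      omega
    · have := count_pos_iff.2 hxv
      have := hpos u hu' hxu
      omega
    · exact ih (by omega) hu' hv'

theorem flatMap_filter_ne_nil [DecidableEq β] (w : α → List β) (p : List α) :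
    (p.filter fun v => w v ≠ []).flatMap w = p.flatMap w := by
  induction p with
  | nil => rfl
  | cons v p ih =>
    rw [filter_cons]
    split <;> simp_all

theorem exists_eq_concat_of_flatMap_eq {w : α → List β} {p : List α} {L : List β} {x : β}
    (hp : p.flatMap w = L ++ [x]) (hx : ∀ v ∈ p, w v <:+ L ++ [x] → w v = [x]) :
    ∃ P v, p = P ++ [v] ∧ w v = [x] ∧ P.flatMap w = L := by
  rcases eq_nil_or_concat p with rfl | ⟨P, v, rfl⟩
  · simp at hp
  rw [concat_eq_append, flatMap_append, flatMap_singleton] at hp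
  have hv : w v = [x] := hx v (by simp) ⟨_, hp⟩
  rw [hv] at hp
  exact ⟨P, v, by simp, hv, append_cancel_right hp⟩

theorem eq_of_perm_append_pair {p q P Q : List α} {a c a' c' : α} {X : α → Prop}
    (hp : p = P ++ [a, c]) (hq : q = Q ++ [c', a']) (hperm : p ~ q)
    (hpairs : ∀ s t, [s, t] <+ p ↔ [s, t] <+ q) (ha : X a) (ha' : X a') (hc : ¬ X c)
    (hc' : ¬ X c') (hQ : ∀ u ∈ Q, ∀ v ∈ Q, X u → X v → u = v) : a = a' := by
  subst hp hq
  have hne : ∀ {u v}, X u → ¬ X v → u ≠ v := fun hu hv h => hv (h ▸ hu)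
  have haQ : a ∈ Q := mem_of_pair_sublist_append_pair ((hpairs a c).1 (by simp)) (hne ha hc')
  by_contra h
  have ha'P : a' ∈ P := by
    have : a' ∈ P ++ [a, c] := hperm.symm.subset (by simp)
    simpa [Ne.symm h, hne ha' hc] using this
  have ha'Q : a' ∈ Q := mem_of_pair_sublist_append_pair
    ((hpairs a' c).1 (pair_sublist_append_iff.2 (Or.inr (Or.inr ⟨ha'P, by simp⟩))))
    (hne ha' hc')
  exact h (hQ a haQ a' ha'Q ha ha')

end Blocks

/-! The variables `x, y, z, t` are `0, 1, 2, 3`, so `[0, 2, 1, 3]` is `xzyt`. -/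

section Xzyt

theorem infix_xzyt_of_infix_wR :
    ∀ s ∈ ([0, 2, 1, 3, 0, 1] : List (Fin 4)).infixes, s <:+: [0, 2, 1, 3, 1, 0] →
      s <:+: [0, 2, 1, 3] := by
  decide

theorem eq_singleton_of_suffix_of_infix_xzyt :
    ∀ L ∈ ([[0, 2, 1, 3], [0, 2, 1, 3, 0], [0, 2, 1, 3, 1]] : List (List (Fin 4))),
      ∀ x ∈ ([0, 1] : List (Fin 4)), ∀ s ∈ (L ++ [x]).tails, s ≠ [] → s <:+: [0, 2, 1, 3] →
        s = [x] := by
  decide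

theorem length_eq_one_of_infix_xzyt :
    ∀ s ∈ ([0, 2, 1, 3] : List (Fin 4)).infixes, s ≠ [] → 0 ∉ s → 1 ∉ s → s.length = 1 := by
  decide

variable {w : Fin 4 → List (Fin 4)}

theorem exists_eq_append_pair {p : List (Fin 4)} {x y : Fin 4} (hx : x ∈ [0, 1])
    (hy : y ∈ [0, 1]) (hp : p.flatMap w = [0, 2, 1, 3, x, y])
    (hblocks : ∀ v ∈ p, w v ≠ [] ∧ w v <:+: [0, 2, 1, 3]) :
    ∃ P a c, p = P ++ [a, c] ∧ w a = [x] ∧ w c = [y] ∧ P.flatMap w = [0, 2, 1, 3] := by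
  have peel : ∀ L ∈ ([[0, 2, 1, 3], [0, 2, 1, 3, 0], [0, 2, 1, 3, 1]] : List (List (Fin 4))),
      ∀ z ∈ ([0, 1] : List (Fin 4)), ∀ v, w v ≠ [] ∧ w v <:+: [0, 2, 1, 3] →
        w v <:+ L ++ [z] → w v = [z] := fun L hL z hz v hv hs =>
    eq_singleton_of_suffix_of_infix_xzyt L hL z hz _ ((mem_tails _ _).2 hs) hv.1 hv.2
  obtain ⟨P', c, rfl, hc, hP'⟩ := exists_eq_concat_of_flatMap_eq (L := [0, 2, 1, 3, x]) hp
    fun v hv => peel _ (by simp at hx ⊢; omega) y hy v (hblocks v hv)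
  obtain ⟨P, a, rfl, ha, hP⟩ := exists_eq_concat_of_flatMap_eq (L := [0, 2, 1, 3]) hP'
    fun v hv => peel _ (by simp) x hx v (hblocks v (by simp [hv]))
  exact ⟨P, a, c, by simp, ha, hc, hP⟩

variable {p₁ p₂ : List (Fin 4)}

theorem exists_equiv_of_flatMap_eq_of_ne_nil (hperm : p₁ ~ p₂)
    (hpairs : ∀ s t, [s, t] <+ p₁ ↔ [s, t] <+ p₂) (h₁ : p₁.flatMap w = [0, 2, 1, 3, 0, 1])
    (h₂ : p₂.flatMap w = [0, 2, 1, 3, 1, 0]) (hne : ∀ v ∈ p₁, w v ≠ []) :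
    ∃ e : Fin 4 ≃ Fin 4, ∀ v, w v = [e v] := by
  have hblocks : ∀ v ∈ p₁, w v ≠ [] ∧ w v <:+: [0, 2, 1, 3] := fun v hv =>
    ⟨hne v hv, infix_xzyt_of_infix_wR _
      (mem_infixes.2 (h₁ ▸ infix_of_mem_flatten (mem_map_of_mem hv)))
      (h₂ ▸ infix_of_mem_flatten (mem_map_of_mem (hperm.subset hv)))⟩
  obtain ⟨P, a₁, c₁, rfl, ha₁, hc₁, hP⟩ := exists_eq_append_pair (by simp) (by simp) h₁ hblocks
  obtain ⟨Q, c₂, a₂, rfl, hc₂, ha₂, hQ⟩ := exists_eq_append_pair (by simp) (by simp) h₂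
    fun v hv => hblocks v (hperm.symm.subset hv)
  have huniq : ∀ {R : List (Fin 4)}, R.flatMap w = [0, 2, 1, 3] →
      ∀ x, ∀ u ∈ R, ∀ v ∈ R, x ∈ w u → x ∈ w v → u = v := fun hR x _ hu _ hv =>
    eq_of_mem_flatMap_of_count_le_one (by rw [hR]; fin_cases x <;> decide) hu hv
  obtain rfl : a₁ = a₂ := eq_of_perm_append_pair (X := fun v => w v = [0]) rfl rfl hperm hpairs
    ha₁ ha₂ (by simp [hc₁]) (by simp [hc₂])
    fun u hu v hv hu' hv' => huniq hQ 0 u hu v hv (by simp [hu']) (by simp [hv'])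
  obtain rfl : c₂ = c₁ := eq_of_perm_append_pair (X := fun v => w v = [1]) rfl rfl hperm.symm
    (fun s t => (hpairs s t).symm) hc₂ hc₁ (by simp [ha₁]) (by simp [ha₁])
    fun u hu v hv hu' hv' => huniq hP 1 u hu v hv (by simp [hu']) (by simp [hv'])
  have hac : a₁ ≠ c₂ := fun h => by simp [h, hc₂] at ha₁
  have haP : a₁ ∈ P := by
    have hPQ : P ~ Q :=
      (perm_append_right_iff _).1 (hperm.trans ((Perm.swap a₁ c₂ []).append_left Q))
    exact hPQ.symm.subset
      (mem_of_pair_sublist_append_pair ((hpairs _ _).1 (sublist_append_right _ _)) hac)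
  have hcP : c₂ ∈ P :=
    mem_of_pair_sublist_append_pair ((hpairs _ _).2 (sublist_append_right _ _)) hac.symm
  have hsingle : ∀ v ∈ P, (w v).length = 1 := by
    intro v hv
    by_cases h0 : 0 ∈ w v
    · rw [huniq hP 0 v hv a₁ haP h0 (by simp [ha₁]), ha₁]
      rfl
    by_cases h1 : 1 ∈ w v
    · rw [huniq hP 1 v hv c₂ hcP h1 (by simp [hc₂]), hc₂]
      rfl
    have hv' := hblocks v (by simp [hv])
    exact length_eq_one_of_infix_xzyt _ (mem_infixes.2 hv'.2) hv'.1 h0 h1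
  set g : Fin 4 → Fin 4 := fun v => (w v).headD 0
  have hg : ∀ v ∈ P, w v = [g v] := fun v hv => by
    obtain ⟨x, hx⟩ := length_eq_one_iff.1 (hsingle v hv)
    simp [g, hx]
  have hmem : ∀ y, y ∈ P.map g := fun y => by
    rw [map_eq_flatMap, ← flatMap_congr hg, hP]
    fin_cases y <;> simp
  have hsurj : Function.Surjective g := fun y => by
    obtain ⟨v, -, hv⟩ := List.mem_map.1 (hmem y)
    exact ⟨v, hv⟩
  have hinj : Function.Injective g := Finite.injective_iff_surjective.2 hsurj
  have hall : ∀ v, v ∈ P := fun v => by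
    obtain ⟨u, hu, huv⟩ := List.mem_map.1 (hmem (g v))
    exact hinj huv ▸ hu
  exact ⟨Equiv.ofBijective g ⟨hinj, hsurj⟩, fun v => hg v (hall v)⟩

theorem exists_equiv_of_flatMap_eq (hperm : p₁ ~ p₂)
    (hpairs : ∀ s t, [s, t] <+ p₁ ↔ [s, t] <+ p₂) (h₁ : p₁.flatMap w = [0, 2, 1, 3, 0, 1])
    (h₂ : p₂.flatMap w = [0, 2, 1, 3, 1, 0]) : ∃ e : Fin 4 ≃ Fin 4, ∀ v, w v = [e v] :=
  exists_equiv_of_flatMap_eq_of_ne_nil (hperm.filter _)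
    (fun s t => by simp only [pair_sublist_filter_iff, hpairs])
    (by rw [flatMap_filter_ne_nil, h₁]) (by rw [flatMap_filter_ne_nil, h₂])
    fun v hv => by simpa using (mem_filter.1 hv).2

end Xzyt

theorem FreeMonoid.toList_hom_apply {α β : Type*} (σ : FreeMonoid α →* FreeMonoid β)
    (u : FreeMonoid α) : (σ u).toList = u.toList.flatMap fun v => (σ (of v)).toList := by
  induction u using FreeMonoid.inductionOn' with
  | one => simp
  | of_mul x u ih => simp [ih]

theorem exists_equiv_eq_map_of_eq_wR {p₁ p₂ : FreeMonoid (Fin 4)} (hp : pairCon _ p₁ p₂)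
    {σ : FreeMonoid (Fin 4) →* FreeMonoid (Fin 4)} (h₁ : σ p₁ = wR1) (h₂ : σ p₂ = wR2) :
    ∃ e : Fin 4 ≃ Fin 4, σ = FreeMonoid.map e := by
  obtain ⟨e, he⟩ := exists_equiv_of_flatMap_eq hp.1 hp.2
    (by rw [← FreeMonoid.toList_hom_apply, h₁]; rfl)
    (by rw [← FreeMonoid.toList_hom_apply, h₂]; rfl)
  exact ⟨e, FreeMonoid.hom_eq fun v => FreeMonoid.toList.injective (by simpa using he v)⟩

theorem toList_wR1 : wR1.toList = [0, 2, 1, 3, 0, 1] := rfl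

theorem toList_wR2 : wR2.toList = [0, 2, 1, 3, 1, 0] := rfl

def rFactors : Set (FreeMonoid (Fin 4)) :=
  {u | u.toList <:+: wR1.toList ∨ u.toList <:+: wR2.toList}

theorem mem_rFactors_of_mul {a u b : FreeMonoid (Fin 4)} (h : a * u * b ∈ rFactors) :
    u ∈ rFactors := by
  have hu : u.toList <:+: (a * u * b).toList := by simp
  exact Or.imp hu.trans hu.trans h

theorem eq_of_perm_of_pairs_of_infix_wR :
    ∀ u ∈ ([0, 2, 1, 3, 0, 1] : List (Fin 4)).infixes ++
        ([0, 2, 1, 3, 1, 0] : List (Fin 4)).infixes,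
      ∀ v ∈ u.permutations', (∀ s t : Fin 4, [s, t] <+ u ↔ [s, t] <+ v) →
        v = u ∨ u = [0, 2, 1, 3, 0, 1] ∧ v = [0, 2, 1, 3, 1, 0] ∨
          u = [0, 2, 1, 3, 1, 0] ∧ v = [0, 2, 1, 3, 0, 1] := by
  decide +kernel

theorem eq_of_pairCon_of_mem_rFactors {u v : FreeMonoid (Fin 4)} (hu : u ∈ rFactors)
    (h : pairCon _ u v) : v = u ∨ u = wR1 ∧ v = wR2 ∨ u = wR2 ∧ v = wR1 := by
  have := eq_of_perm_of_pairs_of_infix_wR u.toList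
    (mem_append.2 (hu.imp mem_infixes.2 mem_infixes.2)) v.toList (mem_permutations'.2 h.1.symm) h.2
  simpa only [← toList_wR1, ← toList_wR2, FreeMonoid.toList.injective.eq_iff] using this

def rCon : Con (FreeMonoid (Fin 4)) :=
  (pairCon (Fin 4)).separating rFactors fun _ _ _ => mem_rFactors_of_mul

theorem rCon_of_not_equivIdent {p₁ p₂ : FreeMonoid (Fin 4)} (hp : pairCon _ p₁ p₂)
    (hR : ¬ EquivIdent (p₁, p₂) (wR1, wR2)) (σ : FreeMonoid (Fin 4) →* FreeMonoid (Fin 4))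
    (hσ : pairCon _ (σ p₁) (σ p₂)) : rCon (σ p₁) (σ p₂) := by
  have hnot : ¬ (σ p₁ = wR1 ∧ σ p₂ = wR2 ∨ σ p₁ = wR2 ∧ σ p₂ = wR1) := by
    rintro (⟨h₁, h₂⟩ | ⟨h₁, h₂⟩)
    · obtain ⟨e, rfl⟩ := exists_equiv_eq_map_of_eq_wR hp h₁ h₂
      exact hR ⟨e, Or.inl ⟨h₁, h₂⟩⟩
    · obtain ⟨e, rfl⟩ := exists_equiv_eq_map_of_eq_wR ((pairCon _).symm hp) h₂ h₁
      exact hR ⟨e, Or.inr ⟨h₁, h₂⟩⟩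
  refine ⟨hσ, ?_⟩
  by_cases h₁ : σ p₁ ∈ rFactors
  · rcases eq_of_pairCon_of_mem_rFactors h₁ hσ with h | h | h
    · exact Or.inl h.symm
    all_goals exact absurd (by tauto) hnot
  by_cases h₂ : σ p₂ ∈ rFactors
  · rcases eq_of_pairCon_of_mem_rFactors h₂ ((pairCon _).symm hσ) with h | h | h
    · exact Or.inl h
    all_goals exact absurd (by tauto) hnot
  exact Or.inr ⟨h₁, h₂⟩

/-- The identity (R) `xzytxy ≈ xzytyx` is not a consequence of the set `S` of all
nontrivial identities in at most four variables satisfied by `hypo`, excluding (R)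
itself and identities equivalent to it: there is a monoid satisfying every identity
in `S` but not satisfying (R). -/
theorem idR_not_consequence :
    ∃ (M : Type) (instM : Monoid M),
      (∀ p : FreeMonoid (Fin 4) × FreeMonoid (Fin 4),
        p.1 ≠ p.2 → MSatisfies Hypo p.1 p.2 → ¬ EquivIdent p (wR1, wR2) →
          @MSatisfies M instM _ p.1 p.2) ∧
      ¬ @MSatisfies M instM _ wR1 wR2 := by
  refine ⟨rCon.Quotient, inferInstance, fun p _ hsat hR => mSatisfies_quotient fun σ =>
    rCon_of_not_equivIdent (pairCon_of_mSatisfies_hypo hsat) hR σ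
      (pairCon_of_mSatisfies_hypo (hsat.comp σ)), fun h => ?_⟩
  obtain ⟨-, h | ⟨h, -⟩⟩ := rCon.eq.1 (h rCon.mk')
  · exact absurd (congrArg FreeMonoid.toList h) (by decide)
  · exact h (Or.inl (infix_refl _))
end

section
/- None of the three identities (L) xyzxty ≈ yxzxty, (M) xzxytx ≈ xzyxtx, (R) xzytxy ≈ xzytyx is a consequence of the other two: there exists a finite monoid satisfying (L) and (M) but not (R), a finite monoid satisfying (R) and (M) but not (L), and a finite monoid (of order 5) satisfying (L) and (R) but not (M). Hence the basis {(L), (M), (R)} of the variety generated by the hypoplactic monoid is minimal, in the sense that no proper subset of it is a basis. -/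
/-!
In a monoid satisfying `x y x = y x`, such as a right-zero band with an identity adjoined, an
occurrence of a letter may be deleted whenever the letter occurs again later; this reduces both
sides of (L), and both sides of (M), to a common word. Setting `z = t = 1` turns (R) into
`x y x y ≈ x y y x`, which there means `x y = y x`, so (R) fails as soon as two elements do not
commute. Since (L) and (R) are mirror images of each other and (M) is its own mirror image, the
opposite monoid separates (L) from (R) and (M).
-/

open FreeMonoid

section Identities

variable {M : Type*} [Monoid M]

theorem msatisfies_L_iff :
    MSatisfies M wL1 wL2 ↔ ∀ x y z t : M, x * y * z * x * t * y = y * x * z * x * t * y := by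
  refine ⟨fun h x y z t => ?_, fun h ψ => ?_⟩
  · simpa [wL1, wL2] using h (lift ![x, y, z, t])
  · simp only [wL1, wL2, map_mul]
    exact h _ _ _ _

theorem msatisfies_M_iff :
    MSatisfies M wM1 wM2 ↔ ∀ x y z t : M, x * z * x * y * t * x = x * z * y * x * t * x := by
  refine ⟨fun h x y z t => ?_, fun h ψ => ?_⟩
  · simpa [wM1, wM2] using h (lift ![x, y, z, t])
  · simp only [wM1, wM2, map_mul]
    exact h _ _ _ _

theorem msatisfies_R_iff :
    MSatisfies M wR1 wR2 ↔ ∀ x y z t : M, x * z * y * t * x * y = x * z * y * t * y * x := by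
  refine ⟨fun h x y z t => ?_, fun h ψ => ?_⟩
  · simpa [wR1, wR2] using h (lift ![x, y, z, t])
  · simp only [wR1, wR2, map_mul]
    exact h _ _ _ _

end Identities

section RightRegular

variable {M : Type*} [Monoid M]

theorem msatisfies_L_of_forall_mul_mul_eq (h : ∀ a b : M, a * b * a = b * a) :
    MSatisfies M wL1 wL2 := by
  refine msatisfies_L_iff.2 fun x y z t => ?_
  calc x * y * z * x * t * y = x * (y * z) * x * t * y := by simp only [mul_assoc]
    _ = y * (x * z * x) * t * y := by rw [h x (y * z), h x z, mul_assoc y]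
    _ = y * x * z * x * t * y := by simp only [mul_assoc]

theorem msatisfies_M_of_forall_mul_mul_eq (h : ∀ a b : M, a * b * a = b * a) :
    MSatisfies M wM1 wM2 := by
  refine msatisfies_M_iff.2 fun x y z t => ?_
  calc x * z * x * y * t * x = x * (z * x * y * t) * x := by simp only [mul_assoc]
    _ = z * (x * (y * t) * x) := by rw [h x (z * x * y * t)]; simp only [mul_assoc]
    _ = z * y * (x * t * x) := by rw [h x (y * t), h x t]; simp only [mul_assoc]
    _ = x * (z * y * x * t) * x := by rw [h x (z * y * x * t)]; simp only [mul_assoc]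
    _ = x * z * y * x * t * x := by simp only [mul_assoc]

theorem not_msatisfies_R_of_forall_mul_mul_eq (h : ∀ a b : M, a * b * a = b * a) {a b : M}
    (hab : a * b ≠ b * a) : ¬ MSatisfies M wR1 wR2 := by
  intro hR
  have habab : a * b * a * b = a * b * b * a := by simpa using msatisfies_R_iff.1 hR a b 1 1
  have hbb : b * b = b := by simpa using h b 1
  apply hab
  calc a * b = a * b * a * b := by rw [h a b, h b a]
    _ = a * b * b * a := habab
    _ = b * a := by rw [mul_assoc a b b, hbb, h]

end RightRegular

section Duality

variable {M : Type*} [Monoid M]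

open MulOpposite

-- Reversing (L) and renaming `x ↔ y`, `z ↔ t` gives (R).
theorem msatisfies_R_mulOpposite_iff : MSatisfies Mᵐᵒᵖ wR1 wR2 ↔ MSatisfies M wL1 wL2 := by
  rw [msatisfies_R_iff, msatisfies_L_iff]
  refine ⟨fun h x y z t => ?_, fun h x y z t => unop_injective ?_⟩
  · simpa only [← op_mul, op_inj, mul_assoc] using h (op y) (op x) (op t) (op z)
  · simpa only [unop_mul, mul_assoc] using h (unop y) (unop x) (unop t) (unop z)

theorem msatisfies_L_mulOpposite_iff : MSatisfies Mᵐᵒᵖ wL1 wL2 ↔ MSatisfies M wR1 wR2 := by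
  rw [msatisfies_R_iff, msatisfies_L_iff]
  refine ⟨fun h x y z t => ?_, fun h x y z t => unop_injective ?_⟩
  · simpa only [← op_mul, op_inj, mul_assoc] using h (op y) (op x) (op t) (op z)
  · simpa only [unop_mul, mul_assoc] using h (unop y) (unop x) (unop t) (unop z)

theorem msatisfies_M_mulOpposite_iff : MSatisfies Mᵐᵒᵖ wM1 wM2 ↔ MSatisfies M wM1 wM2 := by
  rw [msatisfies_M_iff, msatisfies_M_iff]
  refine ⟨fun h x y z t => ?_, fun h x y z t => unop_injective ?_⟩
  · simpa only [← op_mul, op_inj, mul_assoc] using (h (op x) (op y) (op t) (op z)).symm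
  · simpa only [unop_mul, mul_assoc] using (h (unop x) (unop y) (unop t) (unop z)).symm

end Duality

def RightZero (α : Type*) : Type _ := α

instance (α : Type*) : Semigroup (RightZero α) where
  mul _ y := y
  mul_assoc _ _ _ := rfl

theorem WithOne.rightZero_mul_coe {α : Type*} (c : WithOne (RightZero α)) (x : RightZero α) :
    c * x = x := by
  induction c using WithOne.recOneCoe with
  | one => exact one_mul _
  | coe y => rfl

theorem WithOne.rightZero_mul_mul_eq {α : Type*} (a b : WithOne (RightZero α)) :
    a * b * a = b * a := by
  induction a using WithOne.recOneCoe with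
  | one => simp
  | coe x => rw [mul_assoc, rightZero_mul_coe, rightZero_mul_coe]

/-- `{1, g}` is a group of order two and `{a, ag, 0}` an ideal with zero multiplication, on which
`g` acts trivially from the left and by swapping `a` and `ag` from the right. A product with
exactly one letter in the ideal is therefore determined by that letter and the parity of the `g`s
after it: (L) and (R) preserve this data for every letter occurring once, while (M) moves `y`
across an `x`. -/
inductive MSep where
  | one | g | a | ag | zero
  deriving DecidableEq

instance : Fintype MSep := ⟨{.one, .g, .a, .ag, .zero}, fun x => by cases x <;> decide⟩

instance : Monoid MSep where
  mul
    | .one, x | x, .one => x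
    | .zero, _ | _, .zero => .zero
    | .g, .g => .one
    | .g, x => x
    | .a, .g => .ag
    | .ag, .g => .a
    | _, _ => .zero
  one := .one
  mul_assoc := by decide
  one_mul := by decide
  mul_one := by decide

theorem MSep.msatisfies_L : MSatisfies MSep wL1 wL2 := msatisfies_L_iff.2 (by decide)

theorem MSep.msatisfies_R : MSatisfies MSep wR1 wR2 := msatisfies_R_iff.2 (by decide)

theorem MSep.not_msatisfies_M : ¬ MSatisfies MSep wM1 wM2 :=
  fun h => absurd (msatisfies_M_iff.1 h .g .a 1 1) (by decide)

/-- None of the identities (L) `xyzxty ≈ yxzxty`, (M) `xzxytx ≈ xzyxtx`,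
(R) `xzytxy ≈ xzytyx` is a consequence of the other two: there is a finite monoid
satisfying (L) and (M) but not (R); a finite monoid satisfying (R) and (M) but not
(L); and a monoid of order `5` satisfying (L) and (R) but not (M). Hence the basis
`{(L), (M), (R)}` of the variety generated by the hypoplactic monoid is minimal. -/
theorem basis_LMR_minimal :
    (∃ (M : Type) (instM : Monoid M), Finite M ∧
        @MSatisfies M instM _ wL1 wL2 ∧ @MSatisfies M instM _ wM1 wM2 ∧
        ¬ @MSatisfies M instM _ wR1 wR2) ∧
    (∃ (M : Type) (instM : Monoid M), Finite M ∧
        @MSatisfies M instM _ wR1 wR2 ∧ @MSatisfies M instM _ wM1 wM2 ∧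
        ¬ @MSatisfies M instM _ wL1 wL2) ∧
    (∃ (M : Type) (instM : Monoid M), Nat.card M = 5 ∧
        @MSatisfies M instM _ wL1 wL2 ∧ @MSatisfies M instM _ wR1 wR2 ∧
        ¬ @MSatisfies M instM _ wM1 wM2) := by
  let B := WithOne (RightZero Bool)
  have hfin : Finite B := inferInstanceAs (Finite (Option Bool))
  let x : RightZero Bool := true
  let y : RightZero Bool := false
  have hcomm : (x : B) * y ≠ y * x := by
    rw [WithOne.rightZero_mul_coe, WithOne.rightZero_mul_coe, Ne, WithOne.coe_inj]
    exact Bool.false_ne_true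
  have hL : MSatisfies B wL1 wL2 := msatisfies_L_of_forall_mul_mul_eq WithOne.rightZero_mul_mul_eq
  have hM : MSatisfies B wM1 wM2 := msatisfies_M_of_forall_mul_mul_eq WithOne.rightZero_mul_mul_eq
  have hR : ¬ MSatisfies B wR1 wR2 :=
    not_msatisfies_R_of_forall_mul_mul_eq WithOne.rightZero_mul_mul_eq hcomm
  refine ⟨⟨B, inferInstance, hfin, hL, hM, hR⟩,
    ⟨Bᵐᵒᵖ, inferInstance, .of_equiv B MulOpposite.opEquiv, msatisfies_R_mulOpposite_iff.2 hL,
      msatisfies_M_mulOpposite_iff.2 hM, mt msatisfies_L_mulOpposite_iff.1 hR⟩,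
    ⟨MSep, inferInstance, ?_, MSep.msatisfies_L, MSep.msatisfies_R, MSep.not_msatisfies_M⟩⟩
  rw [Nat.card_eq_fintype_card]
  rfl
end
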